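/- arXiv:2510.06729 — 11 statements merged into one kernel-verified Lean document; each statement's English description precedes it below -/
import Mathlib

section
/- Let $\Delta$ be a pure $d$-dimensional simplicial complex on vertex set $[n]$ and suppose the set $\mathcal{B} = \{\det(i_1,\dots,i_{d+1}) : \{i_1 < \dots < i_{d+1}\} \in \mathcal{F}(\Delta)\}$ of maximal minors of the generic $(d+1)\times n$ matrix forms a Gröbner basis for the determinantal facet ideal $J_\Delta$ with respect to the lexicographic order induced by $x_{1,1} > \dots > x_{1,n} > x_{2,1} > \dots > x_{d+1,n}$. Then $\Delta$ is a poor closed simplicial complex: for every two distinct facets $F: i_1 \dots i_{d+1}$ and $G: j_1 \dots j_{d+1}$ (vertices listed increasingly) with $i_k = j_k$ for some $k$, there exists a facet contained in $F \cup G$ other than $F$ and $G$. -/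
/-- Monomials (exponent vectors) in the variables `x_{i,j}`, `i ∈ Fin (d+1)`, `j ∈ Fin n`. -/
abbrev GenMon (d n : ℕ) := (Fin (d + 1) × Fin n) →₀ ℕ

/-- The lexicographic order on monomials induced by the variable order
`x_{1,1} > … > x_{1,n} > x_{2,1} > … > x_{d+1,n}` (a variable with lexicographically
smaller index pair is the larger variable): `m ≺ m'` iff at the largest variable where
they differ, `m'` has the bigger exponent. -/
def monLt {d n : ℕ} (m m' : GenMon d n) : Prop :=
  ∃ v : Fin (d + 1) × Fin n, m v < m' v ∧
    ∀ w : Fin (d + 1) × Fin n, toLex w < toLex v → m w = m' w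

/-- `m` is the leading (initial) monomial of `p` with respect to `monLt`. -/
def IsLeadMon {K : Type*} [Field K] {d n : ℕ}
    (p : MvPolynomial (Fin (d + 1) × Fin n) K) (m : GenMon d n) : Prop :=
  m ∈ p.support ∧ ∀ m' ∈ p.support, m' ≠ m → monLt m' m

/-- `B` is a Gröbner basis of `I` w.r.t. the lexicographic order above: `B ⊆ I` and the
leading monomial of every nonzero element of `I` is divisible by the leading monomial of
some element of `B`. -/
def IsGroebner {K : Type*} [Field K] {d n : ℕ}
    (B : Set (MvPolynomial (Fin (d + 1) × Fin n) K))
    (I : Ideal (MvPolynomial (Fin (d + 1) × Fin n) K)) : Prop :=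
  (∀ g ∈ B, g ∈ I) ∧
    ∀ p ∈ I, p ≠ 0 → ∃ g ∈ B, g ≠ 0 ∧
      ∀ mp mg : GenMon d n, IsLeadMon p mp → IsLeadMon g mg → mg ≤ mp

/-- `B` is a reduced Gröbner basis of `I`: a Gröbner basis whose elements are monic and
such that no monomial of an element of `B` is divisible by the leading monomial of
another element of `B`. -/
def IsReducedGroebner {K : Type*} [Field K] {d n : ℕ}
    (B : Set (MvPolynomial (Fin (d + 1) × Fin n) K))
    (I : Ideal (MvPolynomial (Fin (d + 1) × Fin n) K)) : Prop :=
  IsGroebner B I ∧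
    ∀ g ∈ B, (∀ m, IsLeadMon g m → g.coeff m = 1) ∧
      ∀ g' ∈ B, g' ≠ g → ∀ m ∈ g.support, ∀ m', IsLeadMon g' m' → ¬ m' ≤ m

/-- The maximal minor of the generic `(d+1) × n` matrix `X = (x_{i,j})` on the columns
given by a `(d+1)`-subset `s` of `Fin n` (columns taken in increasing order). -/
noncomputable def genMinor (K : Type*) [Field K] (d n : ℕ)
    (s : Finset (Fin n)) (h : s.card = d + 1) :
    MvPolynomial (Fin (d + 1) × Fin n) K :=
  Matrix.det (Matrix.of fun a b : Fin (d + 1) => MvPolynomial.X (a, s.orderEmbOfFin h b))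

open Finset MvPolynomial Matrix

section AuxProof

variable {K : Type*} [Field K] {d n m : ℕ}


variable {d n : ℕ}

lemma monLt_total {m m' : GenMon d n} (h : m ≠ m') : monLt m m' ∨ monLt m' m := by
  classical
  set D : Finset (Fin (d+1) × Fin n) :=
    (m.support ∪ m'.support).filter (fun v => m v ≠ m' v) with hD
  have hDne : D.Nonempty := by
    obtain ⟨v, hv⟩ : ∃ v, m v ≠ m' v := by
      by_contra hc
      push_neg at hc
      exact h (Finsupp.ext hc)
    refine ⟨v, mem_filter.mpr ⟨?_, hv⟩⟩
    rcases Nat.eq_zero_or_pos (m v) with h0 | hpos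
    · exact mem_union_right _ (Finsupp.mem_support_iff.mpr (by omega))
    · exact mem_union_left _ (Finsupp.mem_support_iff.mpr (by omega))
  set D' : Finset (Lex (Fin (d+1) × Fin n)) := D.image toLex with hD'
  have hD'ne : D'.Nonempty := hDne.image _
  set v0 : Fin (d+1) × Fin n := ofLex (D'.min' hD'ne) with hv0
  have hv0D : v0 ∈ D := by
    have hmem := D'.min'_mem hD'ne
    rcases mem_image.mp hmem with ⟨w, hw, hweq⟩
    have hwv : w = v0 := by rw [hv0, ← hweq]; rfl
    rwa [← hwv]
  have hneq : m v0 ≠ m' v0 := (mem_filter.mp hv0D).2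
  have hpre : ∀ w, toLex w < toLex v0 → m w = m' w := by
    intro w hw
    by_contra hc
    have hwD : w ∈ D := by
      refine mem_filter.mpr ⟨?_, hc⟩
      rcases Nat.eq_zero_or_pos (m w) with h0 | hpos
      · exact mem_union_right _ (Finsupp.mem_support_iff.mpr (by omega))
      · exact mem_union_left _ (Finsupp.mem_support_iff.mpr (by omega))
    have : D'.min' hD'ne ≤ toLex w := D'.min'_le _ (mem_image_of_mem _ hwD)
    have : toLex v0 ≤ toLex w := by rwa [hv0]
    exact absurd hw (not_lt.mpr this)
  rcases lt_or_gt_of_ne hneq with hlt | hgt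
  · exact Or.inl ⟨v0, hlt, hpre⟩
  · exact Or.inr ⟨v0, hgt, fun w hw => (hpre w hw).symm⟩

lemma monLt_trans {a b c : GenMon d n} (h1 : monLt a b) (h2 : monLt b c) : monLt a c := by
  obtain ⟨v1, hv1, he1⟩ := h1
  obtain ⟨v2, hv2, he2⟩ := h2
  rcases lt_trichotomy (toLex v1) (toLex v2) with h | h | h
  · exact ⟨v1, by rw [← he2 v1 h]; exact hv1, fun w hw => (he1 w hw).trans (he2 w (hw.trans h))⟩
  · have : v1 = v2 := toLex.injective (by exact h)
    subst this
    exact ⟨v1, hv1.trans hv2, fun w hw => (he1 w hw).trans (he2 w hw)⟩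
  · exact ⟨v2, by rw [he1 v2 h]; exact hv2, fun w hw => (he1 w (hw.trans h)).trans (he2 w hw)⟩

lemma exists_monLt_max (S : Finset (GenMon d n)) (hS : S.Nonempty) :
    ∃ m ∈ S, ∀ m' ∈ S, m' ≠ m → monLt m' m := by
  classical
  induction S using Finset.induction_on with
  | empty => exact absurd hS (by simp)
  | @insert a S ha ih =>
    rcases S.eq_empty_or_nonempty with rfl | hne
    · exact ⟨a, mem_insert_self _ _, by simp⟩
    · obtain ⟨m, hmS, hmax⟩ := ih hne
      by_cases ham : a = m
      · subst ham; exact absurd hmS ha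
      rcases monLt_total ham with hlt | hgt
      · refine ⟨m, mem_insert_of_mem hmS, ?_⟩
        intro m' hm' hne'
        rcases mem_insert.mp hm' with rfl | hm'S
        · exact hlt
        · exact hmax m' hm'S hne'
      · refine ⟨a, mem_insert_self _ _, ?_⟩
        intro m' hm' hne'
        rcases mem_insert.mp hm' with rfl | hm'S
        · exact absurd rfl hne'
        · by_cases hm'm : m' = m
          · subst hm'm; exact hgt
          · exact monLt_trans (hmax m' hm'S hm'm) hgt

lemma exists_isLeadMon {K : Type*} [Field K] {p : MvPolynomial (Fin (d + 1) × Fin n) K}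
    (hp : p ≠ 0) : ∃ m, IsLeadMon p m := by
  obtain ⟨m, hm, hmax⟩ := exists_monLt_max p.support
    (Finset.nonempty_iff_ne_empty.mpr (mt MvPolynomial.support_eq_empty.mp hp))
  exact ⟨m, hm, hmax⟩



/-- product of variables as a single monomial -/
lemma prod_X_eq_monomial {β : Type*} (S : Finset β) (v : β → (Fin (d+1) × Fin n)) :
    (∏ b ∈ S, (X (v b) : MvPolynomial (Fin (d+1) × Fin n) K)) =
      monomial (∑ b ∈ S, Finsupp.single (v b) 1) 1 := by
  classical
  induction S using Finset.induction_on with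
  | empty => simp [monomial_zero']
  | @insert a S ha ih =>
    rw [Finset.prod_insert ha, Finset.sum_insert ha, ih, X,
      monomial_mul, one_mul]

/-- the monomial associated to a permutation in the determinant expansion -/
noncomputable def monOf (r : Fin m → Fin (d+1)) (c : Fin m → Fin n)
    (σ : Equiv.Perm (Fin m)) : GenMon d n :=
  ∑ b : Fin m, Finsupp.single (r (σ b), c b) 1

lemma monOf_apply (r : Fin m → Fin (d+1)) (c : Fin m → Fin n) (σ : Equiv.Perm (Fin m))
    (v : Fin (d+1) × Fin n) :
    monOf r c σ v = (univ.filter (fun b : Fin m => (r (σ b), c b) = v)).card := by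
  classical
  rw [monOf, Finsupp.finset_sum_apply]
  rw [Finset.card_filter]
  congr 1
  ext b
  rw [Finsupp.single_apply]

lemma det_XMat (r : Fin m → Fin (d+1)) (c : Fin m → Fin n) :
    (Matrix.of fun a b : Fin m => (X (r a, c b) : MvPolynomial (Fin (d+1) × Fin n) K)).det =
      ∑ σ : Equiv.Perm (Fin m), monomial (monOf r c σ) (((Equiv.Perm.sign σ : ℤ) : K)) := by
  classical
  rw [Matrix.det_apply]
  refine Finset.sum_congr rfl (fun σ _ => ?_)
  have h1 : (∏ b : Fin m,
      (Matrix.of fun a b : Fin m => (X (r a, c b) : MvPolynomial (Fin (d+1) × Fin n) K)) (σ b) b)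
      = monomial (monOf r c σ) 1 := by
    rw [monOf]
    exact prod_X_eq_monomial univ (fun b => (r (σ b), c b))
  rw [h1, Units.smul_def, smul_monomial, zsmul_eq_mul, mul_one]

lemma coeff_det_XMat (r : Fin m → Fin (d+1)) (c : Fin m → Fin n) (μ : GenMon d n) :
    coeff μ (Matrix.of fun a b : Fin m =>
        (X (r a, c b) : MvPolynomial (Fin (d+1) × Fin n) K)).det =
      ∑ σ : Equiv.Perm (Fin m), if monOf r c σ = μ then ((Equiv.Perm.sign σ : ℤ) : K) else 0 := by
  classical
  rw [det_XMat]
  rw [MvPolynomial.coeff_sum]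
  exact Finset.sum_congr rfl (fun σ _ => coeff_monomial μ _ _)

lemma monOf_injective (r : Fin m → Fin (d+1)) (c : Fin m → Fin n)
    (hr : Function.Injective r) (hc : Function.Injective c) :
    Function.Injective (monOf r c) := by
  classical
  intro σ σ' hσ
  ext b
  have h1 : monOf r c σ (r (σ b), c b) ≠ 0 := by
    rw [monOf_apply]
    have : b ∈ univ.filter (fun b' : Fin m => (r (σ b'), c b') = (r (σ b), c b)) :=
      mem_filter.mpr ⟨mem_univ _, rfl⟩
    have := Finset.card_pos.mpr ⟨b, this⟩
    omega
  rw [hσ, monOf_apply] at h1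
  obtain ⟨b', hb'⟩ := Finset.card_pos.mp (Nat.pos_of_ne_zero h1)
  have hb'2 := (mem_filter.mp hb').2
  have hcb : c b' = c b := congrArg Prod.snd hb'2
  have hbb : b' = b := hc hcb
  subst hbb
  exact congrArg Fin.val (hr (congrArg Prod.fst hb'2)).symm

lemma coeff_det_XMat_monOf (r : Fin m → Fin (d+1)) (c : Fin m → Fin n)
    (hr : Function.Injective r) (hc : Function.Injective c) (σ0 : Equiv.Perm (Fin m)) :
    coeff (monOf r c σ0) (Matrix.of fun a b : Fin m =>
        (X (r a, c b) : MvPolynomial (Fin (d+1) × Fin n) K)).det =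
      ((Equiv.Perm.sign σ0 : ℤ) : K) := by
  classical
  rw [coeff_det_XMat]
  rw [Finset.sum_eq_single σ0]
  · simp
  · intro σ _ hne
    rw [if_neg (fun hmon => hne (monOf_injective r c hr hc hmon))]
  · intro h; exact absurd (mem_univ _) h

lemma support_det_XMat (r : Fin m → Fin (d+1)) (c : Fin m → Fin n) (μ : GenMon d n)
    (hμ : μ ∈ (Matrix.of fun a b : Fin m =>
        (X (r a, c b) : MvPolynomial (Fin (d+1) × Fin n) K)).det.support) :
    ∃ σ : Equiv.Perm (Fin m), μ = monOf r c σ := by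
  classical
  by_contra hc'
  push_neg at hc'
  have : coeff μ (Matrix.of fun a b : Fin m =>
      (X (r a, c b) : MvPolynomial (Fin (d+1) × Fin n) K)).det = 0 := by
    rw [coeff_det_XMat]
    refine Finset.sum_eq_zero (fun σ _ => ?_)
    rw [if_neg (fun h => hc' σ h.symm)]
  exact (MvPolynomial.mem_support_iff.mp hμ) this

/-- key order lemma: the diagonal beats every non-identity permutation monomial -/
lemma monLt_monOf_diag (r : Fin m → Fin (d+1)) (c : Fin m → Fin n)
    (hrmono : StrictMono r) (hcmono : StrictMono c)
    (σ : Equiv.Perm (Fin m)) (hσ : σ ≠ 1) :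
    monLt (monOf r c σ) (monOf r c 1) := by
  classical
  set Sne : Finset (Fin m) := univ.filter (fun b => σ b ≠ b) with hSne
  have hne : Sne.Nonempty := by
    by_contra hc'
    rw [Finset.not_nonempty_iff_eq_empty, Finset.filter_eq_empty_iff] at hc'
    push_neg at hc'
    exact hσ (Equiv.ext (fun b => hc' (mem_univ b)))
  set b0 : Fin m := Sne.min' hne with hb0def
  have hb0 : σ b0 ≠ b0 := (mem_filter.mp (Sne.min'_mem hne)).2
  have hminfix : ∀ b : Fin m, b < b0 → σ b = b := by
    intro b hb
    by_contra hc'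
    have : b0 ≤ b := Sne.min'_le b (mem_filter.mpr ⟨mem_univ _, hc'⟩)
    exact absurd hb (not_lt.mpr this)
  refine ⟨(r b0, c b0), ?_, ?_⟩
  · have h0 : monOf r c σ (r b0, c b0) = 0 := by
      rw [monOf_apply, Finset.card_eq_zero, Finset.filter_eq_empty_iff]
      intro b _
      intro hcon
      have hcb : c b = c b0 := congrArg Prod.snd hcon
      have hbb : b = b0 := hcmono.injective hcb
      subst hbb
      exact hb0 (hrmono.injective (congrArg Prod.fst hcon))
    have h1 : monOf r c 1 (r b0, c b0) = 1 := by
      rw [monOf_apply]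
      have : univ.filter (fun b : Fin m => (r ((1 : Equiv.Perm (Fin m)) b), c b) = (r b0, c b0))
          = {b0} := by
        ext b
        simp only [mem_filter, mem_univ, true_and, mem_singleton, Equiv.Perm.one_apply]
        constructor
        · intro hcon
          exact hcmono.injective (by simpa using hcon : r b = r b0 ∧ c b = c b0).2
        · rintro rfl; simp
      rw [this, Finset.card_singleton]
    omega
  · rintro ⟨a, col⟩ hw
    rw [Prod.Lex.lt_iff] at hw
    rcases hw with hlt | ⟨heq, hcol⟩
    · -- a < r b0
      rw [monOf_apply, monOf_apply]
      congr 1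
      apply Finset.filter_congr
      intro b _
      simp only [Equiv.Perm.one_apply]
      constructor
      · intro hcon
        have hrb : r (σ b) = a := congrArg Prod.fst hcon
        -- σ b with r (σ b) < r b0, so σ b < b0, hence fixed
        have hσb : σ b < b0 := hrmono.lt_iff_lt.mp (by rw [hrb]; exact hlt)
        have : σ (σ b) = σ b := hminfix _ hσb
        have hbfix : σ b = b := σ.injective this
        rw [hbfix] at hcon
        exact hcon
      · intro hcon
        have hrb : r b = a := congrArg Prod.fst hcon
        have hblt : b < b0 := hrmono.lt_iff_lt.mp (by rw [hrb]; exact hlt)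
        rw [hminfix b hblt]
        exact hcon
    · -- a = r b0, col < c b0
      simp only [ofLex_toLex] at heq hcol
      rw [monOf_apply, monOf_apply]
      have e1 : univ.filter (fun b : Fin m => (r (σ b), c b) = (a, col)) = ∅ := by
        rw [Finset.filter_eq_empty_iff]
        intro b _ hcon
        have hcb : c b = col := congrArg Prod.snd hcon
        have hblt : b < b0 := hcmono.lt_iff_lt.mp (by rw [hcb]; exact hcol)
        have hfix : σ b = b := hminfix b hblt
        have : r (σ b) = a := congrArg Prod.fst hcon
        rw [hfix] at this
        have : b = b0 := hrmono.injective (by rw [this, heq])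
        omega
      have e2 : univ.filter (fun b : Fin m => (r ((1 : Equiv.Perm (Fin m)) b), c b) = (a, col))
          = ∅ := by
        rw [Finset.filter_eq_empty_iff]
        intro b _ hcon
        have hcb : c b = col := congrArg Prod.snd hcon
        have hblt : b < b0 := hcmono.lt_iff_lt.mp (by rw [hcb]; exact hcol)
        have : r b = a := congrArg Prod.fst hcon
        have : b = b0 := hrmono.injective (by rw [this, heq])
        omega
      rw [e1, e2]

/-- determinant of a matrix with entries in a subalgebra lies in the subalgebra -/
lemma det_mem_subalgebra {m : ℕ} {A : Subalgebra K (MvPolynomial (Fin (d+1) × Fin n) K)}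
    {M : Matrix (Fin m) (Fin m) (MvPolynomial (Fin (d+1) × Fin n) K)}
    (h : ∀ a b, M a b ∈ A) : M.det ∈ A := by
  rw [Matrix.det_apply]
  refine A.sum_mem (fun σ _ => ?_)
  rw [Units.smul_def]
  refine zsmul_mem (A.prod_mem (fun b _ => h _ _)) _

/-- Laplace expansion of a minor along row k -/
lemma laplace (e : Fin (d+1) → Fin n) (k : Fin (d+1)) :
    (Matrix.of fun a b : Fin (d + 1) =>
        (X (a, e b) : MvPolynomial (Fin (d+1) × Fin n) K)).det =
      X (k, e k) * (Matrix.of fun a b : Fin d =>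
          (X (k.succAbove a, e (k.succAbove b)) : MvPolynomial (Fin (d+1) × Fin n) K)).det +
      ∑ j ∈ univ.erase k, (-1 : MvPolynomial (Fin (d+1) × Fin n) K) ^ ((k : ℕ) + (j : ℕ)) *
        X (k, e j) * (Matrix.of fun a b : Fin d =>
          (X (k.succAbove a, e (j.succAbove b)) : MvPolynomial (Fin (d+1) × Fin n) K)).det := by
  have h := Matrix.det_succ_row (Matrix.of fun a b : Fin (d + 1) =>
      (X (a, e b) : MvPolynomial (Fin (d+1) × Fin n) K)) k
  rw [h, ← Finset.add_sum_erase _ _ (mem_univ k)]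
  congr 1
  · have : Even ((k : ℕ) + (k : ℕ)) := ⟨k, rfl⟩
    rw [this.neg_one_pow, one_mul]
    rfl

noncomputable def subM (K : Type*) [Field K] (d n : ℕ) (e : Fin (d+1) → Fin n)
    (k : Fin (d+1)) : MvPolynomial (Fin (d+1) × Fin n) K :=
  (Matrix.of fun a b : Fin d => X (k.succAbove a, e (k.succAbove b))).det

variable {K : Type*} [Field K] {d n : ℕ}

lemma permMatrix_apply {m : ℕ} (σ : Equiv.Perm (Fin m)) (i j : Fin m) :
    (Equiv.Perm.permMatrix K σ) i j = if σ i = j then 1 else 0 := by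
  simp [Equiv.Perm.permMatrix, PEquiv.toMatrix_apply, Equiv.toPEquiv]

lemma cast_sign_ne_zero {m : ℕ} (σ : Equiv.Perm (Fin m)) :
    (((Equiv.Perm.sign σ : ℤ) : K)) ≠ 0 := by
  rcases Int.units_eq_one_or (Equiv.Perm.sign σ) with h | h <;> rw [h] <;> simp

lemma key_ne_zero (s t : Finset (Fin n)) (hs : s.card = d+1) (ht : t.card = d+1)
    (hst : s ≠ t) (k : Fin (d+1))
    (hk : t.orderEmbOfFin ht k = s.orderEmbOfFin hs k) :
    subM K d n (⇑(s.orderEmbOfFin hs)) k * genMinor K d n t ht -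
      subM K d n (⇑(t.orderEmbOfFin ht)) k * genMinor K d n s hs ≠ 0 := by
  classical
  set es : Fin (d+1) → Fin n := ⇑(s.orderEmbOfFin hs) with hes
  set et : Fin (d+1) → Fin n := ⇑(t.orderEmbOfFin ht) with het
  have hesinj : Function.Injective es := (s.orderEmbOfFin hs).injective
  have hetinj : Function.Injective et := (t.orderEmbOfFin ht).injective
  have hesmem : ∀ j, es j ∈ s := fun j => Finset.orderEmbOfFin_mem s hs j
  have hetmem : ∀ j, et j ∈ t := fun j => Finset.orderEmbOfFin_mem t ht j
  -- the column c ∈ t \ s and its position b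
  have hts : ¬ t ⊆ s := by
    intro hsub
    exact hst ((Finset.eq_of_subset_of_card_le hsub (le_of_eq (hs.trans ht.symm))).symm)
  obtain ⟨c, hcmem⟩ := Finset.sdiff_nonempty.mpr hts
  obtain ⟨hct, hcs⟩ := Finset.mem_sdiff.mp hcmem
  obtain ⟨b, hetb⟩ : ∃ b, et b = c := by
    have : c ∈ Set.range et := by rw [het, Finset.range_orderEmbOfFin]; exact hct
    exact this
  have hbk : b ≠ k := by
    intro h
    apply hcs
    rw [← hetb, h, hk]
    exact hesmem k
  -- position lemmas
  have posT_et : ∀ (j : Fin (d+1)) (hj : et j ∈ t), (t.orderIsoOfFin ht).symm ⟨et j, hj⟩ = j := by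
    intro j hj
    rw [OrderIso.symm_apply_eq]
    exact Subtype.ext (Finset.coe_orderIsoOfFin_apply t ht j)
  have posT_val : ∀ (c' : Fin n) (hc' : c' ∈ t), et ((t.orderIsoOfFin ht).symm ⟨c', hc'⟩) = c' := by
    intro c' hc'
    rw [het, ← Finset.coe_orderIsoOfFin_apply, OrderIso.apply_symm_apply]
  have posS_val : ∀ (c' : Fin n) (hc' : c' ∈ s), es ((s.orderIsoOfFin hs).symm ⟨c', hc'⟩) = c' := by
    intro c' hc'
    rw [hes, ← Finset.coe_orderIsoOfFin_apply, OrderIso.apply_symm_apply]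
  -- the bookkeeping finsets
  set sharedPos : Finset (Fin (d+1)) := univ.filter (fun b' => b' ≠ k ∧ es b' ∈ t)
    with hsharedPos
  set q : Fin (d+1) → Fin (d+1) :=
    fun b' => if h : es b' ∈ t then (t.orderIsoOfFin ht).symm ⟨es b', h⟩ else k with hq
  have hqval : ∀ b' (h : es b' ∈ t), et (q b') = es b' := by
    intro b' h
    rw [hq]
    simp only [dif_pos h]
    exact posT_val _ h
  set usedRows : Finset (Fin (d+1)) := sharedPos.image q with husedRows
  set freePos : Finset (Fin (d+1)) := univ.filter (fun b' => b' ≠ k ∧ es b' ∉ t) with hfreePos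
  set availRows : Finset (Fin (d+1)) := (univ.erase k) \ usedRows with havailRows
  have hqne : ∀ b' ∈ sharedPos, q b' ≠ k := by
    intro b' hb' hqk
    obtain ⟨hbk', hbt⟩ := (mem_filter.mp hb').2
    have h1 : et (q b') = es b' := hqval b' hbt
    rw [hqk, hk] at h1
    exact hbk' (hesinj h1).symm
  have hused_sub : usedRows ⊆ univ.erase k := by
    intro r hr
    obtain ⟨b', hb', rfl⟩ := mem_image.mp hr
    exact mem_erase.mpr ⟨hqne b' hb', mem_univ _⟩
  have hqinj : Set.InjOn q sharedPos := by
    intro b1 hb1 b2 hb2 heq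
    have h1 : et (q b1) = es b1 := hqval b1 (mem_filter.mp hb1).2.2
    have h2 : et (q b2) = es b2 := hqval b2 (mem_filter.mp hb2).2.2
    exact hesinj (by rw [← h1, ← h2, heq])
  have hcard_used : usedRows.card = sharedPos.card := Finset.card_image_of_injOn hqinj
  have hshared_sub : sharedPos ⊆ univ.erase k := by
    intro b' hb'
    exact mem_erase.mpr ⟨(mem_filter.mp hb').2.1, mem_univ _⟩
  have hfree_eq : freePos = (univ.erase k) \ sharedPos := by
    ext b'
    simp only [hfreePos, hsharedPos, mem_filter, mem_sdiff, mem_erase, mem_univ, true_and,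
      and_true, not_and]
    tauto
  have hcard_free : freePos.card = d - sharedPos.card := by
    rw [hfree_eq, Finset.card_sdiff_of_subset hshared_sub, Finset.card_erase_of_mem (mem_univ k),
      Finset.card_univ, Fintype.card_fin]
    omega
  have hcard_avail : availRows.card = d - usedRows.card := by
    rw [havailRows, Finset.card_sdiff_of_subset hused_sub, Finset.card_erase_of_mem (mem_univ k),
      Finset.card_univ, Fintype.card_fin]
    omega
  have hcards : freePos.card = availRows.card := by
    rw [hcard_free, hcard_avail, hcard_used]
  set eqv := Finset.equivOfCardEq hcards with heqv
  -- freePos membership for unshared columns of s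
  have hfree_mem : ∀ (c' : Fin n) (hc' : c' ∉ t) (hcs' : c' ∈ s),
      (s.orderIsoOfFin hs).symm ⟨c', hcs'⟩ ∈ freePos := by
    intro c' hc' hcs'
    refine mem_filter.mpr ⟨mem_univ _, ?_, ?_⟩
    · intro hkk
      apply hc'
      have := posS_val c' hcs'
      rw [hkk, ← hk] at this
      rw [← this]
      exact hetmem k
    · rw [posS_val c' hcs']; exact hc'
  -- the evaluation point
  set ρ : Fin n → Option (Fin (d+1)) := fun c' =>
    if hc' : c' ∈ t then some (Equiv.swap k b ((t.orderIsoOfFin ht).symm ⟨c', hc'⟩))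
    else if hcs' : c' ∈ s then
      some ((eqv ⟨(s.orderIsoOfFin hs).symm ⟨c', hcs'⟩, hfree_mem c' hc' hcs'⟩ : _) : Fin (d+1))
    else none with hρ
  set A : Fin (d+1) × Fin n → K := fun v => if ρ v.2 = some v.1 then 1 else 0 with hA
  have hρt : ∀ j : Fin (d+1), ρ (et j) = some (Equiv.swap k b j) := by
    intro j
    rw [hρ]
    simp only [dif_pos (hetmem j)]
    rw [posT_et j (hetmem j)]
  -- evaluation of genMinor t
  have hevalg : eval A (genMinor K d n t ht) = ((Equiv.Perm.sign (Equiv.swap k b) : ℤ) : K) := by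
    rw [genMinor, RingHom.map_det]
    have hmat : (eval A).mapMatrix (Matrix.of fun a b' : Fin (d + 1) => (X (a, t.orderEmbOfFin ht b') :
        MvPolynomial (Fin (d+1) × Fin n) K)) = (Equiv.Perm.permMatrix K (Equiv.swap k b)).transpose := by
      ext a j
      rw [RingHom.mapMatrix_apply]
      show eval A (X (a, et j)) = _
      rw [eval_X]
      rw [hA]
      show (if ρ (et j) = some a then (1:K) else 0) = _
      rw [hρt j]
      rw [Matrix.transpose_apply, permMatrix_apply]
      simp only [Option.some.injEq]
    rw [hmat, Matrix.det_transpose, Matrix.det_permutation]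
  have hevalg' : eval A (genMinor K d n t ht) = -1 := by
    rw [hevalg, Equiv.Perm.sign_swap (Ne.symm hbk)]
    simp
  -- evaluation of subM et k (the t-side complementary minor) is zero
  have hevalMt : eval A (subM K d n et k) = 0 := by
    rw [subM, RingHom.map_det]
    obtain ⟨z, hz⟩ := Fin.exists_succAbove_eq hbk
    refine Matrix.det_eq_zero_of_column_eq_zero z ?_
    intro a
    rw [RingHom.mapMatrix_apply]
    show eval A (X (k.succAbove a, et (k.succAbove z))) = 0
    rw [eval_X, hA]
    show (if ρ (et (k.succAbove z)) = some (k.succAbove a) then (1:K) else 0) = 0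
    rw [hρt, hz, if_neg]
    intro hcon
    have h1 : Equiv.swap k b b = k := Equiv.swap_apply_right k b
    rw [h1] at hcon
    exact Fin.succAbove_ne k a (Option.some_injective _ hcon).symm
  -- evaluation of subM es k is a sign
  -- row values
  have hrowex : ∀ b2 : Fin d, ∃ rr : Fin (d+1), rr ≠ k ∧
      ρ (es (k.succAbove b2)) = some rr ∧
      ((es (k.succAbove b2) ∈ t ∧ rr ∈ usedRows) ∨ (es (k.succAbove b2) ∉ t ∧ rr ∈ availRows)) := by
    intro b2
    by_cases hmem : es (k.succAbove b2) ∈ t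
    · set p := (t.orderIsoOfFin ht).symm ⟨es (k.succAbove b2), hmem⟩ with hp
      have hpval : et p = es (k.succAbove b2) := posT_val _ hmem
      have hpk : p ≠ k := by
        intro hcon
        rw [hcon, hk] at hpval
        exact Fin.succAbove_ne k b2 (hesinj hpval).symm
      have hpb : p ≠ b := by
        intro hcon
        rw [hcon, hetb] at hpval
        exact hcs (hpval ▸ hesmem (k.succAbove b2))
      refine ⟨p, hpk, ?_, Or.inl ⟨hmem, ?_⟩⟩
      · rw [hρ]
        simp only [dif_pos hmem]
        rw [Equiv.swap_apply_of_ne_of_ne hpk hpb]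
      · refine mem_image.mpr ⟨k.succAbove b2, ?_, ?_⟩
        · exact mem_filter.mpr ⟨mem_univ _, Fin.succAbove_ne k b2, hmem⟩
        · rw [hq]; simp only [dif_pos hmem]; rfl
    · set z := (eqv ⟨(s.orderIsoOfFin hs).symm ⟨es (k.succAbove b2), hesmem _⟩,
        hfree_mem _ hmem (hesmem _)⟩ : {x // x ∈ availRows}) with hzdef
      refine ⟨(z : Fin (d+1)), ?_, ?_, Or.inr ⟨hmem, z.2⟩⟩
      · exact (mem_erase.mp (mem_sdiff.mp z.2).1).1
      · rw [hρ]
        simp only [dif_neg hmem, dif_pos (hesmem (k.succAbove b2))]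
        rfl
  choose rr hrrk hrrρ hrrcase using hrowex
  have hrrinj : Function.Injective rr := by
    intro b2 b2' heq
    have h2 := hrrρ b2
    have h2' := hrrρ b2'
    rw [heq] at h2
    have hcols : ρ (es (k.succAbove b2)) = ρ (es (k.succAbove b2')) := by rw [h2, h2']
    -- deduce column equality
    rcases hrrcase b2 with ⟨hmem, hused⟩ | ⟨hmem, havail⟩ <;>
      rcases hrrcase b2' with ⟨hmem', hused'⟩ | ⟨hmem', havail'⟩
    · -- both shared
      rw [hρ] at hcols
      simp only [dif_pos hmem, dif_pos hmem', Option.some.injEq] at hcols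
      have := (Equiv.swap k b).injective hcols
      have hcc : es (k.succAbove b2) = es (k.succAbove b2') := by
        have e1 := posT_val _ hmem
        have e2 := posT_val _ hmem'
        rw [← e1, ← e2, this]
      exact Fin.succAbove_right_injective (hesinj hcc)
    · -- mixed: contradiction
      rw [heq] at hused
      rw [havailRows] at havail'
      exact absurd hused (mem_sdiff.mp havail').2.elim
    · rw [← heq] at hused'
      rw [havailRows] at havail
      exact absurd hused' (mem_sdiff.mp havail).2.elim
    · -- both free
      rw [hρ] at hcols
      simp only [dif_neg hmem, dif_neg hmem', dif_pos (hesmem (k.succAbove b2)),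
        dif_pos (hesmem (k.succAbove b2')), Option.some.injEq] at hcols
      have hz := eqv.injective (Subtype.coe_injective hcols)
      have hz2 := congrArg Subtype.val hz
      have hcc : es (k.succAbove b2) = es (k.succAbove b2') := by
        have e1 := posS_val _ (hesmem (k.succAbove b2))
        have e2 := posS_val _ (hesmem (k.succAbove b2'))
        rw [← e1, ← e2]
        exact congrArg es hz2
      exact Fin.succAbove_right_injective (hesinj hcc)
  -- pull back through succAbove
  have hpull : ∀ b2 : Fin d, ∃ z : Fin d, k.succAbove z = rr b2 :=
    fun b2 => Fin.exists_succAbove_eq (hrrk b2)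
  choose rhat hrhat using hpull
  have hrhatinj : Function.Injective rhat := by
    intro b2 b2' heq
    apply hrrinj
    rw [← hrhat b2, ← hrhat b2', heq]
  have hrhatbij : Function.Bijective rhat := Finite.injective_iff_bijective.mp hrhatinj
  set sigmah := Equiv.ofBijective rhat hrhatbij with hsigmah
  have hevalMs : eval A (subM K d n es k) = ((Equiv.Perm.sign sigmah : ℤ) : K) := by
    rw [subM, RingHom.map_det]
    have hmat : (eval A).mapMatrix (Matrix.of fun a b2 : Fin d => (X (k.succAbove a,
        es (k.succAbove b2)) : MvPolynomial (Fin (d+1) × Fin n) K)) =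
        (Equiv.Perm.permMatrix K sigmah).transpose := by
      ext a b2
      rw [RingHom.mapMatrix_apply]
      show eval A (X (k.succAbove a, es (k.succAbove b2))) = _
      rw [eval_X, hA]
      show (if ρ (es (k.succAbove b2)) = some (k.succAbove a) then (1:K) else 0) = _
      rw [hrrρ b2, ← hrhat b2]
      rw [Matrix.transpose_apply, permMatrix_apply]
      have : (some (k.succAbove (rhat b2)) = some (k.succAbove a)) ↔ (sigmah b2 = a) := by
        rw [Option.some.injEq]
        constructor
        · intro h; exact Fin.succAbove_right_injective h
        · intro h; rw [hsigmah] at h; rw [show Equiv.ofBijective rhat hrhatbij b2 = rhat b2 from rfl] at h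
          rw [h]
      simp only [this]
    rw [hmat, Matrix.det_transpose, Matrix.det_permutation]
  -- conclusion
  intro hzero
  have := congrArg (eval A) hzero
  rw [map_sub, _root_.map_mul, _root_.map_mul, hevalg', hevalMt, hevalMs, zero_mul, sub_zero, map_zero] at this
  have hne : ((Equiv.Perm.sign sigmah : ℤ) : K) ≠ 0 := cast_sign_ne_zero sigmah
  rw [mul_neg_one, neg_eq_zero] at this
  exact hne this

/-- the Laplace tail -/
noncomputable def lapTail (K : Type*) [Field K] (d n : ℕ) (e : Fin (d+1) → Fin n)
    (k : Fin (d+1)) : MvPolynomial (Fin (d+1) × Fin n) K :=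
  ∑ j ∈ univ.erase k, (-1 : MvPolynomial (Fin (d+1) × Fin n) K) ^ ((k : ℕ) + (j : ℕ)) *
    X (k, e j) * (Matrix.of fun a b : Fin d =>
      (X (k.succAbove a, e (j.succAbove b)) : MvPolynomial (Fin (d+1) × Fin n) K)).det

lemma genMinor_eq_laplace (s : Finset (Fin n)) (hs : s.card = d + 1) (k : Fin (d+1)) :
    genMinor K d n s hs = X (k, s.orderEmbOfFin hs k) * subM K d n (⇑(s.orderEmbOfFin hs)) k +
      lapTail K d n (⇑(s.orderEmbOfFin hs)) k :=
  laplace (⇑(s.orderEmbOfFin hs)) k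

/-- the combination polynomial has no occurrence of the variable `(k, x)` -/
lemma witness_coord_zero (s t : Finset (Fin n)) (hs : s.card = d + 1) (ht : t.card = d + 1)
    (k : Fin (d+1)) (hk : t.orderEmbOfFin ht k = s.orderEmbOfFin hs k) :
    ∀ μ ∈ (subM K d n (⇑(s.orderEmbOfFin hs)) k * genMinor K d n t ht -
        subM K d n (⇑(t.orderEmbOfFin ht)) k * genMinor K d n s hs).support,
      μ (k, s.orderEmbOfFin hs k) = 0 := by
  classical
  set A : Subalgebra K (MvPolynomial (Fin (d+1) × Fin n) K) :=
    supported K {v : Fin (d+1) × Fin n | v ≠ (k, s.orderEmbOfFin hs k)} with hA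
  have hXmem : ∀ v : Fin (d+1) × Fin n, v ≠ (k, s.orderEmbOfFin hs k) → X v ∈ A :=
    fun v hv => X_mem_supported.mpr hv
  have hsubMs : subM K d n (⇑(s.orderEmbOfFin hs)) k ∈ A := by
    rw [subM]
    refine det_mem_subalgebra (fun a b => hXmem _ ?_)
    intro hcon
    exact Fin.succAbove_ne k a (congrArg Prod.fst hcon)
  have hsubMt : subM K d n (⇑(t.orderEmbOfFin ht)) k ∈ A := by
    rw [subM]
    refine det_mem_subalgebra (fun a b => hXmem _ ?_)
    intro hcon
    exact Fin.succAbove_ne k a (congrArg Prod.fst hcon)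
  have htail : ∀ (e : Fin (d+1) → Fin n), Function.Injective e → e k = s.orderEmbOfFin hs k →
      lapTail K d n e k ∈ A := by
    intro e heinj hek
    rw [lapTail]
    refine A.sum_mem (fun j hj => ?_)
    refine A.mul_mem (A.mul_mem (A.pow_mem (A.neg_mem A.one_mem) _) (hXmem _ ?_))
      (det_mem_subalgebra (fun a b => hXmem _ ?_))
    · intro hcon
      have : e j = s.orderEmbOfFin hs k := congrArg Prod.snd hcon
      rw [← hek] at this
      exact (mem_erase.mp hj).1 (heinj this)
    · intro hcon
      exact Fin.succAbove_ne k a (congrArg Prod.fst hcon)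
  have hpA : subM K d n (⇑(s.orderEmbOfFin hs)) k * genMinor K d n t ht -
      subM K d n (⇑(t.orderEmbOfFin ht)) k * genMinor K d n s hs ∈ A := by
    rw [genMinor_eq_laplace t ht k, genMinor_eq_laplace s hs k]
    have hXeq : (X (k, t.orderEmbOfFin ht k) :
        MvPolynomial (Fin (d+1) × Fin n) K) = X (k, s.orderEmbOfFin hs k) :=
      congrArg (fun cc : Fin n => (X (k, cc) : MvPolynomial (Fin (d+1) × Fin n) K)) hk
    rw [hXeq]
    have hring : ∀ Ms Mt Xv Tt Ts : MvPolynomial (Fin (d+1) × Fin n) K,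
        Ms * (Xv * Mt + Tt) - Mt * (Xv * Ms + Ts) = Ms * Tt - Mt * Ts := by
      intros; ring
    rw [hring]
    exact A.sub_mem
      (A.mul_mem hsubMs (htail _ (t.orderEmbOfFin ht).injective hk))
      (A.mul_mem hsubMt (htail _ (s.orderEmbOfFin hs).injective rfl))
  intro μ hμ
  have hvars := mem_supported.mp hpA
  by_contra hne
  have hmem : (k, s.orderEmbOfFin hs k) ∈ (subM K d n (⇑(s.orderEmbOfFin hs)) k *
      genMinor K d n t ht - subM K d n (⇑(t.orderEmbOfFin ht)) k * genMinor K d n s hs).vars :=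
    (mem_vars _).mpr ⟨μ, hμ, Finsupp.mem_support_iff.mpr hne⟩
  exact (hvars hmem) rfl

/-- all columns appearing in the combination polynomial lie in s ∪ t -/
lemma witness_cols (s t : Finset (Fin n)) (hs : s.card = d + 1) (ht : t.card = d + 1)
    (k : Fin (d+1)) :
    ∀ μ ∈ (subM K d n (⇑(s.orderEmbOfFin hs)) k * genMinor K d n t ht -
        subM K d n (⇑(t.orderEmbOfFin ht)) k * genMinor K d n s hs).support,
      ∀ v ∈ μ.support, v.2 ∈ s ∪ t := by
  classical
  set A : Subalgebra K (MvPolynomial (Fin (d+1) × Fin n) K) :=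
    supported K {v : Fin (d+1) × Fin n | v.2 ∈ s ∪ t} with hA
  have hXs : ∀ (a : Fin (d+1)) (j : Fin (d+1)),
      (X (a, s.orderEmbOfFin hs j) : MvPolynomial (Fin (d+1) × Fin n) K) ∈ A :=
    fun a j => X_mem_supported.mpr (mem_union_left _ (Finset.orderEmbOfFin_mem s hs j))
  have hXt : ∀ (a : Fin (d+1)) (j : Fin (d+1)),
      (X (a, t.orderEmbOfFin ht j) : MvPolynomial (Fin (d+1) × Fin n) K) ∈ A :=
    fun a j => X_mem_supported.mpr (mem_union_right _ (Finset.orderEmbOfFin_mem t ht j))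
  have hpA : subM K d n (⇑(s.orderEmbOfFin hs)) k * genMinor K d n t ht -
      subM K d n (⇑(t.orderEmbOfFin ht)) k * genMinor K d n s hs ∈ A := by
    refine A.sub_mem (A.mul_mem ?_ ?_) (A.mul_mem ?_ ?_)
    · exact det_mem_subalgebra (fun a b => hXs _ _)
    · exact det_mem_subalgebra (fun a b => hXt _ _)
    · exact det_mem_subalgebra (fun a b => hXt _ _)
    · exact det_mem_subalgebra (fun a b => hXs _ _)
  intro μ hμ v hv
  exact mem_supported.mp hpA ((mem_vars _).mpr ⟨μ, hμ, hv⟩)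

/-- position of an element in a sorted finset equals number of smaller elements -/
lemma pos_eq_filter_card (s : Finset (Fin n)) {m : ℕ} (hs : s.card = m) (x : Fin n)
    (hx : x ∈ s) :
    ∃ k : Fin m, s.orderEmbOfFin hs k = x ∧ (k : ℕ) = (s.filter (· < x)).card := by
  classical
  obtain ⟨k, hk⟩ : ∃ k, s.orderEmbOfFin hs k = x := by
    have : x ∈ Set.range ⇑(s.orderEmbOfFin hs) := by
      rw [Finset.range_orderEmbOfFin]; exact hx
    exact this
  refine ⟨k, hk, ?_⟩
  have himg : s.filter (· < x) = (univ.filter (fun b : Fin m => b < k)).image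
      (s.orderEmbOfFin hs) := by
    ext y
    simp only [mem_filter, mem_image, mem_univ, true_and]
    constructor
    · rintro ⟨hys, hyx⟩
      obtain ⟨b, hb⟩ : ∃ b, s.orderEmbOfFin hs b = y := by
        have : y ∈ Set.range ⇑(s.orderEmbOfFin hs) := by
          rw [Finset.range_orderEmbOfFin]; exact hys
        exact this
      refine ⟨b, ?_, hb⟩
      rw [← (s.orderEmbOfFin hs).lt_iff_lt, hb, hk]
      exact hyx
    · rintro ⟨b, hbk, rfl⟩
      refine ⟨Finset.orderEmbOfFin_mem s hs b, ?_⟩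
      rw [← hk]
      exact (s.orderEmbOfFin hs).lt_iff_lt.mpr hbk
  rw [himg, Finset.card_image_of_injective _ (s.orderEmbOfFin hs).injective]
  rw [show (univ.filter (fun b : Fin m => b < k)) = Finset.Iio k from by ext b; simp]
  rw [Fin.card_Iio]


lemma isLeadMon_genMinor_aux (c : Fin (d+1) → Fin n) (hc : Function.Injective c)
    (j : Fin (d+1)) :
    monOf (fun a : Fin (d+1) => a) c 1 (j, c j) = 1 := by
  classical
  rw [monOf_apply]
  have heq : univ.filter (fun b : Fin (d+1) =>
      (((fun a : Fin (d+1) => a) ((1 : Equiv.Perm (Fin (d+1))) b) : Fin (d+1)), c b) = (j, c j))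
      = {j} := by
    ext b
    simp only [mem_filter, mem_univ, true_and, mem_singleton, Equiv.Perm.one_apply]
    constructor
    · intro h
      exact hc (by simpa using h : b = j ∧ c b = c j).2
    · rintro rfl; simp
  rw [heq, Finset.card_singleton]

lemma isLeadMon_genMinor (u : Finset (Fin n)) (hu : u.card = d+1) :
    IsLeadMon (genMinor K d n u hu)
      (monOf (fun a : Fin (d+1) => a) (⇑(u.orderEmbOfFin hu)) 1) := by
  classical
  constructor
  · rw [MvPolynomial.mem_support_iff]
    have hco : coeff (monOf (fun a : Fin (d+1) => a) (⇑(u.orderEmbOfFin hu)) 1)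
        (genMinor K d n u hu) = ((Equiv.Perm.sign (1 : Equiv.Perm (Fin (d+1))) : ℤ) : K) :=
      coeff_det_XMat_monOf (fun a : Fin (d+1) => a) (⇑(u.orderEmbOfFin hu))
        (fun _ _ h => h) (u.orderEmbOfFin hu).injective 1
    rw [hco]
    simp
  · intro μ hμ hne
    obtain ⟨σ, rfl⟩ := support_det_XMat (fun a : Fin (d+1) => a) (⇑(u.orderEmbOfFin hu)) μ hμ
    have hσ : σ ≠ 1 := fun h => hne (by rw [h])
    exact monLt_monOf_diag _ _ strictMono_id (u.orderEmbOfFin hu).strictMono σ hσ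

end AuxProof

/-- if the maximal minors corresponding to the facets of a pure
`d`-dimensional simplicial complex `Δ` on `[n]` (given by its facet family `F`) form a
Gröbner basis of the determinantal facet ideal `J_Δ` w.r.t. the lexicographic order
induced by `x_{1,1} > … > x_{d+1,n}`, then `Δ` is poor closed: for any two distinct
facets `s, t` whose increasing vertex lists agree in some position (there is a common
vertex `x` preceded by equally many vertices in `s` and in `t`), there is a facet
contained in `s ∪ t` different from `s` and `t`. -/
theorem stmt_1 (K : Type*) [Field K] (d n : ℕ) (F : Finset (Finset (Fin n)))
    (hpure : ∀ s ∈ F, s.card = d + 1)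
    (hGB : IsGroebner
      {p : MvPolynomial (Fin (d + 1) × Fin n) K |
        ∃ s ∈ F, ∃ h : s.card = d + 1, p = genMinor K d n s h}
      (Ideal.span {p : MvPolynomial (Fin (d + 1) × Fin n) K |
        ∃ s ∈ F, ∃ h : s.card = d + 1, p = genMinor K d n s h})) :
    ∀ s ∈ F, ∀ t ∈ F, s ≠ t →
      (∃ x : Fin n, x ∈ s ∧ x ∈ t ∧
        (s.filter (· < x)).card = (t.filter (· < x)).card) →
      ∃ u ∈ F, u ⊆ s ∪ t ∧ u ≠ s ∧ u ≠ t := by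
  classical
  rintro s hsF t htF hst ⟨x, hxs, hxt, hfil⟩
  have hs : s.card = d + 1 := hpure s hsF
  have ht : t.card = d + 1 := hpure t htF
  obtain ⟨ks, hks, hksn⟩ := pos_eq_filter_card s hs x hxs
  obtain ⟨kt, hkt, hktn⟩ := pos_eq_filter_card t ht x hxt
  have hkk : ks = kt := Fin.ext (by rw [hksn, hktn, hfil])
  subst hkk
  have hketk : t.orderEmbOfFin ht ks = s.orderEmbOfFin hs ks := by rw [hks, hkt]
  set p : MvPolynomial (Fin (d + 1) × Fin n) K :=
    subM K d n (⇑(s.orderEmbOfFin hs)) ks * genMinor K d n t ht -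
      subM K d n (⇑(t.orderEmbOfFin ht)) ks * genMinor K d n s hs with hpdef
  have hmemf : genMinor K d n s hs ∈ {p : MvPolynomial (Fin (d + 1) × Fin n) K |
      ∃ s ∈ F, ∃ h : s.card = d + 1, p = genMinor K d n s h} := ⟨s, hsF, hs, rfl⟩
  have hmemg : genMinor K d n t ht ∈ {p : MvPolynomial (Fin (d + 1) × Fin n) K |
      ∃ s ∈ F, ∃ h : s.card = d + 1, p = genMinor K d n s h} := ⟨t, htF, ht, rfl⟩
  have hpI : p ∈ Ideal.span {p : MvPolynomial (Fin (d + 1) × Fin n) K |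
      ∃ s ∈ F, ∃ h : s.card = d + 1, p = genMinor K d n s h} := by
    rw [hpdef]
    exact sub_mem (Ideal.mul_mem_left _ _ (Ideal.subset_span hmemg))
      (Ideal.mul_mem_left _ _ (Ideal.subset_span hmemf))
  have hp0 : p ≠ 0 := key_ne_zero s t hs ht hst ks hketk
  obtain ⟨q, hqB, hq0, hlead⟩ := hGB.2 p hpI hp0
  obtain ⟨u, huF, hu, rfl⟩ := hqB
  obtain ⟨mp, hmp⟩ := exists_isLeadMon hp0
  have hmq := isLeadMon_genMinor (K := K) u hu
  have hle : monOf (fun a : Fin (d+1) => a) (⇑(u.orderEmbOfFin hu)) 1 ≤ mp :=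
    hlead mp _ hmp hmq
  have hle' : ∀ v, monOf (fun a : Fin (d+1) => a) (⇑(u.orderEmbOfFin hu)) 1 v ≤ mp v :=
    fun v => hle v
  refine ⟨u, huF, ?_, ?_, ?_⟩
  · -- u ⊆ s ∪ t
    intro y hy
    obtain ⟨j, hj⟩ : ∃ j, u.orderEmbOfFin hu j = y := by
      have : y ∈ Set.range ⇑(u.orderEmbOfFin hu) := by
        rw [Finset.range_orderEmbOfFin]; exact hy
      exact this
    have h1 : monOf (fun a : Fin (d+1) => a) (⇑(u.orderEmbOfFin hu)) 1 (j, y) = 1 := by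
      rw [← hj]
      exact isLeadMon_genMinor_aux _ (u.orderEmbOfFin hu).injective j
    have h2 := hle' (j, y)
    rw [h1] at h2
    have h3 : (j, y) ∈ mp.support := Finsupp.mem_support_iff.mpr (by omega)
    exact witness_cols s t hs ht ks mp hmp.1 (j, y) h3
  · -- u ≠ s
    rintro rfl
    have h1 : monOf (fun a : Fin (d+1) => a) (⇑(u.orderEmbOfFin hu)) 1
        (ks, u.orderEmbOfFin hu ks) = 1 :=
      isLeadMon_genMinor_aux _ (u.orderEmbOfFin hu).injective ks
    have h2 := hle' (ks, u.orderEmbOfFin hu ks)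
    rw [h1] at h2
    have h3 : mp (ks, u.orderEmbOfFin hu ks) = 0 :=
      witness_coord_zero u t hu ht ks hketk mp hmp.1
    omega
  · -- u ≠ t
    rintro rfl
    have h1 : monOf (fun a : Fin (d+1) => a) (⇑(u.orderEmbOfFin hu)) 1
        (ks, u.orderEmbOfFin hu ks) = 1 :=
      isLeadMon_genMinor_aux _ (u.orderEmbOfFin hu).injective ks
    have h2 := hle' (ks, u.orderEmbOfFin hu ks)
    rw [h1] at h2
    have h3 : mp (ks, s.orderEmbOfFin hs ks) = 0 :=
      witness_coord_zero s u hs hu ks hketk mp hmp.1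
    rw [← hketk] at h3
    omega
end

section
/- Every strong interval $d$-dimensional simplicial complex is a global interval $d$-dimensional simplicial complex. That is, if $\Delta$ is a pure $d$-dimensional simplicial complex on $n$ vertices admitting an interval representation $\{I_i\}_{i \in [n]}$ (a family of intervals such that a $(d+1)$-subset $\{i_1 < \dots < i_{d+1}\}$ is a facet if and only if $\bigcup_k I_{i_k}$ is an interval), then there is a labelling $[n]$ of the vertices such that for each facet $F: i_1 \dots i_{d+1}$ and each $j \notin F$ with $i_1 \leq j \leq i_{d+1}$, the set $\{i_1, \dots, i_d, j\}$ is a facet. -/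
/-! Label the vertices in increasing order of left endpoints, and let `m` be the largest vertex
of a facet `s`. Since `I m` starts last, the intervals of `s \ {m}` still have an interval as
union, and by density this union reaches the left endpoint of `I m` (a gap would disconnect the
union over `s`). Every `j` between the extreme vertices of `s` has its left endpoint inside that
interval, so adding `I j` gives an interval again. -/

/-- `F` (the facet family of a pure `d`-complex on `[n]`) satisfies the global interval
condition w.r.t. the natural labelling: for each facet `s : i₁ < … < i_{d+1}` and each
`j ∉ s` with `i₁ ≤ j ≤ i_{d+1}`, the set `{i₁, …, i_d, j}` (replace the largest vertex
by `j`) is a facet. -/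
def GlobalIntervalCond {n : ℕ} (F : Finset (Finset (Fin n))) : Prop :=
  ∀ s ∈ F, ∀ j : Fin n, j ∉ s → (∃ a ∈ s, a ≤ j) → (∃ b ∈ s, j ≤ b) →
    ∀ b ∈ s, (∀ c ∈ s, c ≤ b) → insert j (s.erase b) ∈ F

open Set

theorem Set.OrdConnected.union_of_mem {α : Type*} [LinearOrder α] {s t : Set α} {x : α}
    (hs : s.OrdConnected) (ht : t.OrdConnected) (hxs : x ∈ s) (hxt : x ∈ t) :
    (s ∪ t).OrdConnected := by
  refine ⟨fun p hp q hq z hz => ?_⟩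
  rcases le_total z x with hzx | hxz
  · rcases hp with hp | hp
    · exact Or.inl (hs.out hp hxs ⟨hz.1, hzx⟩)
    · exact Or.inr (ht.out hp hxt ⟨hz.1, hzx⟩)
  · rcases hq with hq | hq
    · exact Or.inl (hs.out hxs hq ⟨hxz, hz.2⟩)
    · exact Or.inr (ht.out hxt hq ⟨hxz, hz.2⟩)

section IntervalUnion

variable {α ι : Type*} [LinearOrder α] [DecidableEq ι] {a b : ι → α} {s : Finset ι} {m : ι}

theorem ordConnected_biUnion_Icc_erase (hmax : ∀ i ∈ s, a i ≤ a m)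
    (hU : (⋃ i ∈ s, Icc (a i) (b i)).OrdConnected) :
    (⋃ i ∈ s.erase m, Icc (a i) (b i)).OrdConnected := by
  have hsub : (⋃ i ∈ s.erase m, Icc (a i) (b i)) ⊆ ⋃ i ∈ s, Icc (a i) (b i) :=
    biUnion_subset_biUnion_left fun i hi => Finset.mem_of_mem_erase hi
  refine ⟨fun x _ y hy z hz => ?_⟩
  obtain ⟨i, hi, hzi⟩ := mem_iUnion₂.mp (hU.out (hsub ‹_›) (hsub hy) hz)
  obtain ⟨k, hk, hyk⟩ := mem_iUnion₂.mp hy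
  rcases eq_or_ne i m with rfl | him
  · -- `I m` starts last, so the part of it below `y ∈ I k` lies in `I k`
    exact mem_biUnion hk
      ⟨(hmax k (Finset.mem_of_mem_erase hk)).trans hzi.1, hz.2.trans hyk.2⟩
  · exact mem_biUnion (Finset.mem_erase.mpr ⟨him, hi⟩) hzi

theorem left_mem_biUnion_Icc_erase [DenselyOrdered α] (hab : ∀ i ∈ s, a i ≤ b i)
    (hm : m ∈ s) (hmax : ∀ i ∈ s, a i ≤ a m) (hne : (s.erase m).Nonempty)
    (hU : (⋃ i ∈ s, Icc (a i) (b i)).OrdConnected) :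
    a m ∈ ⋃ i ∈ s.erase m, Icc (a i) (b i) := by
  obtain ⟨w, hw, hwmax⟩ := (s.erase m).exists_max_image b hne
  have hws := Finset.mem_of_mem_erase hw
  refine mem_biUnion hw ⟨hmax w hws, ?_⟩
  by_contra! hgap
  obtain ⟨z, hwz, hzm⟩ := exists_between hgap
  obtain ⟨i, hi, hzi⟩ := mem_iUnion₂.mp <| hU.out (mem_biUnion hws ⟨hab w hws, le_rfl⟩)
    (mem_biUnion hm ⟨le_rfl, hab m hm⟩) ⟨hwz.le, hzm.le⟩
  rcases eq_or_ne i m with rfl | him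
  · exact hzm.not_ge hzi.1
  · exact hwz.not_ge (hzi.2.trans (hwmax i (Finset.mem_erase.mpr ⟨him, hi⟩)))

theorem ordConnected_biUnion_Icc_insert_erase [DenselyOrdered α] {j u : ι}
    (hab : ∀ i ∈ s, a i ≤ b i) (hj : a j ≤ b j) (hm : m ∈ s) (hmax : ∀ i ∈ s, a i ≤ a m)
    (hu : u ∈ s) (huj : a u ≤ a j) (hjm : a j ≤ a m)
    (hU : (⋃ i ∈ s, Icc (a i) (b i)).OrdConnected) :
    (⋃ i ∈ insert j (s.erase m), Icc (a i) (b i)).OrdConnected := by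
  rw [Finset.set_biUnion_insert]
  rcases (s.erase m).eq_empty_or_nonempty with hempty | hne
  · simpa [hempty] using ordConnected_Icc
  have hV := ordConnected_biUnion_Icc_erase hmax hU
  obtain ⟨w, hw, hwj⟩ : ∃ w ∈ s.erase m, a w ≤ a j := by
    by_cases hum : u = m
    · obtain ⟨w, hw⟩ := hne
      exact ⟨w, hw, (hmax w (Finset.mem_of_mem_erase hw)).trans (hum ▸ huj)⟩
    · exact ⟨u, Finset.mem_erase.mpr ⟨hum, hu⟩, huj⟩
  have hjV : a j ∈ ⋃ i ∈ s.erase m, Icc (a i) (b i) :=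
    hV.out (mem_biUnion hw ⟨le_rfl, hab w (Finset.mem_of_mem_erase hw)⟩)
      (left_mem_biUnion_Icc_erase hab hm hmax hne hU) ⟨hwj, hjm⟩
  exact ordConnected_Icc.union_of_mem hV (left_mem_Icc.mpr hj) hjV

end IntervalUnion

theorem globalIntervalCond_image_perm {n : ℕ} {F : Finset (Finset (Fin n))}
    (σ : Equiv.Perm (Fin n))
    (h : ∀ s ∈ F, ∀ j, j ∉ s → (∃ u ∈ s, σ u ≤ σ j) → (∃ x ∈ s, σ j ≤ σ x) →
      ∀ m ∈ s, (∀ c ∈ s, σ c ≤ σ m) → insert j (s.erase m) ∈ F) :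
    GlobalIntervalCond (F.image fun s => s.image σ) := by
  rintro _ hs' j' hj' ⟨_, hu', huj⟩ ⟨_, hx', hjx⟩ _ hm' hmax
  obtain ⟨s, hs, rfl⟩ := Finset.mem_image.mp hs'
  obtain ⟨u, hu, rfl⟩ := Finset.mem_image.mp hu'
  obtain ⟨x, hx, rfl⟩ := Finset.mem_image.mp hx'
  obtain ⟨m, hm, rfl⟩ := Finset.mem_image.mp hm'
  obtain ⟨j, rfl⟩ := σ.surjective j'
  refine Finset.mem_image.mpr ⟨insert j (s.erase m), ?_, ?_⟩
  · exact h s hs j (fun hj => hj' (Finset.mem_image_of_mem σ hj)) ⟨u, hu, huj⟩ ⟨x, hx, hjx⟩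
      m hm fun c hc => hmax (σ c) (Finset.mem_image_of_mem σ hc)
  · rw [Finset.image_insert, Finset.image_erase σ.injective]

/-- every strong interval `d`-complex is a global interval `d`-complex.
`F` is the facet family of a pure `d`-complex on `[n]` admitting an interval
representation `I` by nonempty closed real intervals: a `(d+1)`-set is a facet iff the
union of the corresponding intervals is an interval (order-convex).  Then some
relabelling of the vertices satisfies the global interval condition. -/
theorem stmt_3 (d n : ℕ) (F : Finset (Finset (Fin n)))
    (hpure : ∀ s ∈ F, s.card = d + 1)
    (I : Fin n → Set ℝ)
    (hI : ∀ v : Fin n, ∃ a b : ℝ, a ≤ b ∧ I v = Set.Icc a b)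
    (hrep : ∀ s : Finset (Fin n), s.card = d + 1 →
      (s ∈ F ↔ (⋃ v ∈ s, I v).OrdConnected)) :
    ∃ σ : Equiv.Perm (Fin n),
      GlobalIntervalCond (F.image fun s => s.image σ) := by
  choose a b hab hIv using hI
  obtain rfl : I = fun v => Icc (a v) (b v) := funext hIv
  refine ⟨(Tuple.sort a)⁻¹, globalIntervalCond_image_perm _ ?_⟩
  have hmono : ∀ v w, (Tuple.sort a)⁻¹ v ≤ (Tuple.sort a)⁻¹ w → a v ≤ a w := fun v w h => by
    simpa using Tuple.monotone_sort a h
  intro s hs j hj ⟨u, hu, huj⟩ ⟨x, hx, hjx⟩ m hm hmax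
  have hcard : (insert j (s.erase m)).card = d + 1 := by
    rw [Finset.card_insert_of_notMem (fun h => hj (Finset.mem_of_mem_erase h)),
      Finset.card_erase_add_one hm, hpure s hs]
  refine (hrep _ hcard).mpr <| ordConnected_biUnion_Icc_insert_erase (fun i _ => hab i) (hab j)
    hm (fun c hc => hmono c m (hmax c hc)) hu (hmono u j huj)
    (hmono j m (hjx.trans (hmax x hx))) ((hrep s (hpure s hs)).mp hs)
end

section
/- Let $\Delta$ be a pure $d$-dimensional simplicial complex. If $\Delta$ is a unit interval simplicial complex, then $\Delta$ is a proper interval simplicial complex (with the same labelling), and moreover with that labelling, for each facet $F: i_1 \dots i_{d+1}$ and each $j \notin F$ with $i_1 \leq j \leq i_{d+1}$, for every $k \in \{1, \dots, d+1\}$ there exists a facet containing both $j$ and $i_k$. -/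
/-- Unit interval condition (w.r.t. the natural labelling) for the facet family `F` of a
pure `d`-complex on `[n]`: whenever `s : i₁ < … < i_{d+1}` is a facet and
`i₁ ≤ j₁ < … < j_{d+1} ≤ i_{d+1}`, the set `{j₁, …, j_{d+1}}` is a facet. -/
def UnitIntervalCond {n : ℕ} (d : ℕ) (F : Finset (Finset (Fin n))) : Prop :=
  ∀ s ∈ F, ∀ t : Finset (Fin n), t.card = d + 1 →
    (∃ a ∈ s, ∃ b ∈ s, ∀ j ∈ t, a ≤ j ∧ j ≤ b) → t ∈ F

/-- Proper interval condition (w.r.t. the natural labelling): for each facet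
`s : i₁ < … < i_{d+1}` and each `j ∉ s` with `i₁ ≤ j ≤ i_{d+1}`, if some facet contains
both `j` and `i_k`, then `{i₁, …, î_k, …, i_{d+1}, j}` is a facet. -/
def ProperIntervalCond {n : ℕ} (d : ℕ) (F : Finset (Finset (Fin n))) : Prop :=
  ∀ s ∈ F, ∀ j : Fin n, j ∉ s → (∃ a ∈ s, a ≤ j) → (∃ b ∈ s, j ≤ b) →
    ∀ k ∈ s, (∃ H ∈ F, j ∈ H ∧ k ∈ H) → insert j (s.erase k) ∈ F

/-! Exchanging a vertex `m` of a facet `s` for a vertex `j` lying between two vertices of `s`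
keeps the new set inside `[min s, max s]`, so it is a facet by the unit interval condition.
Since `j ∉ s`, the facet `s` has two distinct vertices around `j`; exchanging one other than `k`
gives a facet containing both `j` and `k`. -/

theorem UnitIntervalCond.insert_erase_mem {n d : ℕ} {F : Finset (Finset (Fin n))}
    (hunit : UnitIntervalCond d F) {s : Finset (Fin n)} (hs : s ∈ F) (hcard : s.card = d + 1)
    {a b j m : Fin n} (ha : a ∈ s) (hb : b ∈ s) (haj : a ≤ j) (hjb : j ≤ b) (hj : j ∉ s)
    (hm : m ∈ s) : insert j (s.erase m) ∈ F := by
  have hne : s.Nonempty := ⟨a, ha⟩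
  refine hunit s hs _ ?_ ⟨s.min' hne, s.min'_mem hne, s.max' hne, s.max'_mem hne, ?_⟩
  · rw [Finset.card_insert_of_notMem (fun h => hj (Finset.mem_of_mem_erase h)),
      Finset.card_erase_of_mem hm, hcard]
    omega
  · intro x hx
    rcases Finset.mem_insert.mp hx with rfl | hx
    · exact ⟨(s.min'_le a ha).trans haj, hjb.trans (s.le_max' b hb)⟩
    · have hxs := Finset.mem_of_mem_erase hx
      exact ⟨s.min'_le x hxs, s.le_max' x hxs⟩

theorem Finset.exists_mem_ne_of_le_of_le_of_notMem {α : Type*} [PartialOrder α]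
    {s : Finset α} {a b j : α} (ha : a ∈ s) (hb : b ∈ s) (haj : a ≤ j) (hjb : j ≤ b)
    (hj : j ∉ s) (k : α) : ∃ m ∈ s, m ≠ k := by
  have hab : a ≠ b := by
    rintro rfl
    exact hj (le_antisymm hjb haj ▸ ha)
  by_cases hak : a = k
  · exact ⟨b, hb, hak ▸ hab.symm⟩
  · exact ⟨a, ha, hak⟩

/-- a unit interval complex is proper interval with the same labelling, and
moreover for each facet `s`, each `j ∉ s` between the least and the greatest vertex of
`s`, and every vertex `k` of `s`, there is a facet containing both `j` and `k`. -/
theorem stmt_4 (d n : ℕ) (F : Finset (Finset (Fin n)))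
    (hpure : ∀ s ∈ F, s.card = d + 1)
    (hunit : UnitIntervalCond d F) :
    ProperIntervalCond d F ∧
      ∀ s ∈ F, ∀ j : Fin n, j ∉ s → (∃ a ∈ s, a ≤ j) → (∃ b ∈ s, j ≤ b) →
        ∀ k ∈ s, ∃ H ∈ F, j ∈ H ∧ k ∈ H := by
  refine ⟨fun s hs j hj ⟨a, ha, haj⟩ ⟨b, hb, hjb⟩ k hk _ =>
    hunit.insert_erase_mem hs (hpure s hs) ha hb haj hjb hj hk, ?_⟩
  rintro s hs j hj ⟨a, ha, haj⟩ ⟨b, hb, hjb⟩ k hk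
  obtain ⟨m, hm, hmk⟩ := Finset.exists_mem_ne_of_le_of_le_of_notMem ha hb haj hjb hj k
  exact ⟨insert j (s.erase m), hunit.insert_erase_mem hs (hpure s hs) ha hb haj hjb hj hm,
    Finset.mem_insert_self _ _, Finset.mem_insert_of_mem (Finset.mem_erase.mpr ⟨hmk.symm, hk⟩)⟩
end

section
/- Let $\Delta$ be a pure $d$-dimensional simplicial complex with a labelling $[n]$ on its vertices satisfying: (a) the proper interval condition, and (b) for each facet $F: i_1 \dots i_{d+1}$ and each $j \notin F$ with $i_1 \leq j \leq i_{d+1}$, some facet contains both $j$ and $i_k$ for some $k$. Then $\Delta$ is a unit interval simplicial complex with respect to the same labelling: whenever $\{i_1 < \dots < i_{d+1}\}$ is a facet and $i_1 \leq j_1 < \dots < j_{d+1} \leq i_{d+1}$, the set $\{j_1, \dots, j_{d+1}\}$ is a facet. -/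
/-!
Together, (a) and (b) let any vertex `k` of a facet `s` be exchanged for any `j ∉ s` lying
between two vertices of `s`: (b) yields a vertex `k₀` of `s` sharing a facet with `j`, (a)
exchanges `k₀` for `j`, and the resulting facet contains both `j` and `k`, so (a) applies to `k`.
To reach a facet `t` inside the span of `s`, repeatedly exchange the least vertex of `s \ t` for
the least vertex of `t \ s`. Each vertex of `t` still missing stays between two vertices of the
current facet, because `#(s \ t) = #(t \ s)`, and `#(t \ s)` drops by one each time.
-/

open Finset

section Exchange

variable {α : Type*} [LinearOrder α]

def Straddles (s : Finset α) (x : α) : Prop :=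
  (∃ a ∈ s, a ≤ x) ∧ ∃ b ∈ s, x ≤ b

def ExchangeClosed (F : Finset (Finset α)) : Prop :=
  ∀ s ∈ F, ∀ j ∉ s, Straddles s j → ∀ k ∈ s, insert j (s.erase k) ∈ F

namespace Finset

theorem sdiff_insert_erase_of_notMem {s t : Finset α} {j k : α} (hk : k ∉ t) :
    t \ insert j (s.erase k) = (t \ s).erase j := by
  ext x
  by_cases hx : x = k <;> simp_all [and_left_comm]

theorem card_insert_erase {s : Finset α} {j k : α} (hj : j ∉ s) (hk : k ∈ s) :
    #(insert j (s.erase k)) = #s := by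
  rw [card_insert_of_notMem (fun h => hj (mem_of_mem_erase h)), card_erase_add_one hk]

end Finset

theorem straddles_insert_erase {s t : Finset α} (hcard : #s = #t)
    (hst : ∀ x ∈ t \ s, Straddles s x) {j k : α}
    (hj : j ∈ t \ s) (hj_min : ∀ y ∈ t \ s, j ≤ y)
    (hk : k ∈ s \ t) (hk_min : ∀ y ∈ s \ t, k ≤ y) :
    ∀ x ∈ t \ insert j (s.erase k), Straddles (insert j (s.erase k)) x := by
  intro x hx
  rw [sdiff_insert_erase_of_notMem (mem_sdiff.1 hk).2, mem_erase] at hx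
  obtain ⟨hxj, hx⟩ := hx
  obtain ⟨b, hb, hxb⟩ := (hst x hx).2
  refine ⟨⟨j, mem_insert_self _ _, hj_min x hx⟩, ?_⟩
  by_cases hbk : b = k
  · -- `j ≠ x` both lie in `t \ s`, so `s \ t` has a second element, which exceeds `k = b`
    have htwo : 1 < #(s \ t) := by
      rw [card_sdiff_comm hcard, one_lt_card]
      exact ⟨j, hj, x, hx, Ne.symm hxj⟩
    obtain ⟨k', hk', hk'k⟩ := exists_mem_ne htwo k
    exact ⟨k', mem_insert_of_mem (mem_erase.2 ⟨hk'k, (mem_sdiff.1 hk').1⟩),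
      hxb.trans (hbk ▸ hk_min k' hk')⟩
  · exact ⟨b, mem_insert_of_mem (mem_erase.2 ⟨hbk, hb⟩), hxb⟩

theorem ExchangeClosed.mem {F : Finset (Finset α)} (hF : ExchangeClosed F)
    {s t : Finset α} (hs : s ∈ F) (hcard : #s = #t) (hst : ∀ x ∈ t \ s, Straddles s x) :
    t ∈ F := by
  obtain hts | hne := (t \ s).eq_empty_or_nonempty
  · rwa [eq_of_subset_of_card_le (sdiff_eq_empty_iff_subset.1 hts) hcard.le]
  have hne' : (s \ t).Nonempty := by rwa [← card_pos, card_sdiff_comm hcard, card_pos]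
  have hj := min'_mem _ hne
  have hk := min'_mem _ hne'
  have hs' := hF s hs _ (mem_sdiff.1 hj).2 (hst _ hj) _ (mem_sdiff.1 hk).1
  have hcard' := card_insert_erase (mem_sdiff.1 hj).2 (mem_sdiff.1 hk).1
  exact hF.mem hs' (hcard'.trans hcard)
    (straddles_insert_erase hcard hst hj (fun y hy => min'_le _ y hy) hk
      (fun y hy => min'_le _ y hy))
termination_by #(t \ s)
decreasing_by
  rw [sdiff_insert_erase_of_notMem (mem_sdiff.1 hk).2]
  exact card_erase_lt_of_mem hj

end Exchange

theorem exchangeClosed_of_properIntervalCond {d n : ℕ} {F : Finset (Finset (Fin n))}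
    (hproper : ProperIntervalCond d F)
    (hb : ∀ s ∈ F, ∀ j : Fin n, j ∉ s → (∃ a ∈ s, a ≤ j) → (∃ b ∈ s, j ≤ b) →
      ∃ k ∈ s, ∃ H ∈ F, j ∈ H ∧ k ∈ H) :
    ExchangeClosed F := by
  intro s hs j hj ⟨ha, hb'⟩ k hk
  obtain ⟨k₀, hk₀, H, hH, hjH, hk₀H⟩ := hb s hs j hj ha hb'
  have hs₀ : insert j (s.erase k₀) ∈ F := hproper s hs j hj ha hb' k₀ hk₀ ⟨H, hH, hjH, hk₀H⟩
  refine hproper s hs j hj ha hb' k hk ?_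
  by_cases hkk : k = k₀
  · exact ⟨H, hH, hjH, hkk ▸ hk₀H⟩
  · exact ⟨_, hs₀, mem_insert_self _ _, mem_insert_of_mem (mem_erase.2 ⟨hkk, hk⟩)⟩

/-- if the facet family `F` of a pure `d`-complex satisfies (a) the proper
interval condition and (b) for each facet `s` and each `j ∉ s` between the least and the
greatest vertex of `s` there is a facet containing `j` and some vertex of `s`, then `F`
satisfies the unit interval condition with the same labelling. -/
theorem stmt_5 (d n : ℕ) (F : Finset (Finset (Fin n)))
    (hpure : ∀ s ∈ F, s.card = d + 1)
    (hproper : ProperIntervalCond d F)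
    (hb : ∀ s ∈ F, ∀ j : Fin n, j ∉ s → (∃ a ∈ s, a ≤ j) → (∃ b ∈ s, j ≤ b) →
      ∃ k ∈ s, ∃ H ∈ F, j ∈ H ∧ k ∈ H) :
    UnitIntervalCond d F := by
  intro s hs t ht ⟨a, ha, b, hb', hab⟩
  refine (exchangeClosed_of_properIntervalCond hproper hb).mem hs (by rw [ht, hpure s hs])
    fun x hx => ?_
  obtain ⟨hax, hxb⟩ := hab x (mem_sdiff.1 hx).1
  exact ⟨⟨a, ha, hax⟩, b, hb', hxb⟩
end

section
/- A pure $d$-dimensional simplicial complex $\Delta$ is a proper interval simplicial complex if and only if it is a unit interval simplicial complex. -/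
open Finset


def Cof {n : ℕ} (G : Finset (Finset (Fin n))) (u v : Fin n) : Prop :=
  ∃ H ∈ G, u ∈ H ∧ v ∈ H

def ChainTo {n : ℕ} (G : Finset (Finset (Fin n))) (k : ℕ) (u : Fin n)
    (T : Finset (Fin n)) : Prop :=
  ∃ f : ℕ → Fin n, f 0 = u ∧ f k ∈ T ∧ ∀ i < k, Cof G (f i) (f (i + 1))

namespace IntervalAux

variable {n d : ℕ} {G : Finset (Finset (Fin n))}

theorem cof_symm {u v : Fin n} (h : Cof G u v) : Cof G v u := by
  obtain ⟨H, hH, h1, h2⟩ := h; exact ⟨H, hH, h2, h1⟩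

/-- T1: single swap -/
theorem swap (hG : ProperIntervalCond d G) {T : Finset (Fin n)} (hT : T ∈ G)
    {j a b κ : Fin n} (hj : j ∉ T) (ha : a ∈ T) (haj : a ≤ j) (hb : b ∈ T) (hjb : j ≤ b)
    (hκ : κ ∈ T) (hcof : Cof G j κ) : insert j (T.erase κ) ∈ G :=
  hG T hT j hj ⟨a, ha, haj⟩ ⟨b, hb, hjb⟩ κ hκ hcof

/-- H2: full exchange -/
theorem exch (hG : ProperIntervalCond d G) {T : Finset (Fin n)} (hT : T ∈ G)
    {j a b : Fin n} (hj : j ∉ T) (ha : a ∈ T) (haj : a ≤ j) (hb : b ∈ T) (hjb : j ≤ b)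
    {t' : Fin n} (ht' : t' ∈ T) (hcof : Cof G j t') :
    ∀ κ ∈ T, insert j (T.erase κ) ∈ G := by
  intro κ hκ
  have h1 : insert j (T.erase t') ∈ G := swap hG hT hj ha haj hb hjb ht' hcof
  by_cases hκt : κ = t'
  · rw [hκt]; exact h1
  · refine swap hG hT hj ha haj hb hjb hκ ⟨insert j (T.erase t'), h1, mem_insert_self _ _, ?_⟩
    exact mem_insert_of_mem (mem_erase.2 ⟨hκt, hκ⟩)

/-- Core absorption lemma: a vertex within the span of a facet `T`, connected to `T`
by a chain of facets, lies in a common facet with a vertex of `T`. -/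
theorem lemQ (hG : ProperIntervalCond d G) :
    ∀ k : ℕ, ∀ T ∈ G, ∀ u : Fin n,
      (∃ a ∈ T, a ≤ u) → (∃ b ∈ T, u ≤ b) → ChainTo G k u T →
      ∃ H ∈ G, u ∈ H ∧ ∃ x ∈ H, x ∈ T := by
  intro k
  induction k using Nat.strong_induction_on with
  | _ k IH =>
  intro T hT u hba hbb hchain
  obtain ⟨a, ha, hau⟩ := hba
  obtain ⟨b, hb, hub⟩ := hbb
  obtain ⟨f, hf0, hfk, hstep⟩ := hchain
  by_cases huT : u ∈ T
  · exact ⟨T, hT, huT, u, huT, huT⟩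
  -- u ∉ T, so T has ≥ 2 elements
  have hTne : T.Nonempty := ⟨a, ha⟩
  have hab : a ≠ b := by
    intro h; subst h; exact huT (le_antisymm hau hub ▸ ha)
  have hTcard : 1 < T.card := Finset.one_lt_card.2 ⟨a, ha, b, hb, hab⟩
  have hminmax : T.min' hTne < T.max' hTne := Finset.min'_lt_max'_of_card _ hTcard
  have hmu : T.min' hTne ≤ u := le_trans (min'_le _ _ ha) hau
  have hum : u ≤ T.max' hTne := le_trans hub (le_max' _ _ hb)
  -- small k
  rcases Nat.lt_or_ge k 2 with hk2 | hk2
  · interval_cases k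
    · exact absurd (hf0 ▸ hfk) huT
    · obtain ⟨H, hH, h0, h1⟩ := hstep 0 (by omega)
      exact ⟨H, hH, hf0 ▸ h0, f 1, h1, hfk⟩
  -- k ≥ 2
  -- Step 1: some middle chain vertex inside the span of T
  by_cases hMid : ∃ i, 1 ≤ i ∧ i < k ∧ (∃ a' ∈ T, a' ≤ f i) ∧ (∃ b' ∈ T, f i ≤ b')
  · obtain ⟨i, hi1, hik, hba', hbb'⟩ := hMid
    -- tail chain from f i to T
    have htail : ChainTo G (k - i) (f i) T := by
      refine ⟨fun l => f (l + i), by simp, ?_, ?_⟩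
      · show f (k - i + i) ∈ T
        rw [Nat.sub_add_cancel (le_of_lt hik)]; exact hfk
      · intro l hl
        show Cof G (f (l + i)) (f (l + 1 + i))
        have h := hstep (l + i) (by omega)
        rwa [show l + i + 1 = l + 1 + i by omega] at h
    by_cases hvu : f i = u
    · exact IH (k - i) (by omega) T hT u (hvu ▸ hba') (hvu ▸ hbb') (hvu ▸ htail)
    by_cases hvT : f i ∈ T
    · exact IH i (by omega) T hT u ⟨a, ha, hau⟩ ⟨b, hb, hub⟩
        ⟨f, hf0, hvT, fun l hl => hstep l (by omega)⟩
    -- f i ∉ T : exchange f i into T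
    obtain ⟨B, hB, hvB, x', hx'B, hx'T⟩ :=
      IH (k - i) (by omega) T hT (f i) hba' hbb' htail
    obtain ⟨a', ha', ha'v⟩ := hba'
    obtain ⟨b', hb', hvb'⟩ := hbb'
    have hexch := exch hG hT hvT ha' ha'v hb' hvb' hx'T ⟨B, hB, hvB, hx'B⟩
    rcases lt_or_gt_of_ne (fun h => hvu h.symm) with huv | hvu'
    · -- u < f i : kick max' T
      set T' := insert (f i) (T.erase (T.max' hTne)) with hT'def
      have hT' : T' ∈ G := hexch _ (max'_mem _ _)
      have hminT' : T.min' hTne ∈ T' :=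
        mem_insert_of_mem (mem_erase.2 ⟨ne_of_lt hminmax, min'_mem _ _⟩)
      have hviT' : f i ∈ T' := mem_insert_self _ _
      have huT' : u ∉ T' := by
        intro h
        rcases mem_insert.1 h with h | h
        · exact hvu h.symm
        · exact huT (mem_of_mem_erase h)
      obtain ⟨H, hH, huH, y, hyH, hyT'⟩ :=
        IH i (by omega) T' hT' u ⟨T.min' hTne, hminT', hmu⟩ ⟨f i, hviT', le_of_lt huv⟩
          ⟨f, hf0, hviT', fun l hl => hstep l (by omega)⟩
      rcases mem_insert.1 hyT' with hyv | hyTe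
      · -- y = f i : swap u into T'
      -- T'.erase (f i) = T.erase (max' T)
        have herase : T'.erase (f i) = T.erase (T.max' hTne) := by
          rw [hT'def, erase_insert]
          intro h; exact hvT (mem_of_mem_erase h)
        have hsw := swap hG hT' huT' hminT' hmu hviT' (le_of_lt huv) hviT'
          ⟨H, hH, huH, hyv ▸ hyH⟩
        rw [herase] at hsw
        refine ⟨_, hsw, mem_insert_self _ _, T.min' hTne, ?_, min'_mem _ _⟩
        exact mem_insert_of_mem (mem_erase.2 ⟨ne_of_lt hminmax, min'_mem _ _⟩)
      · exact ⟨H, hH, huH, y, hyH, mem_of_mem_erase hyTe⟩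
    · -- f i < u : kick min' T
      set T' := insert (f i) (T.erase (T.min' hTne)) with hT'def
      have hT' : T' ∈ G := hexch _ (min'_mem _ _)
      have hmaxT' : T.max' hTne ∈ T' :=
        mem_insert_of_mem (mem_erase.2 ⟨(ne_of_lt hminmax).symm, max'_mem _ _⟩)
      have hviT' : f i ∈ T' := mem_insert_self _ _
      have huT' : u ∉ T' := by
        intro h
        rcases mem_insert.1 h with h | h
        · exact hvu h.symm
        · exact huT (mem_of_mem_erase h)
      obtain ⟨H, hH, huH, y, hyH, hyT'⟩ :=
        IH i (by omega) T' hT' u ⟨f i, hviT', le_of_lt hvu'⟩ ⟨T.max' hTne, hmaxT', hum⟩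
          ⟨f, hf0, hviT', fun l hl => hstep l (by omega)⟩
      rcases mem_insert.1 hyT' with hyv | hyTe
      · have herase : T'.erase (f i) = T.erase (T.min' hTne) := by
          rw [hT'def, erase_insert]
          intro h; exact hvT (mem_of_mem_erase h)
        have hsw := swap hG hT' huT' hviT' (le_of_lt hvu') hmaxT' hum hviT'
          ⟨H, hH, huH, hyv ▸ hyH⟩
        rw [herase] at hsw
        refine ⟨_, hsw, mem_insert_self _ _, T.max' hTne, ?_, max'_mem _ _⟩
        exact mem_insert_of_mem (mem_erase.2 ⟨(ne_of_lt hminmax).symm, max'_mem _ _⟩)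
      · exact ⟨H, hH, huH, y, hyH, mem_of_mem_erase hyTe⟩
  -- Step 2: some step facet straddles u
  · by_cases hStr : ∃ i, 1 ≤ i ∧ i < k ∧ ∃ H ∈ G, f i ∈ H ∧ f (i+1) ∈ H ∧
        (∃ a' ∈ H, a' ≤ u) ∧ (∃ b' ∈ H, u ≤ b')
    · obtain ⟨i, hi1, hik, W, hW, hfiW, hfi1W, hWa, hWb⟩ := hStr
      -- helper: any facet containing u and f (i+1) finishes via the tail
      have hfin : ∀ W' ∈ G, u ∈ W' → f (i+1) ∈ W' →
          ∃ H ∈ G, u ∈ H ∧ ∃ x ∈ H, x ∈ T := by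
        intro W' hW' huW' hfW'
        refine IH (k - i) (by omega) T hT u ⟨a, ha, hau⟩ ⟨b, hb, hub⟩
          ⟨fun l => if l = 0 then u else f (l + i), by simp, ?_, ?_⟩
        · have hki : ¬(k - i = 0) := by omega
          simp only [if_neg hki]
          rw [show k - i + i = k by omega]; exact hfk
        · intro l hl
          rcases Nat.eq_zero_or_pos l with h0 | hpos
          · subst h0
            simp only [if_pos rfl, if_neg one_ne_zero]
            refine ⟨W', hW', huW', ?_⟩
            rw [Nat.add_comm 1 i]; exact hfW'
          · have h1 : ¬(l = 0) := by omega
            have h2 : ¬(l + 1 = 0) := by omega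
            simp only [if_neg h1, if_neg h2]
            have h := hstep (l + i) (by omega)
            rwa [show l + i + 1 = l + 1 + i by omega] at h
      by_cases huW : u ∈ W
      · exact hfin W hW huW hfi1W
      · obtain ⟨H', hH', huH', y, hyH', hyW⟩ :=
          IH i (by omega) W hW u hWa hWb ⟨f, hf0, hfiW, fun l hl => hstep l (by omega)⟩
        by_cases hy1 : y = f (i + 1)
        · exact hfin H' hH' huH' (hy1 ▸ hyH')
        · obtain ⟨a', ha', ha'u⟩ := hWa
          obtain ⟨b', hb', hub'⟩ := hWb
          have hsw := swap hG hW huW ha' ha'u hb' hub' hyW ⟨H', hH', huH', hyH'⟩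
          refine hfin _ hsw (mem_insert_self _ _) ?_
          exact mem_insert_of_mem (mem_erase.2 ⟨fun h => hy1 h.symm, hfi1W⟩)
    -- Step 3: all middle vertices on one side
    · have hside : ∀ i, 1 ≤ i → i < k →
          f i < T.min' hTne ∨ T.max' hTne < f i := by
        intro i h1 h2
        by_contra hcon
        push_neg at hcon
        exact hMid ⟨i, h1, h2, ⟨T.min' hTne, min'_mem _ _, hcon.1⟩,
          ⟨T.max' hTne, max'_mem _ _, hcon.2⟩⟩
      obtain ⟨M0, hM0, hf0M, hf1M⟩ := hstep 0 (by omega)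
      rw [hf0] at hf0M
      obtain ⟨Mk, hMk, hfk1M, hfkM⟩ := hstep (k-1) (by omega)
      rw [show k - 1 + 1 = k by omega] at hfkM
      rcases hside 1 (by omega) (by omega) with h1dn | h1up
      · -- DOWN case : all middle vertices < min' T
        set m := T.min' hTne with hmdef
        have hmT : m ∈ T := min'_mem _ _
        have hall : ∀ i, 1 ≤ i → i < k → f i < m := by
          intro i h1i
          induction i, h1i using Nat.le_induction with
          | base => intro _; exact h1dn
          | succ i hi IH2 =>
            intro hik
            have hfi : f i < m := IH2 (by omega)
            rcases hside (i+1) (by omega) hik with hlt | hgt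
            · exact hlt
            · exfalso
              obtain ⟨H, hH, hfiH, hfi1H⟩ := hstep i (by omega)
              exact hStr ⟨i, hi, by omega, H, hH, hfiH, hfi1H,
                ⟨f i, hfiH, le_of_lt (lt_of_lt_of_le hfi hmu)⟩,
                ⟨f (i+1), hfi1H, le_of_lt (lt_of_le_of_lt hum hgt)⟩⟩
        by_cases hmM0 : m ∈ M0
        · exact ⟨M0, hM0, hf0M, m, hmM0, hmT⟩
        have hf1m : f 1 < m := hall 1 (by omega) (by omega)
        have hfk1m : f (k-1) < m := hall (k-1) (by omega) (by omega)
        have hmfk : m ≤ f k := min'_le _ _ hfk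
        have hN : ∃ N ∈ G, m ∈ N ∧ f (k-1) ∈ N := by
          by_cases hmMk : m ∈ Mk
          · exact ⟨Mk, hMk, hmMk, hfk1M⟩
          · refine ⟨insert m (Mk.erase (f k)),
              swap hG hMk hmMk hfk1M (le_of_lt hfk1m) hfkM hmfk hfkM ⟨T, hT, hmT, hfk⟩,
              mem_insert_self _ _, mem_insert_of_mem (mem_erase.2 ⟨?_, hfk1M⟩)⟩
            exact ne_of_lt (lt_of_lt_of_le hfk1m hmfk)
        obtain ⟨N, hNG, hmN, hfk1N⟩ := hN
        have hch : ChainTo G (k-1) m M0 := by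
          refine ⟨fun l => if l = 0 then m else f (k - l), by simp, ?_, ?_⟩
          · have h1 : ¬(k - 1 = 0) := by omega
            simp only [if_neg h1]
            rw [show k - (k-1) = 1 by omega]
            exact hf1M
          · intro l hl
            rcases Nat.eq_zero_or_pos l with h0 | hpos
            · subst h0
              simp only [if_pos rfl, if_neg one_ne_zero]
              exact ⟨N, hNG, hmN, hfk1N⟩
            · have h1 : ¬(l = 0) := by omega
              have h2 : ¬(l + 1 = 0) := by omega
              simp only [if_neg h1, if_neg h2]
              have hs := hstep (k - l - 1) (by omega)
              rw [show k - l - 1 + 1 = k - l by omega] at hs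
              rw [show k - (l+1) = k - l - 1 by omega]
              exact cof_symm hs
        obtain ⟨H, hH, hmH, y, hyH, hyM0⟩ :=
          IH (k-1) (by omega) M0 hM0 m ⟨f 1, hf1M, le_of_lt hf1m⟩ ⟨u, hf0M, hmu⟩ hch
        by_cases hyu : y = u
        · exact ⟨H, hH, hyu ▸ hyH, m, hmH, hmT⟩
        · have hsw := swap hG hM0 hmM0 hf1M (le_of_lt hf1m) hf0M hmu hyM0 ⟨H, hH, hmH, hyH⟩
          exact ⟨_, hsw, mem_insert_of_mem (mem_erase.2 ⟨fun h => hyu h.symm, hf0M⟩),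
            m, mem_insert_self _ _, hmT⟩

      · -- UP case : all middle vertices > max' T
        set c := T.max' hTne with hcdef
        have hcT : c ∈ T := max'_mem _ _
        have hall : ∀ i, 1 ≤ i → i < k → c < f i := by
          intro i h1i
          induction i, h1i using Nat.le_induction with
          | base => intro _; exact h1up
          | succ i hi IH2 =>
            intro hik
            have hfi : c < f i := IH2 (by omega)
            rcases hside (i+1) (by omega) hik with hlt | hgt
            · exfalso
              obtain ⟨H, hH, hfiH, hfi1H⟩ := hstep i (by omega)
              exact hStr ⟨i, hi, by omega, H, hH, hfiH, hfi1H,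
                ⟨f (i+1), hfi1H, le_of_lt (lt_of_lt_of_le hlt hmu)⟩,
                ⟨f i, hfiH, le_of_lt (lt_of_le_of_lt hum hfi)⟩⟩
            · exact hgt
        by_cases hcM0 : c ∈ M0
        · exact ⟨M0, hM0, hf0M, c, hcM0, hcT⟩
        have hf1c : c < f 1 := hall 1 (by omega) (by omega)
        have hfk1c : c < f (k-1) := hall (k-1) (by omega) (by omega)
        have hfkc : f k ≤ c := le_max' _ _ hfk
        have hN : ∃ N ∈ G, c ∈ N ∧ f (k-1) ∈ N := by
          by_cases hcMk : c ∈ Mk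
          · exact ⟨Mk, hMk, hcMk, hfk1M⟩
          · refine ⟨insert c (Mk.erase (f k)),
              swap hG hMk hcMk hfkM hfkc hfk1M (le_of_lt hfk1c) hfkM ⟨T, hT, hcT, hfk⟩,
              mem_insert_self _ _, mem_insert_of_mem (mem_erase.2 ⟨?_, hfk1M⟩)⟩
            exact ne_of_gt (lt_of_le_of_lt hfkc hfk1c)
        obtain ⟨N, hNG, hcN, hfk1N⟩ := hN
        have hch : ChainTo G (k-1) c M0 := by
          refine ⟨fun l => if l = 0 then c else f (k - l), by simp, ?_, ?_⟩
          · have h1 : ¬(k - 1 = 0) := by omega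
            simp only [if_neg h1]
            rw [show k - (k-1) = 1 by omega]
            exact hf1M
          · intro l hl
            rcases Nat.eq_zero_or_pos l with h0 | hpos
            · subst h0
              simp only [if_pos rfl, if_neg one_ne_zero]
              exact ⟨N, hNG, hcN, hfk1N⟩
            · have h1 : ¬(l = 0) := by omega
              have h2 : ¬(l + 1 = 0) := by omega
              simp only [if_neg h1, if_neg h2]
              have hs := hstep (k - l - 1) (by omega)
              rw [show k - l - 1 + 1 = k - l by omega] at hs
              rw [show k - (l+1) = k - l - 1 by omega]
              exact cof_symm hs
        obtain ⟨H, hH, hcH, y, hyH, hyM0⟩ :=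
          IH (k-1) (by omega) M0 hM0 c ⟨u, hf0M, hum⟩ ⟨f 1, hf1M, le_of_lt hf1c⟩ hch
        by_cases hyu : y = u
        · exact ⟨H, hH, hyu ▸ hyH, c, hcH, hcT⟩
        · have hsw := swap hG hM0 hcM0 hf0M hum hf1M (le_of_lt hf1c) hyM0 ⟨H, hH, hcH, hyH⟩
          exact ⟨_, hsw, mem_insert_of_mem (mem_erase.2 ⟨fun h => hyu h.symm, hf0M⟩),
            c, mem_insert_self _ _, hcT⟩


/-- Claim 1: every `d+1`-subset of the span of a facet `T` consisting of vertices
connected to `T` is itself a facet. -/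
theorem claim1 (hG : ProperIntervalCond d G) (hpure : ∀ s ∈ G, s.card = d + 1) :
    ∀ m : ℕ, ∀ T ∈ G, ∀ t : Finset (Fin n), t.card = d + 1 → (t \ T).card = m →
      (∀ v ∈ t, (∃ a ∈ T, a ≤ v) ∧ (∃ b ∈ T, v ≤ b) ∧ ∃ k, ChainTo G k v T) →
      t ∈ G := by
  intro m
  induction m using Nat.strong_induction_on with
  | _ m IH =>
  intro T hT t htcard hsd hvx
  rcases Nat.eq_zero_or_pos m with hm0 | hmpos
  · -- t ⊆ T and equal cards
    have hsub : t ⊆ T := by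
      rw [← sdiff_eq_empty_iff_subset]
      exact card_eq_zero.1 (hm0 ▸ hsd)
    have : t = T := Finset.eq_of_subset_of_card_le hsub (by rw [htcard, hpure T hT])
    rwa [this]
  -- pick u ∈ t \ T and exchange it into T
  have hne : (t \ T).Nonempty := card_pos.1 (hsd ▸ hmpos)
  have hTne : T.Nonempty := card_pos.1 (by rw [hpure T hT]; omega)
  set u := (t \ T).min' hne with hudef
  have humem : u ∈ t \ T := min'_mem _ _
  have hut : u ∈ t := (mem_sdiff.1 humem).1
  have huT : u ∉ T := (mem_sdiff.1 humem).2
  obtain ⟨hua, hub, kk, hchain⟩ := hvx u hut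
  obtain ⟨B, hB, huB, x', hx'B, hx'T⟩ := lemQ hG kk T hT u hua hub hchain
  obtain ⟨a, ha, hau⟩ := hua
  obtain ⟨b, hb, hub'⟩ := hub
  have hexch := exch hG hT huT ha hau hb hub' hx'T ⟨B, hB, huB, hx'B⟩
  have hTt : (T \ t).card = m := by
    rw [card_sdiff_comm (by rw [hpure T hT, htcard])]; exact hsd
  rcases Nat.lt_or_ge m 2 with hm1 | hm2
  · -- m = 1 : t is exactly one exchange away
    have hm1' : m = 1 := by omega
    obtain ⟨κ, hκ⟩ := card_eq_one.1 (hm1' ▸ hTt)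
    have hκT : κ ∈ T := by
      have : κ ∈ T \ t := hκ ▸ mem_singleton_self κ
      exact (mem_sdiff.1 this).1
    have hκt : κ ∉ t := by
      have : κ ∈ T \ t := hκ ▸ mem_singleton_self κ
      exact (mem_sdiff.1 this).2
    obtain ⟨w, hw⟩ := card_eq_one.1 (hm1' ▸ hsd)
    have hwu : w = u := by
      have : u ∈ ({w} : Finset (Fin n)) := hw ▸ humem
      exact (mem_singleton.1 this).symm
    have ht : t = insert u (T.erase κ) := by
      ext x
      constructor
      · intro hx
        by_cases hxu : x = u
        · exact hxu ▸ mem_insert_self _ _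
        · have hxT : x ∈ T := by
            by_contra hxT
            have : x ∈ t \ T := mem_sdiff.2 ⟨hx, hxT⟩
            rw [hw, mem_singleton] at this
            exact hxu (this.trans hwu)
          have hxκ : x ≠ κ := fun h => hκt (h ▸ hx)
          exact mem_insert_of_mem (mem_erase.2 ⟨hxκ, hxT⟩)
      · intro hx
        rcases mem_insert.1 hx with h | h
        · exact h ▸ hut
        · obtain ⟨hxκ, hxT⟩ := mem_erase.1 h
          by_contra hxt
          have : x ∈ T \ t := mem_sdiff.2 ⟨hxT, hxt⟩
          rw [hκ, mem_singleton] at this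
          exact hxκ this
    exact ht ▸ hexch κ hκT
  · -- m ≥ 2 : move u in, kicking some κ ≠ max' T, and recurse
    have hκex : ∃ κ ∈ T \ t, κ ≠ T.max' hTne := by
      by_contra hcon
      push_neg at hcon
      have : T \ t ⊆ {T.max' hTne} := fun x hx => mem_singleton.2 (hcon x hx)
      have := card_le_card this
      rw [hTt, card_singleton] at this
      omega
    obtain ⟨κ, hκTt, hκmax⟩ := hκex
    have hκT : κ ∈ T := (mem_sdiff.1 hκTt).1
    have hκt : κ ∉ t := (mem_sdiff.1 hκTt).2
    set T' := insert u (T.erase κ) with hT'def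
    have hT' : T' ∈ G := hexch κ hκT
    have hmaxT' : T.max' hTne ∈ T' :=
      mem_insert_of_mem (mem_erase.2 ⟨hκmax.symm, max'_mem _ _⟩)
    have huT' : u ∈ T' := mem_insert_self _ _
    -- new difference
    have hdiff : t \ T' = (t \ T).erase u := by
      ext x
      simp only [mem_sdiff, mem_erase, hT'def, mem_insert, mem_erase]
      constructor
      · rintro ⟨hxt, hx2⟩
        push_neg at hx2
        exact ⟨hx2.1, hxt, fun hxT => (hx2.2 (fun h => hκt (h ▸ hxt)) hxT).elim⟩
      · rintro ⟨hxu, hxt, hxT⟩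
        exact ⟨hxt, by push_neg; exact ⟨hxu, fun hne hxT' => hxT hxT'⟩⟩
    have hdcard : (t \ T').card = m - 1 := by
      rw [hdiff, card_erase_of_mem humem, hsd]
    refine IH (m-1) (by omega) T' hT' t htcard hdcard ?_
    intro v hv
    obtain ⟨⟨av, hav, havv⟩, ⟨bv, hbv, hvbv⟩, kv, fv, hfv0, hfvk, hfvstep⟩ := hvx v hv
    refine ⟨?_, ⟨T.max' hTne, hmaxT', le_trans hvbv (le_max' _ _ hbv)⟩,
      kv + 1, fun l => if l ≤ kv then fv l else T.max' hTne, by simp [hfv0], ?_, ?_⟩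
    · -- lower bound for v in T'
      by_cases hvT' : v ∈ T'
      · exact ⟨v, hvT', le_refl v⟩
      · refine ⟨u, huT', ?_⟩
        have hvT : v ∉ T := by
          intro hvT
          by_cases hvκ : v = κ
          · exact hκt (hvκ ▸ hv)
          · exact hvT' (mem_insert_of_mem (mem_erase.2 ⟨hvκ, hvT⟩))
        have hvu : v ≠ u := fun h => hvT' (h ▸ huT')
        exact min'_le _ _ (mem_sdiff.2 ⟨hv, hvT⟩)
    · have h1 : ¬(kv + 1 ≤ kv) := by omega
      simp only [if_neg h1]
      exact hmaxT'
    · intro l hl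
      rcases Nat.lt_or_ge l kv with hlk | hlk
      · have h1 : l ≤ kv := by omega
        have h2 : l + 1 ≤ kv := by omega
        simp only [if_pos h1, if_pos h2]
        exact hfvstep l hlk
      · have hlkv : l = kv := by omega
        subst hlkv
        have h2 : ¬(l + 1 ≤ l) := by omega
        simp only [if_pos (le_refl l), if_neg h2]
        exact ⟨T, hT, hfvk, max'_mem _ _⟩


/-- extend a chain-to-a-facet from a `ReflTransGen` path -/
theorem reach_chain {v w : Fin n} (h : Relation.ReflTransGen (Cof G) v w) :
    ∀ T : Finset (Fin n), w ∈ T → ∃ k, ChainTo G k v T := by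
  induction h with
  | refl => exact fun T hT => ⟨0, fun _ => v, rfl, hT, by omega⟩
  | @tail b c hab hbc IH =>
    intro T hcT
    obtain ⟨H, hH, hbH, hcH⟩ := hbc
    obtain ⟨k, f, hf0, hfk, hsteps⟩ := IH H hbH
    refine ⟨k + 1, fun l => if l ≤ k then f l else c, by simp [hf0], ?_, ?_⟩
    · have h1 : ¬(k + 1 ≤ k) := by omega
      simp only [if_neg h1]
      exact hcT
    · intro l hl
      rcases Nat.lt_or_ge l k with hlk | hlk
      · have h1 : l ≤ k := by omega
        have h2 : l + 1 ≤ k := by omega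
        simp only [if_pos h1, if_pos h2]
        exact hsteps l hlk
      · have hlkv : l = k := by omega
        subst hlkv
        have h2 : ¬(l + 1 ≤ l) := by omega
        simp only [if_pos (le_refl l), if_neg h2]
        exact ⟨H, hH, hfk, hcH⟩

/-- unit interval condition implies proper interval condition (same labelling) -/
theorem proper_of_unit (hU : UnitIntervalCond d G) (hpure : ∀ s ∈ G, s.card = d + 1) :
    ProperIntervalCond d G := by
  intro s hs j hj hja hjb k hk _
  have hsne : s.Nonempty := card_pos.1 (by rw [hpure s hs]; omega)
  refine hU s hs _ ?_ ⟨s.min' hsne, min'_mem _ _, s.max' hsne, max'_mem _ _, ?_⟩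
  · rw [card_insert_of_notMem (fun h => hj (mem_of_mem_erase h)),
      card_erase_of_mem hk, hpure s hs]
    omega
  · intro x hx
    rcases mem_insert.1 hx with rfl | hxe
    · obtain ⟨a, ha, haj⟩ := hja
      obtain ⟨b, hb, hjb'⟩ := hjb
      exact ⟨le_trans (min'_le _ _ ha) haj, le_trans hjb' (le_max' _ _ hb)⟩
    · have hxs := mem_of_mem_erase hxe
      exact ⟨min'_le _ _ hxs, le_max' _ _ hxs⟩

/-- a proper interval family can be relabelled into a unit interval family -/
theorem unit_of_proper (hG : ProperIntervalCond d G) (hpure : ∀ s ∈ G, s.card = d + 1) :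
    ∃ τ : Equiv.Perm (Fin n), UnitIntervalCond d (G.image fun s => s.image τ) := by
  classical
  have hRsymm : ∀ {x y : Fin n}, Relation.ReflTransGen (Cof G) x y →
      Relation.ReflTransGen (Cof G) y x :=
    fun h => by
      haveI : Std.Symm (Cof G) := ⟨fun _ _ hc => cof_symm hc⟩
      exact Relation.ReflTransGen.symmetric.symm _ _ h
  have hRne : ∀ v : Fin n, (Finset.univ.filter
      fun w => Relation.ReflTransGen (Cof G) w v).Nonempty :=
    fun v => ⟨v, mem_filter.2 ⟨mem_univ _, Relation.ReflTransGen.refl⟩⟩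
  set cmin : Fin n → Fin n :=
    fun v => (Finset.univ.filter fun w => Relation.ReflTransGen (Cof G) w v).min' (hRne v)
    with hcmindef
  have hcmin_reach : ∀ v, Relation.ReflTransGen (Cof G) (cmin v) v :=
    fun v => (mem_filter.1 (min'_mem _ (hRne v))).2
  have hcmin_eq : ∀ {x y : Fin n}, Relation.ReflTransGen (Cof G) x y → cmin x = cmin y := by
    intro x y h
    have hset : (Finset.univ.filter fun w => Relation.ReflTransGen (Cof G) w x) =
        (Finset.univ.filter fun w => Relation.ReflTransGen (Cof G) w y) := by
      ext w
      simp only [mem_filter, mem_univ, true_and]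
      exact ⟨fun hw => hw.trans h, fun hw => hw.trans (hRsymm h)⟩
    have hmy : cmin y ∈ Finset.univ.filter
        (fun w => Relation.ReflTransGen (Cof G) w x) := by
      rw [hset]; exact min'_mem _ (hRne y)
    have hmx : cmin x ∈ Finset.univ.filter
        (fun w => Relation.ReflTransGen (Cof G) w y) := by
      rw [← hset]; exact min'_mem _ (hRne x)
    exact le_antisymm (min'_le _ _ hmy) (min'_le _ _ hmx)
  set key : Fin n → Lex (Fin n × Fin n) := fun v => toLex (cmin v, v) with hkeydef
  have hkeyinj : Function.Injective key := by
    intro x y h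
    have := congrArg (fun p : Lex (Fin n × Fin n) => (ofLex p).2) h
    simpa [hkeydef] using this
  set π := Tuple.sort key with hπdef
  have hsm : StrictMono (key ∘ π) :=
    (Tuple.monotone_sort key).strictMono_of_injective (hkeyinj.comp π.injective)
  refine ⟨π.symm, ?_⟩
  intro s' hs' t' htcard hcover
  obtain ⟨s, hs, rfl⟩ := mem_image.1 hs'
  obtain ⟨a', ha', b', hb', hab⟩ := hcover
  obtain ⟨a, ha, rfl⟩ := mem_image.1 ha'
  obtain ⟨b, hb, rfl⟩ := mem_image.1 hb'
  have hkab : ∀ x y : Fin n, π.symm x ≤ π.symm y → key x ≤ key y := by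
    intro x y hxy
    have h := hsm.le_iff_le.2 hxy
    simpa using h
  have hcab : cmin a = cmin b := hcmin_eq (Relation.ReflTransGen.single ⟨s, hs, ha, hb⟩)
  have hmem : t'.image π ∈ G := by
    refine claim1 hG hpure (t'.image π \ s).card s hs _
      (by rw [card_image_of_injective _ π.injective, htcard]) rfl ?_
    intro v hv
    obtain ⟨x, hx, rfl⟩ := mem_image.1 hv
    obtain ⟨hax, hxb⟩ := hab x hx
    have h1 : key a ≤ key (π x) :=
      hkab _ _ (by rw [Equiv.symm_apply_apply]; exact hax)
    have h2 : key (π x) ≤ key b :=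
      hkab _ _ (by rw [Equiv.symm_apply_apply]; exact hxb)
    have h1' := (Prod.Lex.toLex_le_toLex (x := (cmin a, a)) (y := (cmin (π x), π x))).1 h1
    have h2' := (Prod.Lex.toLex_le_toLex (x := (cmin (π x), π x)) (y := (cmin b, b))).1 h2
    dsimp only at h1' h2'
    rcases h1' with hlt1 | ⟨heq1, hle1⟩ <;> rcases h2' with hlt2 | ⟨heq2, hle2⟩
    · have hcon : cmin a < cmin b := lt_trans hlt1 hlt2
      rw [hcab] at hcon; exact absurd hcon (lt_irrefl _)
    · have hcon : cmin a < cmin b := heq2 ▸ hlt1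
      rw [hcab] at hcon; exact absurd hcon (lt_irrefl _)
    · rw [← heq1, hcab] at hlt2; exact absurd hlt2 (lt_irrefl _)
    · have hreach : Relation.ReflTransGen (Cof G) (π x) a := by
        have h3 : Relation.ReflTransGen (Cof G) (cmin (π x)) (π x) := hcmin_reach _
        rw [← heq1] at h3
        exact (hRsymm h3).trans (hcmin_reach a)
      obtain ⟨k, hchain⟩ := reach_chain hreach s ha
      exact ⟨⟨a, ha, hle1⟩, ⟨b, hb, hle2⟩, k, hchain⟩
  refine mem_image.2 ⟨t'.image π, hmem, ?_⟩
  rw [image_image]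
  have : (⇑π.symm ∘ ⇑π) = id := by
    funext z; simp
  rw [this, image_id]

end IntervalAux


/-- a pure `d`-complex is proper interval (some labelling of its vertices
satisfies the proper interval condition) iff it is unit interval (some labelling
satisfies the unit interval condition). -/
theorem stmt_6 (d n : ℕ) (F : Finset (Finset (Fin n)))
    (hpure : ∀ s ∈ F, s.card = d + 1) :
    (∃ σ : Equiv.Perm (Fin n), ProperIntervalCond d (F.image fun s => s.image σ)) ↔
      (∃ σ : Equiv.Perm (Fin n), UnitIntervalCond d (F.image fun s => s.image σ)) := by
  have hpure' : ∀ σ : Equiv.Perm (Fin n), ∀ s ∈ F.image (fun s => s.image σ),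
      s.card = d + 1 := by
    intro σ s hs
    obtain ⟨s₀, hs₀, rfl⟩ := Finset.mem_image.1 hs
    rw [Finset.card_image_of_injective _ σ.injective]
    exact hpure s₀ hs₀
  constructor
  · rintro ⟨σ, hσ⟩
    obtain ⟨τ, hτ⟩ := IntervalAux.unit_of_proper hσ (hpure' σ)
    refine ⟨σ.trans τ, ?_⟩
    have himg : F.image (fun s => s.image (σ.trans τ)) =
        (F.image fun s => s.image σ).image (fun s => s.image τ) := by
      rw [Finset.image_image]
      apply Finset.image_congr
      intro x _
      simp [Finset.image_image, Function.comp_def]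
    rw [himg]
    exact hτ
  · rintro ⟨σ, hσ⟩
    exact ⟨σ, IntervalAux.proper_of_unit hσ (hpure' σ)⟩
end

section
/- Every unit interval simplicial complex of dimension $d \geq 1$ is a poor closed simplicial complex (with the same labelling): for every two distinct facets $F: i_1 \dots i_{d+1}$ and $G: j_1 \dots j_{d+1}$ (vertices listed increasingly) such that $i_k = j_k$ for some $k$, there exists a facet contained in $F \cup G$ other than $F$ and $G$. -/
/-- Poor closed condition (w.r.t. the natural labelling): for any two distinct facets
`s, t` whose increasing vertex lists agree in some position (i.e. there is a common
vertex `x` preceded by equally many vertices in `s` and in `t`), there is a facet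
contained in `s ∪ t` different from both. -/
def PoorClosedCond {n : ℕ} (F : Finset (Finset (Fin n))) : Prop :=
  ∀ s ∈ F, ∀ t ∈ F, s ≠ t →
    (∃ x : Fin n, x ∈ s ∧ x ∈ t ∧
      (s.filter (· < x)).card = (t.filter (· < x)).card) →
    ∃ u ∈ F, u ⊆ s ∪ t ∧ u ≠ s ∧ u ≠ t

/-!
Let `s ≠ t` be facets whose vertex lists agree at a common vertex `x`. If the span
`[min t, max t]` of one facet lies inside the span of the other, say `s`, then any
`(d+1)`-subset of `s ∪ t` containing a vertex of `s \ t` and a vertex of `t \ s` lies in the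
span of `s`, hence is a third facet. Otherwise the two spans are staggered, say
`min t < min s` and `max t < max s`, and splicing the part of `s` below `x` with the part of
`t` from `x` on gives a set inside the span of `s` that misses `min t` and `max s`; it has
`d + 1` elements because `x` occupies the same position in `s` and in `t`.
-/

open Finset

theorem Finset.exists_subset_union_card_eq_ne_ne {α : Type*} [DecidableEq α]
    {s t : Finset α} {x : α} (hxs : x ∈ s) (hxt : x ∈ t) (hst : s ≠ t) (hcard : #s = #t) :
    ∃ u ⊆ s ∪ t, #u = #s ∧ u ≠ s ∧ u ≠ t := by
  obtain ⟨y, hyt, hys⟩ : ∃ y ∈ t, y ∉ s :=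
    not_subset.mp fun h => hst (eq_of_subset_of_card_le h hcard.le).symm
  obtain ⟨z, hzs, hzt⟩ : ∃ z ∈ s, z ∉ t :=
    not_subset.mp fun h => hst (eq_of_subset_of_card_le h hcard.ge)
  have hyz : ({y, z} : Finset α) ⊆ s ∪ t := by
    simp [insert_subset_iff, hyt, hzs]
  have htwo : #({y, z} : Finset α) ≤ #s := by
    rw [card_pair (ne_of_mem_of_not_mem hzs hys).symm,
      ← card_pair (ne_of_mem_of_not_mem hxt hzt)]
    exact card_le_card (by simp [insert_subset_iff, hxs, hzs])
  obtain ⟨u, hyzu, hu, hucard⟩ :=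
    exists_subsuperset_card_eq hyz htwo (card_le_card subset_union_left)
  exact ⟨u, hu, hucard, fun h => hys (h ▸ hyzu (by simp)),
    fun h => hzt (h ▸ hyzu (by simp))⟩

theorem Finset.card_filter_lt_union_filter_not_lt {α : Type*} [LinearOrder α]
    {s t : Finset α} {x : α} (hx : #(s.filter (· < x)) = #(t.filter (· < x))) :
    #(s.filter (· < x) ∪ t.filter (¬ · < x)) = #t := by
  have hdisj : Disjoint (s.filter (· < x)) (t.filter (¬ · < x)) :=
    disjoint_left.mpr fun _ hs ht => (mem_filter.mp ht).2 (mem_filter.mp hs).2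
  rw [card_union_of_disjoint hdisj, hx, card_filter_add_card_filter_not]

namespace UnitIntervalCond

variable {n d : ℕ} {F : Finset (Finset (Fin n))} {s t : Finset (Fin n)} {x : Fin n}

theorem mem_of_forall_min'_le_le_max' (hunit : UnitIntervalCond d F) (hs : s ∈ F)
    (hsne : s.Nonempty)
    {u : Finset (Fin n)} (hu : #u = d + 1) (hspan : ∀ j ∈ u, s.min' hsne ≤ j ∧ j ≤ s.max' hsne) :
    u ∈ F :=
  hunit s hs u hu ⟨_, s.min'_mem hsne, _, s.max'_mem hsne, hspan⟩

theorem exists_facet_of_nested (hpure : ∀ s ∈ F, #s = d + 1) (hunit : UnitIntervalCond d F)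
    (hs : s ∈ F) (ht : t ∈ F) (hst : s ≠ t) (hxs : x ∈ s) (hxt : x ∈ t)
    (hmin : s.min' ⟨x, hxs⟩ ≤ t.min' ⟨x, hxt⟩) (hmax : t.max' ⟨x, hxt⟩ ≤ s.max' ⟨x, hxs⟩) :
    ∃ u ∈ F, u ⊆ s ∪ t ∧ u ≠ s ∧ u ≠ t := by
  obtain ⟨u, hu, hucard, hus, hut⟩ :=
    exists_subset_union_card_eq_ne_ne hxs hxt hst ((hpure s hs).trans (hpure t ht).symm)
  refine ⟨u, hunit.mem_of_forall_min'_le_le_max' hs ⟨x, hxs⟩ (hucard.trans (hpure s hs)) ?_,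
    hu, hus, hut⟩
  intro j hj
  rcases mem_union.mp (hu hj) with hj | hj
  · exact ⟨s.min'_le j hj, s.le_max' j hj⟩
  · exact ⟨hmin.trans (t.min'_le j hj), (t.le_max' j hj).trans hmax⟩

theorem exists_facet_of_staggered (hpure : ∀ s ∈ F, #s = d + 1) (hunit : UnitIntervalCond d F)
    (hs : s ∈ F) (ht : t ∈ F) (hxs : x ∈ s) (hxt : x ∈ t)
    (hx : #(s.filter (· < x)) = #(t.filter (· < x)))
    (hmin : t.min' ⟨x, hxt⟩ < s.min' ⟨x, hxs⟩) (hmax : t.max' ⟨x, hxt⟩ < s.max' ⟨x, hxs⟩) :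
    ∃ u ∈ F, u ⊆ s ∪ t ∧ u ≠ s ∧ u ≠ t := by
  set u := s.filter (· < x) ∪ t.filter (¬ · < x)
  have hmem : ∀ j, j ∈ u ↔ j ∈ s ∧ j < x ∨ j ∈ t ∧ x ≤ j := by
    simp [u]
  have hucard : #u = d + 1 := (card_filter_lt_union_filter_not_lt hx).trans (hpure t ht)
  refine ⟨u, hunit.mem_of_forall_min'_le_le_max' hs ⟨x, hxs⟩ hucard ?_, ?_, ?_, ?_⟩
  · intro j hj
    rcases (hmem j).mp hj with ⟨hj, -⟩ | ⟨hj, hxj⟩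
    · exact ⟨s.min'_le j hj, s.le_max' j hj⟩
    · exact ⟨(s.min'_le x hxs).trans hxj, (t.le_max' j hj).trans hmax.le⟩
  · intro j hj
    rcases (hmem j).mp hj with ⟨hj, -⟩ | ⟨hj, -⟩
    · exact mem_union_left t hj
    · exact mem_union_right s hj
  · intro h
    have hmax_mem : s.max' ⟨x, hxs⟩ ∈ u := by rw [h]; exact s.max'_mem _
    rcases (hmem _).mp hmax_mem with ⟨-, hlt⟩ | ⟨hmt, -⟩
    · exact (s.le_max' x hxs).not_gt hlt
    · exact (t.le_max' _ hmt).not_gt hmax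
  · intro h
    have hmin_mem : t.min' ⟨x, hxt⟩ ∈ u := by rw [h]; exact t.min'_mem _
    rcases (hmem _).mp hmin_mem with ⟨hms, -⟩ | ⟨-, hle⟩
    · exact (s.min'_le _ hms).not_gt hmin
    · exact (hle.trans_lt (hmin.trans_le (s.min'_le x hxs))).false

end UnitIntervalCond

theorem stmt_7_general (d n : ℕ) (F : Finset (Finset (Fin n)))
    (hpure : ∀ s ∈ F, s.card = d + 1)
    (hunit : UnitIntervalCond d F) :
    PoorClosedCond F := by
  intro s hs t ht hst ⟨x, hxs, hxt, hx⟩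
  wlog hmin : t.min' ⟨x, hxt⟩ ≤ s.min' ⟨x, hxs⟩ generalizing s t
  · obtain ⟨u, hu, hust, hus, hut⟩ :=
      this t ht s hs hst.symm hxt hxs hx.symm (le_of_not_ge hmin)
    exact ⟨u, hu, union_comm s t ▸ hust, hut, hus⟩
  rcases le_or_gt (s.max' ⟨x, hxs⟩) (t.max' ⟨x, hxt⟩) with hmax | hmax
  · obtain ⟨u, hu, hust, hus, hut⟩ :=
      hunit.exists_facet_of_nested hpure ht hs hst.symm hxt hxs hmin hmax
    exact ⟨u, hu, union_comm s t ▸ hust, hut, hus⟩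
  rcases hmin.eq_or_lt with hmin | hmin
  · exact hunit.exists_facet_of_nested hpure hs ht hst hxs hxt hmin.ge hmax.le
  · exact hunit.exists_facet_of_staggered hpure hs ht hxs hxt hx hmin hmax

/-- every unit interval complex of dimension `d ≥ 1` is poor closed with
the same labelling. -/
theorem stmt_7 (d n : ℕ) (hd : 1 ≤ d) (F : Finset (Finset (Fin n)))
    (hpure : ∀ s ∈ F, s.card = d + 1)
    (hunit : UnitIntervalCond d F) :
    PoorClosedCond F :=
  stmt_7_general d n F hpure hunit
end

section
/- Let $G$ be a finite simple graph with no isolated vertex, and suppose $G$ is $d$-strong interval with interval representation $\{I_i\}_{i \in [n]}$ for some $d \geq 1$. Then $G$ is $(d+1)$-strong interval with the same interval representation: for all $1 \leq i_1 < \dots < i_{d+2} \leq n$, the induced subgraph $G[i_1, \dots, i_{d+2}]$ is connected if and only if $\bigcup_{\ell=1}^{d+2} I_{i_\ell}$ is an interval. -/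
open SimpleGraph Set

/-- A walk in `G.induce A` whose support lies in `B` gives reachability in `G.induce B`. -/
lemma walk_avoid {V : Type*} {G : SimpleGraph V} {A B : Set V} {x y : ↥A}
    (p : (G.induce A).Walk x y) (hsupp : ∀ z ∈ p.support, (z : V) ∈ B)
    (hx : (x : V) ∈ B) (hy : (y : V) ∈ B) :
    (G.induce B).Reachable ⟨x, hx⟩ ⟨y, hy⟩ := by
  induction p with
  | nil => exact Reachable.refl _
  | @cons u c w h p ih =>
    have hc : (c : V) ∈ B := hsupp c (by simp)
    have hadj : (G.induce B).Adj ⟨u, hx⟩ ⟨c, hc⟩ := h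
    exact hadj.reachable.trans (ih (fun z hz => hsupp z (by simp [hz])) hc hy)

/-- In a connected induced subgraph with at least two vertices, there is a non-cut
vertex distinct from any prescribed vertex `r`. -/
lemma exists_noncut {n : ℕ} (G : SimpleGraph (Fin n)) (s : Finset (Fin n))
    (hconn : (G.induce (↑s : Set (Fin n))).Connected)
    (r : Fin n) (hr : r ∈ s) (x0 : Fin n) (hx0 : x0 ∈ s) (hx0r : x0 ≠ r) :
    ∃ u ∈ s, u ≠ r ∧ (G.induce (↑(s.erase u) : Set (Fin n))).Connected := by
  set H := G.induce (↑s : Set (Fin n)) with hH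
  have hne : (Finset.univ : Finset ↥(↑s : Set (Fin n))).Nonempty := ⟨⟨r, hr⟩, Finset.mem_univ _⟩
  obtain ⟨u, -, hu⟩ := Finset.exists_max_image Finset.univ (fun z => H.dist ⟨r, hr⟩ z) hne
  have hdx0 : 0 < H.dist ⟨r, hr⟩ ⟨x0, hx0⟩ :=
    hconn.pos_dist_of_ne (by simp [Subtype.ext_iff, eq_comm]; exact fun h => hx0r h.symm)
  have hdu : 0 < H.dist ⟨r, hr⟩ u := lt_of_lt_of_le hdx0 (hu _ (Finset.mem_univ _))
  have hur : (u : Fin n) ≠ r := by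
    intro h
    have : u = ⟨r, hr⟩ := Subtype.ext h
    rw [this] at hdu
    simp [SimpleGraph.dist_self] at hdu
  refine ⟨u, u.2, hur, ?_⟩
  have hrB : r ∈ (↑(s.erase u.1) : Set (Fin n)) := by simp [Finset.mem_erase, Ne, hur.symm, hr]
  have key : ∀ x : ↥(↑(s.erase u.1) : Set (Fin n)),
      (G.induce (↑(s.erase u.1) : Set (Fin n))).Reachable x ⟨r, hrB⟩ := by
    rintro ⟨x, hx⟩
    have hx' : x ∈ s.erase u.1 := by simp only [Finset.coe_erase, Set.mem_diff, Set.mem_singleton_iff, Finset.mem_coe] at hx; exact Finset.mem_erase.mpr ⟨hx.2, hx.1⟩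
    have hxs : x ∈ s := Finset.mem_of_mem_erase hx'
    have hxu : x ≠ u.1 := Finset.ne_of_mem_erase hx'
    obtain ⟨p, hp⟩ := hconn.exists_walk_length_eq_dist ⟨r, hr⟩ ⟨x, hxs⟩
    have husup : u ∉ p.support := by
      intro hus
      have h1 : H.dist ⟨r, hr⟩ u ≤ (p.takeUntil u hus).length := dist_le _
      have h2 : 1 ≤ (p.dropUntil u hus).length := by
        rcases Nat.eq_zero_or_pos (p.dropUntil u hus).length with h | h
        · exact absurd (Walk.eq_of_length_eq_zero h) (by simp [Subtype.ext_iff, hxu.symm])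
        · exact h
      have h3 := congr_arg Walk.length (p.take_spec hus)
      rw [Walk.length_append] at h3
      have h4 : H.dist ⟨r, hr⟩ ⟨x, hxs⟩ ≤ H.dist ⟨r, hr⟩ u := hu _ (Finset.mem_univ _)
      omega
    have hsupp : ∀ z ∈ p.support, (z : Fin n) ∈ (↑(s.erase u.1) : Set (Fin n)) := by
      intro z hz
      have hzu : z ≠ u := fun h => husup (h ▸ hz)
      have : (z : Fin n) ≠ u.1 := fun h => hzu (Subtype.ext h)
      simp [Finset.mem_erase, this, z.2]
    exact (walk_avoid p hsupp (hsupp _ p.start_mem_support) (hsupp _ p.end_mem_support)).symm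
  exact (SimpleGraph.connected_iff _).mpr ⟨fun x y => (key x).trans (key y).symm, ⟨⟨r, hrB⟩⟩⟩
open Set

lemma ordconn_union {A B : Set ℝ} (hA : A.OrdConnected) (hB : B.OrdConnected)
    (p : ℝ) (hpA : p ∈ A) (hpB : p ∈ B) : (A ∪ B).OrdConnected := by
  constructor
  rintro x (hx | hx) y (hy | hy) z hz
  · exact Or.inl (hA.out hx hy hz)
  · rcases le_total z p with h | h
    · exact Or.inl (hA.out hx hpA ⟨hz.1, h⟩)
    · exact Or.inr (hB.out hpB hy ⟨h, hz.2⟩)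
  · rcases le_total z p with h | h
    · exact Or.inr (hB.out hx hpB ⟨hz.1, h⟩)
    · exact Or.inl (hA.out hpA hy ⟨h, hz.2⟩)
  · exact Or.inr (hB.out hx hy hz)

lemma erase_ordconn {n : ℕ} (I : Fin n → Set ℝ) (s : Finset (Fin n)) (v : Fin n) (_ : v ∈ s)
    (hU : (⋃ w ∈ s, I w).OrdConnected)
    (h : ∀ y ∈ I v, ∀ x ∈ (⋃ w ∈ s.erase v, I w), ∀ z ∈ (⋃ w ∈ s.erase v, I w),
        x ≤ y → y ≤ z → y ∈ ⋃ w ∈ s.erase v, I w) :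
    (⋃ w ∈ s.erase v, I w).OrdConnected := by
  have hsub : (⋃ w ∈ s.erase v, I w) ⊆ ⋃ w ∈ s, I w := by
    apply Set.iUnion₂_subset
    intro w hw
    exact Set.subset_biUnion_of_mem (Finset.mem_of_mem_erase hw)
  constructor
  intro x hx z hz y hy
  have hyU : y ∈ ⋃ w ∈ s, I w := hU.out (hsub hx) (hsub hz) hy
  simp only [Set.mem_iUnion, exists_prop] at hyU
  obtain ⟨w, hw, hyw⟩ := hyU
  by_cases hwv : w = v
  · exact h y (hwv ▸ hyw) x hx z hz hy.1 hy.2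
  · exact Set.mem_biUnion (Finset.mem_erase.mpr ⟨hwv, hw⟩) hyw

lemma erase_max {n : ℕ} (I : Fin n → Set ℝ) (a b : Fin n → ℝ)
    (hIv : ∀ v, I v = Set.Icc (a v) (b v))
    (s : Finset (Fin n)) (v : Fin n) (hv : v ∈ s) (hmax : ∀ w ∈ s, a w ≤ a v)
    (hU : (⋃ w ∈ s, I w).OrdConnected) :
    (⋃ w ∈ s.erase v, I w).OrdConnected := by
  apply erase_ordconn I s v hv hU
  intro y hy x _ z hz _ hyz
  simp only [Set.mem_iUnion, exists_prop] at hz ⊢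
  obtain ⟨w, hw, hzw⟩ := hz
  refine ⟨w, hw, ?_⟩
  rw [hIv] at hy hzw ⊢
  exact ⟨le_trans (hmax w (Finset.mem_of_mem_erase hw)) hy.1, le_trans hyz hzw.2⟩

lemma erase_min {n : ℕ} (I : Fin n → Set ℝ) (a b : Fin n → ℝ)
    (hIv : ∀ v, I v = Set.Icc (a v) (b v))
    (s : Finset (Fin n)) (v : Fin n) (hv : v ∈ s) (hmin : ∀ w ∈ s, b v ≤ b w)
    (hU : (⋃ w ∈ s, I w).OrdConnected) :
    (⋃ w ∈ s.erase v, I w).OrdConnected := by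
  apply erase_ordconn I s v hv hU
  intro y hy x hx z _ hxy _
  simp only [Set.mem_iUnion, exists_prop] at hx ⊢
  obtain ⟨w, hw, hxw⟩ := hx
  refine ⟨w, hw, ?_⟩
  rw [hIv] at hy hxw ⊢
  exact ⟨le_trans hxw.1 hxy, le_trans hy.2 (hmin w (Finset.mem_of_mem_erase hw))⟩

/-- if a graph `G` on `[n]` without isolated vertices is `d`-strong
interval (`d ≥ 1`) with interval representation `I` — i.e. a `(d+1)`-set of vertices
induces a connected subgraph iff the union of the corresponding closed real intervals is
an interval (order-convex) — then `G` is `(d+1)`-strong interval with the same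
representation. -/
theorem stmt_8 (d n : ℕ) (hd : 1 ≤ d) (G : SimpleGraph (Fin n))
    (hiso : ∀ v : Fin n, ∃ w, G.Adj v w)
    (I : Fin n → Set ℝ)
    (hI : ∀ v : Fin n, ∃ a b : ℝ, a ≤ b ∧ I v = Set.Icc a b)
    (hrep : ∀ s : Finset (Fin n), s.card = d + 1 →
      ((G.induce (↑s : Set (Fin n))).Connected ↔ (⋃ v ∈ s, I v).OrdConnected)) :
    ∀ s : Finset (Fin n), s.card = d + 2 →
      ((G.induce (↑s : Set (Fin n))).Connected ↔ (⋃ v ∈ s, I v).OrdConnected) := by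
  choose a b hab hIcc using hI
  intro s hcard
  have hsne : s.Nonempty := Finset.card_pos.mp (by omega)
  constructor
  · -- connected → ordConnected
    intro hconn
    obtain ⟨r, hr⟩ := hsne
    obtain ⟨x0, hx0, hx0r⟩ := Finset.exists_mem_ne (show 1 < s.card by omega) r
    obtain ⟨u1, hu1s, hu1r, hconn1⟩ := exists_noncut G s hconn r hr x0 hx0 hx0r
    obtain ⟨x1, hx1, hx1u⟩ := Finset.exists_mem_ne (show 1 < s.card by omega) u1
    obtain ⟨u2, hu2s, hu2u1, hconn2⟩ := exists_noncut G s hconn u1 hu1s x1 hx1 hx1u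
    have hcard1 : (s.erase u1).card = d + 1 := by
      rw [Finset.card_erase_of_mem hu1s]; omega
    have hcard2 : (s.erase u2).card = d + 1 := by
      rw [Finset.card_erase_of_mem hu2s]; omega
    have hA := (hrep _ hcard1).mp hconn1
    have hB := (hrep _ hcard2).mp hconn2
    obtain ⟨w, hw⟩ : ((s.erase u1).erase u2).Nonempty := by
      apply Finset.card_pos.mp
      rw [Finset.card_erase_of_mem (Finset.mem_erase.mpr ⟨hu2u1, hu2s⟩), hcard1]
      omega
    have hw1 : w ∈ s.erase u1 := Finset.mem_of_mem_erase hw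
    have hw2 : w ∈ s.erase u2 := Finset.mem_erase.mpr
      ⟨Finset.ne_of_mem_erase hw, Finset.mem_of_mem_erase hw1⟩
    have hp : a w ∈ I w := by rw [hIcc]; exact ⟨le_refl _, hab w⟩
    have hUeq : (⋃ v ∈ s, I v) = (⋃ v ∈ s.erase u1, I v) ∪ (⋃ v ∈ s.erase u2, I v) := by
      ext y
      simp only [Set.mem_union, Set.mem_iUnion, exists_prop, Finset.mem_erase]
      constructor
      · rintro ⟨v, hv, hyv⟩
        rcases eq_or_ne v u1 with h | h
        · refine Or.inr ⟨v, ⟨?_, hv⟩, hyv⟩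
          rintro rfl; exact hu2u1 h
        · exact Or.inl ⟨v, ⟨h, hv⟩, hyv⟩
      · rintro (⟨v, ⟨_, hv⟩, hyv⟩ | ⟨v, ⟨_, hv⟩, hyv⟩) <;> exact ⟨v, hv, hyv⟩
    rw [hUeq]
    exact ordconn_union hA hB (a w) (Set.mem_biUnion hw1 hp) (Set.mem_biUnion hw2 hp)
  · -- ordConnected → connected
    intro hU
    obtain ⟨v, hv, hvmax⟩ := Finset.exists_max_image s a hsne
    have main : ∃ u1 ∈ s, ∃ u2 ∈ s, u1 ≠ u2 ∧
        (⋃ w ∈ s.erase u1, I w).OrdConnected ∧ (⋃ w ∈ s.erase u2, I w).OrdConnected := by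
      by_cases hcase : ∀ w ∈ s, b v ≤ b w
      · -- I v is contained in every I w
        have hnest : ∀ w ∈ s, I v ⊆ I w := fun w hw => by
          rw [hIcc, hIcc]
          exact Set.Icc_subset_Icc (hvmax w hw) (hcase w hw)
        obtain ⟨v', hv', hv'max⟩ := Finset.exists_max_image (s.erase v) a
          (Finset.card_pos.mp (by rw [Finset.card_erase_of_mem hv]; omega))
        have hv's : v' ∈ s := Finset.mem_of_mem_erase hv'
        have hv'v : v' ≠ v := Finset.ne_of_mem_erase hv'
        refine ⟨v, hv, v', hv's, hv'v.symm, ?_, ?_⟩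
        · -- removing v : its interval is redundant
          apply erase_ordconn I s v hv hU
          intro y hy x _ z _ _ _
          exact Set.mem_biUnion hv' (hnest v' hv's hy)
        · -- removing v'
          apply erase_ordconn I s v' hv's hU
          intro y hy x _ z hz _ hyz
          simp only [Set.mem_iUnion, exists_prop] at hz ⊢
          obtain ⟨w, hw, hzw⟩ := hz
          have hws : w ∈ s := Finset.mem_of_mem_erase hw
          rcases eq_or_ne w v with hwv | hwv
          · -- z ∈ I v ⊆ I w'' for a third vertex w''
            obtain ⟨w'', hw''⟩ : ((s.erase v).erase v').Nonempty := by
              apply Finset.card_pos.mp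
              rw [Finset.card_erase_of_mem hv', Finset.card_erase_of_mem hv]
              omega
            have hw''v : w'' ∈ s.erase v := Finset.mem_of_mem_erase hw''
            have hw''s : w'' ∈ s := Finset.mem_of_mem_erase hw''v
            have hz'' : z ∈ I w'' := hnest w'' hw''s (hwv ▸ hzw)
            refine ⟨w'', Finset.mem_erase.mpr ⟨Finset.ne_of_mem_erase hw'', hw''s⟩, ?_⟩
            rw [hIcc] at hz'' hy ⊢
            exact ⟨le_trans (hv'max w'' hw''v) hy.1, le_trans hyz hz''.2⟩
          · have hwev : w ∈ s.erase v := Finset.mem_erase.mpr ⟨hwv, hws⟩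
            refine ⟨w, hw, ?_⟩
            rw [hIcc] at hy hzw ⊢
            exact ⟨le_trans (hv'max w hwev) hy.1, le_trans hyz hzw.2⟩
      · -- there is a vertex u ≠ v with minimal right endpoint
        push_neg at hcase
        obtain ⟨w0, hw0, hlt⟩ := hcase
        obtain ⟨u, hu, humin⟩ := Finset.exists_min_image s b hsne
        have huv : u ≠ v := by
          intro h
          exact absurd (humin w0 hw0) (by rw [h]; exact not_le.mpr hlt)
        exact ⟨v, hv, u, hu, fun h => huv h.symm,
          erase_max I a b hIcc s v hv hvmax hU,
          erase_min I a b hIcc s u hu humin hU⟩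
    obtain ⟨u1, hu1, u2, hu2, hne12, hA, hB⟩ := main
    have hcard1 : (s.erase u1).card = d + 1 := by
      rw [Finset.card_erase_of_mem hu1]; omega
    have hcard2 : (s.erase u2).card = d + 1 := by
      rw [Finset.card_erase_of_mem hu2]; omega
    have hconn1 := (hrep _ hcard1).mpr hA
    have hconn2 := (hrep _ hcard2).mpr hB
    have hseq : (↑s : Set (Fin n)) = ↑(s.erase u1) ∪ ↑(s.erase u2) := by
      apply Set.Subset.antisymm
      · intro z hz
        rcases eq_or_ne z u1 with rfl | h
        · exact Or.inr (by simp only [Finset.coe_erase, Set.mem_diff,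
            Set.mem_singleton_iff]; exact ⟨hz, hne12⟩)
        · exact Or.inl (by simp only [Finset.coe_erase, Set.mem_diff,
            Set.mem_singleton_iff]; exact ⟨hz, h⟩)
      · exact Set.union_subset (Finset.coe_subset.mpr (Finset.erase_subset _ _))
          (Finset.coe_subset.mpr (Finset.erase_subset _ _))
    rw [hseq]
    obtain ⟨w, hw⟩ : ((s.erase u1).erase u2).Nonempty := by
      apply Finset.card_pos.mp
      rw [Finset.card_erase_of_mem (Finset.mem_erase.mpr ⟨fun h => hne12 h.symm, hu2⟩), hcard1]
      omega
    have hw1 : w ∈ s.erase u1 := Finset.mem_of_mem_erase hw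
    have hw2 : w ∈ s.erase u2 := Finset.mem_erase.mpr
      ⟨Finset.ne_of_mem_erase hw, Finset.mem_of_mem_erase hw1⟩
    exact SimpleGraph.induce_union_connected hconn1.preconnected hconn2.preconnected
      ⟨w, by simp only [Set.mem_inter_iff, Finset.mem_coe]; exact ⟨hw1, hw2⟩⟩
end

section
/- If a finite simple graph $G$ is $d$-global interval for some $d \geq 1$, then $G$ has no induced cycle of length $\geq d+3$. -/
/-- `G` is `d`-global interval w.r.t. the natural labelling of `Fin n`: for every
`(d+1)`-set `s : i₁ < … < i_{d+1}` inducing a connected subgraph and every `j ∉ s` with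
`i₁ ≤ j ≤ i_{d+1}`, replacing the largest vertex of `s` by `j` again induces a connected
subgraph. -/
def GlobalIntervalCondG {n : ℕ} (d : ℕ) (G : SimpleGraph (Fin n)) : Prop :=
  ∀ s : Finset (Fin n), s.card = d + 1 → (G.induce (↑s : Set (Fin n))).Connected →
    ∀ j : Fin n, j ∉ s → (∃ a ∈ s, a ≤ j) → (∃ b ∈ s, j ≤ b) →
      ∀ b ∈ s, (∀ c ∈ s, c ≤ b) →
        (G.induce (↑(insert j (s.erase b)) : Set (Fin n))).Connected

open SimpleGraph Finset

lemma mod_helper {k a b : ℕ} (hk : 2 ≤ k) (ha : a < k) (hb : b < k) :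
    (k - b + a) % k = 1 ↔ (a = b + 1 ∨ (a = 0 ∧ b + 1 = k)) := by
  rcases Nat.lt_or_ge (k - b + a) k with h | h
  · rw [Nat.mod_eq_of_lt h]; omega
  · rw [Nat.mod_eq_sub_mod h, Nat.mod_eq_of_lt (by omega)]; omega

lemma cyc_nat_adj {k : ℕ} (hk : 2 ≤ k) (u v : Fin k) :
    (SimpleGraph.cycleGraph k).Adj u v ↔
      (u.val = v.val + 1 ∨ v.val = u.val + 1 ∨
       (u.val = 0 ∧ v.val + 1 = k) ∨ (v.val = 0 ∧ u.val + 1 = k)) := by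
  have hu := u.isLt
  have hv := v.isLt
  rw [SimpleGraph.cycleGraph_adj', Fin.sub_def, Fin.sub_def]
  simp only [Fin.val_mk]
  rw [mod_helper hk hu hv, mod_helper hk hv hu]
  omega

lemma cycle_contra {n d k : ℕ} {G : SimpleGraph (Fin n)} [NeZero k]
    (hcond : GlobalIntervalCondG d G) (hd : 1 ≤ d) (hk : d + 3 ≤ k)
    (w : Fin k → Fin n) (hinj : Function.Injective w)
    (hadj : ∀ i j, G.Adj (w i) (w j) ↔ (SimpleGraph.cycleGraph k).Adj i j)
    (hmax : ∀ i, w i ≤ w 0) (hrev : w 1 ≤ w (-1)) : False := by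
  have hk2 : 2 ≤ k := by omega
  have hdk : d + 1 ≤ k := by omega
  have hval0 : (0 : Fin k).val = 0 := rfl
  have hval1 : (1 : Fin k).val = 1 := by
    rw [Fin.val_one', Nat.mod_eq_of_lt (by omega)]
  have hvalm : (-1 : Fin k).val = k - 1 := by
    rw [show (-1 : Fin k) = 0 - 1 from by abel, Fin.sub_def]
    simp only [Fin.val_mk, Fin.val_zero, Fin.val_one']
    rw [Nat.mod_eq_of_lt (by omega : 1 < k), Nat.add_zero, Nat.mod_eq_of_lt (by omega)]

  -- the arc s
  set f : Fin (d+1) → Fin n := fun i => w (Fin.castLE hdk i) with hf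
  have hfinj : Function.Injective f := hinj.comp (Fin.castLE_injective hdk)
  set s : Finset (Fin n) := Finset.image f Finset.univ with hs
  have hcard : s.card = d + 1 := by
    rw [hs, Finset.card_image_of_injective _ hfinj, Finset.card_univ, Fintype.card_fin]
  have hmem : ∀ i : Fin (d+1), f i ∈ s := fun i => Finset.mem_image_of_mem _ (Finset.mem_univ i)
  have hcast0 : Fin.castLE hdk 0 = (0 : Fin k) := by
    apply Fin.ext; simp [Fin.val_zero]
  have hcast1 : Fin.castLE hdk 1 = (1 : Fin k) := by
    apply Fin.ext
    simp only [Fin.coe_castLE, hval1, Fin.val_one']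
    rw [Nat.mod_eq_of_lt (by omega)]
  have h0 : w 0 ∈ s := by rw [← hcast0]; exact hmem 0
  have h1 : w 1 ∈ s := by rw [← hcast1]; exact hmem 1
  have hsmax : ∀ c ∈ s, c ≤ w 0 := by
    intro c hc
    obtain ⟨i, -, rfl⟩ := Finset.mem_image.1 hc
    exact hmax _
  -- connectivity of the arc
  have vertmem : ∀ i : Fin (d+1), f i ∈ (↑s : Set (Fin n)) := fun i => Finset.mem_coe.2 (hmem i)
  set vert : Fin (d+1) → (↑(↑s : Set (Fin n)) : Type _) := fun i => ⟨f i, vertmem i⟩ with hvert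
  have reach : ∀ i : Fin (d+1), (G.induce ↑s).Reachable (vert 0) (vert i) := by
    intro i
    induction i using Fin.induction with
    | zero => exact Reachable.refl _
    | succ i ih =>
      refine ih.trans (SimpleGraph.Adj.reachable ?_)
      show G.Adj (f i.castSucc) (f i.succ)
      rw [hf]
      rw [hadj, cyc_nat_adj hk2]
      simp only [Fin.coe_castLE, Fin.coe_castSucc, Fin.val_succ]
      exact Or.inr (Or.inl trivial)
  have conn_s : (G.induce (↑s : Set (Fin n))).Connected := by
    have repr : ∀ a : (↑(↑s : Set (Fin n)) : Type _), ∃ i, a = vert i := by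
      rintro ⟨x, hx⟩
      obtain ⟨i, -, rfl⟩ := Finset.mem_image.1 (Finset.mem_coe.1 hx)
      exact ⟨i, rfl⟩
    rw [SimpleGraph.connected_iff]
    refine ⟨?_, ⟨vert 0⟩⟩
    intro a b
    obtain ⟨i, rfl⟩ := repr a
    obtain ⟨j, rfl⟩ := repr b
    exact (reach i).symm.trans (reach j)
  -- apply the condition
  have hm_ne : w (-1) ∉ s := by
    intro hmem'
    obtain ⟨i, -, hi⟩ := Finset.mem_image.1 hmem'
    have := hinj hi
    have hv := congrArg Fin.val this
    simp only [Fin.coe_castLE, hvalm] at hv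
    have := i.isLt
    omega
  have happ := hcond s hcard conn_s (w (-1)) hm_ne ⟨w 1, h1, hrev⟩ ⟨w 0, h0, hmax _⟩
      (w 0) h0 hsmax
  set T : Finset (Fin n) := insert (w (-1)) (s.erase (w 0)) with hT
  have key : ∀ x ∈ T, ¬ G.Adj (w (-1)) x := by
    intro x hx hAdj
    rcases Finset.mem_insert.1 hx with rfl | hx'
    · exact G.irrefl hAdj
    · obtain ⟨hne, hxs⟩ := Finset.mem_erase.1 hx'
      obtain ⟨i, -, rfl⟩ := Finset.mem_image.1 hxs
      have hi0 : i.val ≠ 0 := by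
        intro h0'
        exact hne (congrArg w (Fin.ext (by simp [h0'])))
      have hc := (cyc_nat_adj hk2 _ _).1 ((hadj _ _).1 hAdj)
      simp only [Fin.coe_castLE, hvalm] at hc
      have := i.isLt
      omega
  have hw1ne0 : w 1 ≠ w 0 := by
    intro h; have := congrArg Fin.val (hinj h); rw [hval1, hval0] at this; omega
  have w1T : w 1 ∈ T := Finset.mem_insert_of_mem (Finset.mem_erase.2 ⟨hw1ne0, h1⟩)
  have wm1T : w (-1) ∈ T := Finset.mem_insert_self _ _
  have hre := happ.preconnected ⟨w (-1), Finset.mem_coe.2 wm1T⟩ ⟨w 1, Finset.mem_coe.2 w1T⟩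
  obtain ⟨p⟩ := hre
  have hne' : (⟨w (-1), Finset.mem_coe.2 wm1T⟩ : (↑(↑T : Set (Fin n)) : Type _)) ≠
      ⟨w 1, Finset.mem_coe.2 w1T⟩ := by
    intro h
    have := congrArg Fin.val (hinj (Subtype.ext_iff.1 h))
    rw [hvalm, hval1] at this
    omega
  have hadj1 := p.adj_snd (SimpleGraph.Walk.not_nil_of_ne hne')
  have : G.Adj (w (-1)) (p.getVert 1).val := hadj1
  exact key _ (Finset.mem_coe.1 (p.getVert 1).property) this

lemma cycle_contra' {n d k : ℕ} {G : SimpleGraph (Fin n)} [NeZero k]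
    (hcond : GlobalIntervalCondG d G) (hd : 1 ≤ d) (hk : d + 3 ≤ k)
    (w : Fin k → Fin n) (hinj : Function.Injective w)
    (hadj : ∀ i j, G.Adj (w i) (w j) ↔ (SimpleGraph.cycleGraph k).Adj i j)
    (hmax : ∀ i, w i ≤ w 0) : False := by
  rcases le_total (w 1) (w (-1)) with h | h
  · exact cycle_contra hcond hd hk w hinj hadj hmax h
  · refine cycle_contra hcond hd hk (fun i => w (-i)) (hinj.comp neg_injective) ?_ ?_ ?_
    · intro i j
      rw [hadj, SimpleGraph.cycleGraph_adj', SimpleGraph.cycleGraph_adj']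
      have e1 : (-i) - (-j) = j - i := by abel
      have e2 : (-j) - (-i) = i - j := by abel
      rw [e1, e2]
      tauto
    · intro i
      simpa using hmax (-i)
    · simpa using h

lemma cycle_contra'' {n d k : ℕ} {G : SimpleGraph (Fin n)}
    (hcond : GlobalIntervalCondG d G) (hd : 1 ≤ d) (hk : d + 3 ≤ k)
    (v : Fin k → Fin n) (hinj : Function.Injective v)
    (hadj : ∀ i j, G.Adj (v i) (v j) ↔ (SimpleGraph.cycleGraph k).Adj i j) : False := by
  haveI : NeZero k := ⟨by omega⟩
  obtain ⟨m, -, hm⟩ := Finset.exists_max_image Finset.univ v ⟨0, Finset.mem_univ _⟩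
  refine cycle_contra' hcond hd hk (fun i => v (m + i))
    (hinj.comp fun a b hab => by simpa using hab) ?_ ?_
  · intro i j
    rw [hadj, SimpleGraph.cycleGraph_adj', SimpleGraph.cycleGraph_adj']
    have e1 : (m + i) - (m + j) = i - j := by abel
    have e2 : (m + j) - (m + i) = j - i := by abel
    rw [e1, e2]
  · intro i
    simpa using hm (m + i) (Finset.mem_univ _)

/-- if `G` is `d`-global interval (`d ≥ 1`), i.e. some relabelling of the
vertices satisfies the `d`-global interval condition, then `G` has no induced cycle of
length `≥ d + 3`. -/
theorem stmt_11 (d n : ℕ) (hd : 1 ≤ d) (G : SimpleGraph (Fin n))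
    (h : ∃ σ : Equiv.Perm (Fin n), GlobalIntervalCondG d (G.map σ.toEmbedding)) :
    ¬ ∃ (k : ℕ) (s : Finset (Fin n)), d + 3 ≤ k ∧ s.card = k ∧
      Nonempty ((G.induce (↑s : Set (Fin n))) ≃g SimpleGraph.cycleGraph k) := by
  obtain ⟨σ, hcond⟩ := h
  rintro ⟨k, s, hk, hcard, ⟨φ⟩⟩
  set v : Fin k → Fin n := fun i => σ ((φ.symm i : (↑(↑s : Set (Fin n)) : Type _)) : Fin n)
    with hv
  refine cycle_contra'' hcond hd hk v ?_ ?_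
  · intro a b hab
    exact φ.symm.injective (Subtype.val_injective (σ.injective hab))
  · intro i j
    show (SimpleGraph.map σ.toEmbedding G).Adj (σ.toEmbedding _) (σ.toEmbedding _) ↔ _
    rw [SimpleGraph.map_adj_apply]
    have : G.Adj ((φ.symm i : (↑(↑s : Set (Fin n)) : Type _)) : Fin n)
        ((φ.symm j : (↑(↑s : Set (Fin n)) : Type _)) : Fin n) ↔
        (G.induce (↑s : Set (Fin n))).Adj (φ.symm i) (φ.symm j) := Iff.rfl
    rw [this, φ.symm.map_adj_iff]
end

section
/- If a finite simple graph $G$ is $d$-proper interval, then $G$ has no induced $d$-claw: there do not exist three distinct connected induced subgraphs $G_1, G_2, G_3$ of $G$, each with at least 2 and at most $d+1$ vertices, pairwise unions of vertex sets of size at least $d+1$, sharing exactly one common vertex, such that every path in $G[V(G_1) \cup V(G_2) \cup V(G_3)]$ between any two of the three graphs passes through the common vertex. -/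
open SimpleGraph Finset

section ClawHelpers

variable {n : ℕ}

/-- Connectedness of the induced subgraph on a finset. -/
def FConn (G : SimpleGraph (Fin n)) (S : Finset (Fin n)) : Prop :=
  (G.induce (↑S : Set (Fin n))).Connected

lemma fconn_union {G : SimpleGraph (Fin n)} {S T : Finset (Fin n)} {c : Fin n}
    (hS : FConn G S) (hT : FConn G T) (hcS : c ∈ S) (hcT : c ∈ T) :
    FConn G (S ∪ T) := by
  have h := SimpleGraph.induce_union_connected (SimpleGraph.Connected.preconnected hS) (SimpleGraph.Connected.preconnected hT) ⟨c, by simp [hcS, hcT]⟩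
  rw [FConn, Finset.coe_union]
  exact h

lemma fconn_insert {G : SimpleGraph (Fin n)} {S : Finset (Fin n)} {u s : Fin n}
    (hS : FConn G S) (hs : s ∈ S) (h : G.Adj u s) : FConn G (insert u S) := by
  have hp : (G.induce ({u, s} : Set (Fin n))).Connected :=
    SimpleGraph.induce_pair_connected_of_adj h
  have hun := SimpleGraph.induce_union_connected hp.preconnected (SimpleGraph.Connected.preconnected hS) ⟨s, by simp [hs]⟩
  have hset : (({u, s} : Set (Fin n)) ∪ (↑S : Set (Fin n))) = ↑(insert u S) := by
    ext x
    simp only [Set.mem_union, Set.mem_insert_iff, Set.mem_singleton_iff, Finset.coe_insert,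
      Finset.mem_coe, Finset.mem_insert]
    constructor
    · rintro ((rfl | rfl) | hx)
      · exact Or.inl rfl
      · exact Or.inr hs
      · exact Or.inr hx
    · rintro (rfl | hx)
      · exact Or.inl (Or.inl rfl)
      · exact Or.inr hx
  rw [FConn, ← hset]
  exact hun

lemma walk_out {G : SimpleGraph (Fin n)} {S : Finset (Fin n)} {u v : Fin n}
    (h : FConn G S) (hu : u ∈ S) (hv : v ∈ S) :
    ∃ p : G.Walk u v, ∀ x ∈ p.support, x ∈ S := by
  obtain ⟨q⟩ := h.preconnected ⟨u, by simpa using hu⟩ ⟨v, by simpa using hv⟩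
  refine ⟨q.map (SimpleGraph.Embedding.induce (↑S : Set (Fin n))).toHom, ?_⟩
  intro x hx
  erw [SimpleGraph.Walk.support_map] at hx
  obtain ⟨y, _, rfl⟩ := List.mem_map.mp hx
  exact y.2

lemma neighbor_aux {G : SimpleGraph (Fin n)} {S : Finset (Fin n)}
    {x y : (↑S : Set (Fin n))} (q : (G.induce (↑S : Set (Fin n))).Walk x y)
    (hne : x ≠ y) : ∃ w ∈ S, G.Adj ↑x w := by
  cases q with
  | nil => exact absurd rfl hne
  | cons h p =>
    rename_i b
    exact ⟨↑b, b.2, h⟩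

lemma exists_neighbor {G : SimpleGraph (Fin n)} {S : Finset (Fin n)} {c v : Fin n}
    (h : FConn G S) (hc : c ∈ S) (hv : v ∈ S) (hvc : v ≠ c) :
    ∃ w ∈ S, G.Adj c w := by
  obtain ⟨q⟩ := h.preconnected ⟨c, by simpa using hc⟩ ⟨v, by simpa using hv⟩
  exact neighbor_aux q (by simp [Subtype.ext_iff]; exact fun hh => hvc hh.symm)

lemma crossing_aux {G : SimpleGraph (Fin n)} {U S : Finset (Fin n)} :
    ∀ {x y : (↑U : Set (Fin n))} (_ : (G.induce (↑U : Set (Fin n))).Walk x y),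
      ↑x ∉ S → ↑y ∈ S → ∃ u ∈ U, u ∉ S ∧ ∃ s ∈ S, G.Adj u s := by
  intro x y q
  induction q with
  | nil => intro hx hy; exact absurd hy hx
  | @cons a b cc h p ih =>
    intro hx hy
    by_cases hb : (↑b : Fin n) ∈ S
    · exact ⟨↑a, a.2, hx, ↑b, hb, h⟩
    · exact ih hb hy

lemma grow_aux {G : SimpleGraph (Fin n)} {U : Finset (Fin n)} (hU : FConn G U) :
    ∀ (m : ℕ) (S : Finset (Fin n)), S ⊆ U → S.Nonempty → FConn G S →
      S.card + m ≤ U.card →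
      ∃ T, S ⊆ T ∧ T ⊆ U ∧ T.card = S.card + m ∧ FConn G T := by
  intro m
  induction m with
  | zero => exact fun S hSU _ hco _ => ⟨S, Finset.Subset.refl S, hSU, rfl, hco⟩
  | succ m ih =>
    intro S hSU hne hco hcard
    have hproper : ∃ y ∈ U, y ∉ S := by
      by_contra hall
      push_neg at hall
      have : U ⊆ S := fun y hy => hall y hy
      have := Finset.card_le_card this
      omega
    obtain ⟨y, hyU, hyS⟩ := hproper
    obtain ⟨x, hx⟩ := hne
    obtain ⟨q⟩ := hU.preconnected ⟨y, by simpa using hyU⟩ ⟨x, by simpa using hSU hx⟩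
    obtain ⟨u, huU, huS, s, hsS, hadj⟩ := crossing_aux q hyS hx
    have hco' : FConn G (insert u S) := fconn_insert hco hsS hadj
    have hcard' : (insert u S).card = S.card + 1 := Finset.card_insert_of_notMem huS
    obtain ⟨T, hST, hTU, hTcard, hTco⟩ :=
      ih (insert u S) (Finset.insert_subset huU hSU) ⟨u, Finset.mem_insert_self u S⟩ hco'
        (by omega)
    exact ⟨T, (Finset.subset_insert u S).trans hST, hTU, by omega, hTco⟩

lemma grow_to {G : SimpleGraph (Fin n)} {U S : Finset (Fin n)} (hU : FConn G U)
    (hSU : S ⊆ U) (hne : S.Nonempty) (hco : FConn G S) (k : ℕ)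
    (h1 : S.card ≤ k) (h2 : k ≤ U.card) :
    ∃ T, S ⊆ T ∧ T ⊆ U ∧ T.card = k ∧ FConn G T := by
  obtain ⟨T, h3, h4, h5, h6⟩ := grow_aux hU (k - S.card) S hSU hne hco (by omega)
  exact ⟨T, h3, h4, by omega, h6⟩

lemma fconn_image (G : SimpleGraph (Fin n)) (σ : Equiv.Perm (Fin n))
    {S : Finset (Fin n)} (h : FConn G S) :
    FConn (G.map σ.toEmbedding) (S.image σ) := by
  have hmem : ∀ a, a ∈ (↑S : Set (Fin n)) ↔ σ a ∈ (↑(S.image ⇑σ) : Set (Fin n)) := by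
    intro a
    simp only [Finset.coe_image, Set.mem_image, Finset.mem_coe]
    exact ⟨fun ha => ⟨a, ha, rfl⟩, fun ⟨b, hb, he⟩ => by rwa [← σ.injective he]⟩
  let e : (↑S : Set (Fin n)) ≃ (↑(S.image ⇑σ) : Set (Fin n)) :=
    (Equiv.subtypeEquiv σ hmem)
  let iso : (G.induce (↑S : Set (Fin n))) ≃g
      ((G.map σ.toEmbedding).induce (↑(S.image ⇑σ) : Set (Fin n))) :=
    { toEquiv := e,
      map_rel_iff' := by
        intro a b
        exact SimpleGraph.map_adj_apply }
  exact (SimpleGraph.Iso.connected_iff iso).mp h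

lemma sep_swap {G : SimpleGraph (Fin n)} {A B W : Finset (Fin n)} {c : Fin n}
    (h : ∀ (u v : Fin n) (p : G.Walk u v), u ∈ A → v ∈ B →
      (∀ x ∈ p.support, x ∈ W) → c ∈ p.support) :
    ∀ (u v : Fin n) (p : G.Walk u v), u ∈ B → v ∈ A →
      (∀ x ∈ p.support, x ∈ W) → c ∈ p.support := by
  intro u v p hu hv hs
  have hc := h v u p.reverse hv hu (by
    intro x hx
    rw [SimpleGraph.Walk.support_reverse] at hx
    exact hs x (List.mem_reverse.mp hx))
  rw [SimpleGraph.Walk.support_reverse] at hc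
  exact List.mem_reverse.mp hc

end ClawHelpers



/-- Proper interval condition for the complex `Δ_d(G)` (facets: `(d+1)`-subsets inducing
a connected subgraph), w.r.t. the natural labelling of `Fin n`: for each facet
`s : i₁ < … < i_{d+1}`, each `j ∉ s` with `i₁ ≤ j ≤ i_{d+1}` and each `k ∈ s`, if some
facet contains both `j` and `k`, then `(s \ {k}) ∪ {j}` is a facet. -/
def DeltaProperCond {n : ℕ} (d : ℕ) (G : SimpleGraph (Fin n)) : Prop :=
  ∀ s : Finset (Fin n), s.card = d + 1 → (G.induce (↑s : Set (Fin n))).Connected →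
    ∀ j : Fin n, j ∉ s → (∃ a ∈ s, a ≤ j) → (∃ b ∈ s, j ≤ b) →
      ∀ k ∈ s, (∃ H : Finset (Fin n), H.card = d + 1 ∧
          (G.induce (↑H : Set (Fin n))).Connected ∧ j ∈ H ∧ k ∈ H) →
        (G.induce (↑(insert j (s.erase k)) : Set (Fin n))).Connected

section ClawCore

variable {n : ℕ}

lemma claw_core {d : ℕ} {G : SimpleGraph (Fin n)} (hpic : DeltaProperCond d G) (hd : 1 ≤ d)
    (VP VJ VK W : Finset (Fin n)) (c wP wJ : Fin n)
    (hWP : VP ⊆ W) (hWJ : VJ ⊆ W) (hWK : VK ⊆ W)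
    (hPco : FConn G VP) (hJco : FConn G VJ) (hKco : FConn G VK)
    (hcP : c ∈ VP) (hcJ : c ∈ VJ) (hcK : c ∈ VK)
    (hJcard : VJ.card ≤ d + 1)
    (hPK : d + 1 ≤ (VP ∪ VK).card) (hJP : d + 1 ≤ (VJ ∪ VP).card)
    (hJPi : ∀ u, u ∈ VJ → u ∈ VP → u = c) (hJKi : ∀ u, u ∈ VJ → u ∈ VK → u = c)
    (hwP : wP ∈ VP) (hadjP : G.Adj c wP)
    (hwJ : wJ ∈ VJ) (hwJc : wJ ≠ c)
    (hord : (wP ≤ wJ ∧ wJ < c) ∨ (c < wJ ∧ wJ ≤ wP))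
    (hsep : ∀ (u v : Fin n) (p : G.Walk u v), u ∈ VP → v ∈ VJ →
      (∀ x ∈ p.support, x ∈ W) → c ∈ p.support) : False := by
  have hwPc : wP ≠ c := fun h => by simp [h] at hadjP
  -- the seed {c, wP}
  have hseedco : FConn G ({c, wP} : Finset (Fin n)) := by
    have := SimpleGraph.induce_pair_connected_of_adj hadjP
    have hset : (↑({c, wP} : Finset (Fin n)) : Set (Fin n)) = {c, wP} := by
      simp
    rw [FConn, hset]
    exact this
  have hseedcard : ({c, wP} : Finset (Fin n)).card = 2 :=
    Finset.card_pair (fun h => hwPc h.symm)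
  -- grow the seed inside VP ∪ VK into a facet F
  have hUco : FConn G (VP ∪ VK) := fconn_union hPco hKco hcP hcK
  obtain ⟨F, hseedF, hFU, hFcard, hFco⟩ := grow_to hUco
    (by intro x hx; rcases Finset.mem_insert.mp hx with rfl | hx
        · exact Finset.mem_union_left _ hcP
        · rw [Finset.mem_singleton.mp hx]; exact Finset.mem_union_left _ hwP)
    ⟨c, Finset.mem_insert_self _ _⟩ hseedco (d + 1) (by omega) hPK
  have hcF : c ∈ F := hseedF (Finset.mem_insert_self _ _)
  have hwPF : wP ∈ F := hseedF (by simp)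
  -- grow VJ inside VJ ∪ VP into a facet H containing wJ and c
  have hU2co : FConn G (VJ ∪ VP) := fconn_union hJco hPco hcJ hcP
  obtain ⟨H, hJH, hHU, hHcard, hHco⟩ := grow_to hU2co Finset.subset_union_left
    ⟨c, hcJ⟩ hJco (d + 1) hJcard hJP
  -- wJ is not in F
  have hwJF : wJ ∉ F := by
    intro hmem
    rcases Finset.mem_union.mp (hFU hmem) with h' | h'
    · exact hwJc (hJPi wJ hwJ h')
    · exact hwJc (hJKi wJ hwJ h')
  -- apply the exchange property
  have hkey := hpic F hFcard hFco wJ hwJF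
    (by rcases hord with ⟨h1, h2⟩ | ⟨h1, h2⟩
        · exact ⟨wP, hwPF, h1⟩
        · exact ⟨c, hcF, le_of_lt h1⟩)
    (by rcases hord with ⟨h1, h2⟩ | ⟨h1, h2⟩
        · exact ⟨c, hcF, le_of_lt h2⟩
        · exact ⟨wP, hwPF, h2⟩)
    c hcF ⟨H, hHcard, hHco, hJH hwJ, hJH hcJ⟩
  -- extract a walk from wP to wJ avoiding c
  have hwPF' : wP ∈ insert wJ (F.erase c) :=
    Finset.mem_insert_of_mem (Finset.mem_erase.mpr ⟨hwPc, hwPF⟩)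
  have hwJF' : wJ ∈ insert wJ (F.erase c) := Finset.mem_insert_self _ _
  obtain ⟨p, hsupp⟩ := walk_out (G := G) (S := insert wJ (F.erase c)) hkey hwPF' hwJF'
  have hc := hsep wP wJ p hwP hwJ (by
    intro x hx
    rcases Finset.mem_insert.mp (hsupp x hx) with rfl | hx'
    · exact hWJ hwJ
    · rcases Finset.mem_union.mp (hFU (Finset.mem_of_mem_erase hx')) with h' | h'
      · exact hWP h'
      · exact hWK h')
  rcases Finset.mem_insert.mp (hsupp c hc) with rfl | hx'
  · exact hwJc rfl
  · exact (Finset.mem_erase.mp hx').1 rfl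

lemma claw_core2 {d : ℕ} {G : SimpleGraph (Fin n)} (hpic : DeltaProperCond d G) (hd : 1 ≤ d)
    (VP VJ VK W : Finset (Fin n)) (c wP wJ : Fin n)
    (hWP : VP ⊆ W) (hWJ : VJ ⊆ W) (hWK : VK ⊆ W)
    (hPco : FConn G VP) (hJco : FConn G VJ) (hKco : FConn G VK)
    (hcP : c ∈ VP) (hcJ : c ∈ VJ) (hcK : c ∈ VK)
    (hPcard : VP.card ≤ d + 1) (hJcard : VJ.card ≤ d + 1)
    (hPK : d + 1 ≤ (VP ∪ VK).card) (hJK : d + 1 ≤ (VJ ∪ VK).card)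
    (hPJ : d + 1 ≤ (VP ∪ VJ).card)
    (hPJi : ∀ u, u ∈ VP → u ∈ VJ → u = c)
    (hPKi : ∀ u, u ∈ VP → u ∈ VK → u = c)
    (hJKi : ∀ u, u ∈ VJ → u ∈ VK → u = c)
    (hwP : wP ∈ VP) (hadjP : G.Adj c wP)
    (hwJ : wJ ∈ VJ) (hadjJ : G.Adj c wJ)
    (hside : (wP < c ∧ wJ < c) ∨ (c < wP ∧ c < wJ))
    (hsepPJ : ∀ (u v : Fin n) (p : G.Walk u v), u ∈ VP → v ∈ VJ →
      (∀ x ∈ p.support, x ∈ W) → c ∈ p.support)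
    (hsepJP : ∀ (u v : Fin n) (p : G.Walk u v), u ∈ VJ → v ∈ VP →
      (∀ x ∈ p.support, x ∈ W) → c ∈ p.support) : False := by
  have hJP' : d + 1 ≤ (VJ ∪ VP).card := by rwa [Finset.union_comm] at hPJ
  have hwPc : wP ≠ c := fun h => by simp [h] at hadjP
  have hwJc : wJ ≠ c := fun h => by simp [h] at hadjJ
  rcases hside with ⟨h1, h2⟩ | ⟨h1, h2⟩
  · rcases le_total wP wJ with hle | hle
    · exact claw_core hpic hd VP VJ VK W c wP wJ hWP hWJ hWK hPco hJco hKco hcP hcJ hcK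
        hJcard hPK hJP' (fun u a b => hPJi u b a) hJKi hwP hadjP hwJ hwJc
        (Or.inl ⟨hle, h2⟩) hsepPJ
    · exact claw_core hpic hd VJ VP VK W c wJ wP hWJ hWP hWK hJco hPco hKco hcJ hcP hcK
        hPcard hJK hPJ hPJi hPKi hwJ hadjJ hwP hwPc
        (Or.inl ⟨hle, h1⟩) hsepJP
  · rcases le_total wJ wP with hle | hle
    · exact claw_core hpic hd VP VJ VK W c wP wJ hWP hWJ hWK hPco hJco hKco hcP hcJ hcK
        hJcard hPK hJP' (fun u a b => hPJi u b a) hJKi hwP hadjP hwJ hwJc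
        (Or.inr ⟨h2, hle⟩) hsepPJ
    · exact claw_core hpic hd VJ VP VK W c wJ wP hWJ hWP hWK hJco hPco hKco hcJ hcP hcK
        hPcard hJK hPJ hPJi hPKi hwJ hadjJ hwP hwPc
        (Or.inr ⟨h1, hle⟩) hsepJP

end ClawCore

/-- a `d`-proper interval graph (some relabelling satisfies the proper
interval condition for `Δ_d(G)`) has no induced `d`-claw: there are no three distinct
vertex sets `V₁, V₂, V₃`, each inducing a connected subgraph with at least `2` and at
most `d+1` vertices, pairwise unions of size at least `d+1`, with
`V₁ ∩ V₂ ∩ V₃ = {c}`, such that every walk of `G` between two of the three sets whose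
support stays inside `V₁ ∪ V₂ ∪ V₃` passes through `c`. -/
theorem stmt_12 (d n : ℕ) (G : SimpleGraph (Fin n))
    (h : ∃ σ : Equiv.Perm (Fin n), DeltaProperCond d (G.map σ.toEmbedding)) :
    ¬ ∃ (V₁ V₂ V₃ : Finset (Fin n)) (c : Fin n),
      V₁ ≠ V₂ ∧ V₁ ≠ V₃ ∧ V₂ ≠ V₃ ∧
      (∀ V ∈ [V₁, V₂, V₃], 2 ≤ V.card ∧ V.card ≤ d + 1 ∧
        (G.induce (↑V : Set (Fin n))).Connected) ∧
      d + 1 ≤ (V₁ ∪ V₂).card ∧ d + 1 ≤ (V₁ ∪ V₃).card ∧ d + 1 ≤ (V₂ ∪ V₃).card ∧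
      V₁ ∩ V₂ ∩ V₃ = {c} ∧
      (∀ A B : Finset (Fin n),
        (A = V₁ ∧ B = V₂) ∨ (A = V₁ ∧ B = V₃) ∨ (A = V₂ ∧ B = V₃) →
        ∀ (u v : Fin n) (p : G.Walk u v), u ∈ A → v ∈ B →
          (∀ x ∈ p.support, x ∈ V₁ ∪ V₂ ∪ V₃) → c ∈ p.support) := by
  obtain ⟨σ, hpic⟩ := h
  rintro ⟨V₁, V₂, V₃, c, -, -, -, hconds, hu12, hu13, hu23, hint, hsep⟩
  have h1 := hconds V₁ (by simp)
  have h2 := hconds V₂ (by simp)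
  have h3 := hconds V₃ (by simp)
  have hd : 1 ≤ d := by omega
  -- membership of the center
  have hcmem : c ∈ V₁ ∩ V₂ ∩ V₃ := hint ▸ Finset.mem_singleton_self c
  have hc1 : c ∈ V₁ := Finset.mem_inter.mp (Finset.mem_inter.mp hcmem).1 |>.1
  have hc2 : c ∈ V₂ := Finset.mem_inter.mp (Finset.mem_inter.mp hcmem).1 |>.2
  have hc3 : c ∈ V₃ := (Finset.mem_inter.mp hcmem).2
  -- transfer everything through the permutation σ
  set G' := G.map σ.toEmbedding with hG'
  set A1 := V₁.image ⇑σ with hA1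
  set A2 := V₂.image ⇑σ with hA2
  set A3 := V₃.image ⇑σ with hA3
  set W := (V₁ ∪ V₂ ∪ V₃).image ⇑σ with hW
  set c' := σ c with hc'
  have hW1 : A1 ⊆ W := Finset.image_subset_image (by intro x hx; simp [Finset.mem_union, hx])
  have hW2 : A2 ⊆ W := Finset.image_subset_image (by intro x hx; simp [Finset.mem_union, hx])
  have hW3 : A3 ⊆ W := Finset.image_subset_image (by intro x hx; simp [Finset.mem_union, hx])
  have co1 : FConn G' A1 := fconn_image G σ h1.2.2
  have co2 : FConn G' A2 := fconn_image G σ h2.2.2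
  have co3 : FConn G' A3 := fconn_image G σ h3.2.2
  have m1 : c' ∈ A1 := Finset.mem_image_of_mem _ hc1
  have m2 : c' ∈ A2 := Finset.mem_image_of_mem _ hc2
  have m3 : c' ∈ A3 := Finset.mem_image_of_mem _ hc3
  have hcard : ∀ S : Finset (Fin n), (S.image ⇑σ).card = S.card :=
    fun S => Finset.card_image_of_injective S σ.injective
  have ca1 : A1.card ≤ d + 1 := by rw [hA1, hcard]; exact h1.2.1
  have ca2 : A2.card ≤ d + 1 := by rw [hA2, hcard]; exact h2.2.1
  have ca3 : A3.card ≤ d + 1 := by rw [hA3, hcard]; exact h3.2.1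
  have hb1 : 2 ≤ A1.card := by rw [hA1, hcard]; exact h1.1
  have hb2 : 2 ≤ A2.card := by rw [hA2, hcard]; exact h2.1
  have hb3 : 2 ≤ A3.card := by rw [hA3, hcard]; exact h3.1
  have u12 : d + 1 ≤ (A1 ∪ A2).card := by
    rw [hA1, hA2, ← Finset.image_union, hcard]; exact hu12
  have u13 : d + 1 ≤ (A1 ∪ A3).card := by
    rw [hA1, hA3, ← Finset.image_union, hcard]; exact hu13
  have u23 : d + 1 ≤ (A2 ∪ A3).card := by
    rw [hA2, hA3, ← Finset.image_union, hcard]; exact hu23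
  have u21 : d + 1 ≤ (A2 ∪ A1).card := by rwa [Finset.union_comm] at u12
  have u31 : d + 1 ≤ (A3 ∪ A1).card := by rwa [Finset.union_comm] at u13
  have u32 : d + 1 ≤ (A3 ∪ A2).card := by rwa [Finset.union_comm] at u23
  -- transferred separation property
  have hsepT : ∀ (A B : Finset (Fin n)),
      ((A = V₁ ∧ B = V₂) ∨ (A = V₁ ∧ B = V₃) ∨ (A = V₂ ∧ B = V₃)) →
      ∀ (u v : Fin n) (p : G'.Walk u v), u ∈ A.image ⇑σ → v ∈ B.image ⇑σ →
        (∀ x ∈ p.support, x ∈ W) → c' ∈ p.support := by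
    intro A B hAB u v p hu hv hsupp
    have ψadj : ∀ a b : Fin n, G'.Adj a b → G.Adj (σ.symm a) (σ.symm b) := by
      intro a b hab
      rw [hG', SimpleGraph.map_adj] at hab
      obtain ⟨x, y, hxy, rfl, rfl⟩ := hab
      simpa using hxy
    let ψ : G' →g G := ⟨⇑σ.symm, fun {a b} hab => ψadj a b hab⟩
    have hu' : σ.symm u ∈ A := by
      obtain ⟨x, hx, rfl⟩ := Finset.mem_image.mp hu
      simpa using hx
    have hv' : σ.symm v ∈ B := by
      obtain ⟨x, hx, rfl⟩ := Finset.mem_image.mp hv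
      simpa using hx
    have hcp := hsep A B hAB (σ.symm u) (σ.symm v) (p.map ψ) hu' hv' (by
      intro x hx
      rw [SimpleGraph.Walk.support_map] at hx
      obtain ⟨y, hy, rfl⟩ := List.mem_map.mp hx
      have := hsupp y hy
      rw [hW] at this
      obtain ⟨z, hz, rfl⟩ := Finset.mem_image.mp this
      have hz' : (σ.symm (σ z) : Fin n) ∈ V₁ ∪ V₂ ∪ V₃ := by simpa using hz
      exact hz')
    rw [SimpleGraph.Walk.support_map] at hcp
    obtain ⟨y, hy, hyc⟩ := List.mem_map.mp hcp
    have : y = c' := by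
      rw [hc']
      exact (Equiv.symm_apply_eq σ).mp hyc
    exact this ▸ hy
  have s12 := hsepT V₁ V₂ (Or.inl ⟨rfl, rfl⟩)
  have s13 := hsepT V₁ V₃ (Or.inr (Or.inl ⟨rfl, rfl⟩))
  have s23 := hsepT V₂ V₃ (Or.inr (Or.inr ⟨rfl, rfl⟩))
  have s21 := sep_swap s12
  have s31 := sep_swap s13
  have s32 := sep_swap s23
  -- pairwise intersections are exactly {c'}
  have hnilsupp : ∀ u : Fin n, u ∈ W → ∀ x ∈ (SimpleGraph.Walk.nil : G'.Walk u u).support, x ∈ W := by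
    intro u hu x hx
    rw [SimpleGraph.Walk.support_nil, List.mem_singleton] at hx
    exact hx ▸ hu
  have i12 : ∀ u, u ∈ A1 → u ∈ A2 → u = c' := by
    intro u ha hb
    have := s12 u u SimpleGraph.Walk.nil ha hb (hnilsupp u (hW1 ha))
    rw [SimpleGraph.Walk.support_nil, List.mem_singleton] at this
    exact this.symm
  have i13 : ∀ u, u ∈ A1 → u ∈ A3 → u = c' := by
    intro u ha hb
    have := s13 u u SimpleGraph.Walk.nil ha hb (hnilsupp u (hW1 ha))
    rw [SimpleGraph.Walk.support_nil, List.mem_singleton] at this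
    exact this.symm
  have i23 : ∀ u, u ∈ A2 → u ∈ A3 → u = c' := by
    intro u ha hb
    have := s23 u u SimpleGraph.Walk.nil ha hb (hnilsupp u (hW2 ha))
    rw [SimpleGraph.Walk.support_nil, List.mem_singleton] at this
    exact this.symm
  have i21 : ∀ u, u ∈ A2 → u ∈ A1 → u = c' := fun u a b => i12 u b a
  have i31 : ∀ u, u ∈ A3 → u ∈ A1 → u = c' := fun u a b => i13 u b a
  have i32 : ∀ u, u ∈ A3 → u ∈ A2 → u = c' := fun u a b => i23 u b a
  -- neighbors of the center in each branch
  obtain ⟨x1, hx1, hxne1⟩ := Finset.exists_mem_ne (by omega : 1 < A1.card) c'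
  obtain ⟨x2, hx2, hxne2⟩ := Finset.exists_mem_ne (by omega : 1 < A2.card) c'
  obtain ⟨x3, hx3, hxne3⟩ := Finset.exists_mem_ne (by omega : 1 < A3.card) c'
  obtain ⟨w1, hw1, ha1⟩ := exists_neighbor co1 m1 hx1 hxne1
  obtain ⟨w2, hw2, ha2⟩ := exists_neighbor co2 m2 hx2 hxne2
  obtain ⟨w3, hw3, ha3⟩ := exists_neighbor co3 m3 hx3 hxne3
  have t1 : w1 < c' ∨ c' < w1 := Ne.lt_or_gt (fun hh => by simp [hh] at ha1)
  have t2 : w2 < c' ∨ c' < w2 := Ne.lt_or_gt (fun hh => by simp [hh] at ha2)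
  have t3 : w3 < c' ∨ c' < w3 := Ne.lt_or_gt (fun hh => by simp [hh] at ha3)
  rcases t1 with t1 | t1 <;> rcases t2 with t2 | t2 <;> rcases t3 with t3 | t3
  · exact claw_core2 hpic hd A1 A2 A3 W c' w1 w2 hW1 hW2 hW3 co1 co2 co3 m1 m2 m3
      ca1 ca2 u13 u23 u12 i12 i13 i23 hw1 ha1 hw2 ha2 (Or.inl ⟨t1, t2⟩) s12 s21
  · exact claw_core2 hpic hd A1 A2 A3 W c' w1 w2 hW1 hW2 hW3 co1 co2 co3 m1 m2 m3
      ca1 ca2 u13 u23 u12 i12 i13 i23 hw1 ha1 hw2 ha2 (Or.inl ⟨t1, t2⟩) s12 s21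
  · exact claw_core2 hpic hd A1 A3 A2 W c' w1 w3 hW1 hW3 hW2 co1 co3 co2 m1 m3 m2
      ca1 ca3 u12 u32 u13 i13 i12 i32 hw1 ha1 hw3 ha3 (Or.inl ⟨t1, t3⟩) s13 s31
  · exact claw_core2 hpic hd A2 A3 A1 W c' w2 w3 hW2 hW3 hW1 co2 co3 co1 m2 m3 m1
      ca2 ca3 u21 u31 u23 i23 i21 i31 hw2 ha2 hw3 ha3 (Or.inr ⟨t2, t3⟩) s23 s32
  · exact claw_core2 hpic hd A2 A3 A1 W c' w2 w3 hW2 hW3 hW1 co2 co3 co1 m2 m3 m1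
      ca2 ca3 u21 u31 u23 i23 i21 i31 hw2 ha2 hw3 ha3 (Or.inl ⟨t2, t3⟩) s23 s32
  · exact claw_core2 hpic hd A1 A3 A2 W c' w1 w3 hW1 hW3 hW2 co1 co3 co2 m1 m3 m2
      ca1 ca3 u12 u32 u13 i13 i12 i32 hw1 ha1 hw3 ha3 (Or.inr ⟨t1, t3⟩) s13 s31
  · exact claw_core2 hpic hd A1 A2 A3 W c' w1 w2 hW1 hW2 hW3 co1 co2 co3 m1 m2 m3
      ca1 ca2 u13 u23 u12 i12 i13 i23 hw1 ha1 hw2 ha2 (Or.inr ⟨t1, t2⟩) s12 s21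
  · exact claw_core2 hpic hd A1 A2 A3 W c' w1 w2 hW1 hW2 hW3 co1 co2 co3 m1 m2 m3
      ca1 ca2 u13 u23 u12 i12 i13 i23 hw1 ha1 hw2 ha2 (Or.inr ⟨t1, t2⟩) s12 s21
end

section
/- If a finite simple graph $G$ is $d$-proper interval, then $G$ has no induced $d$-paw: no induced subgraph of $G$ on $d+2$ vertices is connected with exactly three vertices of degree one. -/
open SimpleGraph

lemma walk_closed {V : Type*} {H : SimpleGraph V} {S : Set V}
    (hS : ∀ a ∈ S, ∀ b, H.Adj a b → b ∈ S) :
    ∀ {x y : V}, H.Walk x y → x ∈ S → y ∈ S := by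
  intro x y p hx
  induction p with
  | nil => exact hx
  | cons h q ih => exact ih (hS _ hx _ h)

lemma induce_connected_erase_leaf {V : Type*} (G : SimpleGraph V) (t : Set V) (v : V)
    (hv : v ∈ t) (hc : (G.induce t).Connected)
    (hleaf : ∀ w₁ w₂ : t, (G.induce t).Adj ⟨v, hv⟩ w₁ → (G.induce t).Adj ⟨v, hv⟩ w₂ → w₁ = w₂)
    (hne : (t \ {v}).Nonempty) : (G.induce (t \ {v})).Connected := by
  rw [SimpleGraph.connected_iff]
  refine ⟨?_, hne.to_subtype⟩
  have key : ∀ (a b : ↑t) (p : (G.induce t).Walk a b), p.IsPath →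
      ∀ (ha : (a : V) ≠ v) (hb : (b : V) ≠ v),
      (G.induce (t \ {v})).Reachable ⟨a, a.2, ha⟩ ⟨b, b.2, hb⟩ := by
    intro a b p
    induction p with
    | nil => intro _ ha hb; rfl
    | @cons x y z h q ih =>
      intro hp ha hb
      by_cases hyv : (y : V) = v
      · cases q with
        | nil => exact absurd hyv hb
        | @cons _ w _ h' q' =>
          exfalso
          have hy : y = ⟨v, hv⟩ := Subtype.ext hyv
          subst hy
          have hxw : x = w := hleaf x w h.symm h'
          have hnodup := hp.support_nodup
          rw [Walk.support_cons, List.nodup_cons] at hnodup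
          exact hnodup.1 (by rw [hxw, Walk.support_cons]; exact List.mem_cons_of_mem _ q'.start_mem_support)
      · have hadj : (G.induce (t \ {v})).Adj ⟨x, x.2, ha⟩ ⟨y, y.2, hyv⟩ := by
          simpa using h
        exact hadj.reachable.trans (ih hp.of_cons hyv hb)
  classical
  rintro ⟨x, hx, hxv⟩ ⟨y, hy, hyv⟩
  obtain ⟨p⟩ := hc.preconnected ⟨x, hx⟩ ⟨y, hy⟩
  exact key ⟨x, hx⟩ ⟨y, hy⟩ p.toPath.1 p.toPath.2 (by simpa using hxv) (by simpa using hyv)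

lemma no_paw {n d : ℕ} (G : SimpleGraph (Fin n)) (hpc : DeltaProperCond d G) :
    ¬ ∃ s : Finset (Fin n), s.card = d + 2 ∧
      (G.induce (↑s : Set (Fin n))).Connected ∧
      Nat.card {v : (↑s : Set (Fin n)) //
        ∃! w : (↑s : Set (Fin n)), (G.induce (↑s : Set (Fin n))).Adj v w} = 3 := by
  classical
  rintro ⟨s, hcard, hconn, hcount⟩
  set t : Set (Fin n) := ↑s with ht
  have hcardt : Nat.card t = d + 2 := by
    simp only [ht, Nat.card_eq_fintype_card, Fintype.card_coe, ← hcard]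
    simp
  -- d ≥ 1
  have hd : 1 ≤ d := by
    have h1 : Nat.card {v : t // ∃! w : t, (G.induce t).Adj v w} ≤ Nat.card t :=
      Nat.card_le_card_of_injective Subtype.val Subtype.val_injective
    rw [hcount, hcardt] at h1
    omega
  have hsne : s.Nonempty := Finset.card_pos.mp (by omega)
  set m := s.min' hsne with hm
  set M := s.max' hsne with hM
  -- extract three distinct leaves
  set T := {v : t // ∃! w : t, (G.induce t).Adj v w} with hT
  have e := Finite.equivFinOfCardEq hcount
  let a := e.symm 0
  let b := e.symm 1
  let c := e.symm 2
  have hinj : ∀ p q : T, p.1.1 = q.1.1 → p = q := fun p q h =>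
    Subtype.ext (Subtype.ext h)
  have hab : a.1.1 ≠ b.1.1 := fun h => by
    have := e.symm.injective (hinj _ _ h); simp [Fin.ext_iff] at this
  have hac : a.1.1 ≠ c.1.1 := fun h => by
    have := e.symm.injective (hinj _ _ h); simp [Fin.ext_iff] at this
  have hbc : b.1.1 ≠ c.1.1 := fun h => by
    have := e.symm.injective (hinj _ _ h); simp [Fin.ext_iff] at this
  -- choose a "middle" leaf ℓ and another leaf b'
  obtain ⟨ℓ, b', hne', hℓm, hℓM⟩ :
      ∃ p q : T, p.1.1 ≠ q.1.1 ∧ p.1.1 ≠ m ∧ p.1.1 ≠ M := by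
    by_cases hA : a.1.1 ≠ m ∧ a.1.1 ≠ M
    · exact ⟨a, b, hab, hA.1, hA.2⟩
    by_cases hB : b.1.1 ≠ m ∧ b.1.1 ≠ M
    · exact ⟨b, a, fun h => hab h.symm, hB.1, hB.2⟩
    by_cases hC : c.1.1 ≠ m ∧ c.1.1 ≠ M
    · exact ⟨c, a, fun h => hac h.symm, hC.1, hC.2⟩
    · exfalso
      push_neg at hA hB hC
      by_cases h1 : a.1.1 = m
      · by_cases h2 : b.1.1 = m
        · exact hab (h1.trans h2.symm)
        · have h2' := hB h2
          by_cases h3 : c.1.1 = m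
          · exact hac (h1.trans h3.symm)
          · exact hbc (h2'.trans (hC h3).symm)
      · have h1' := hA h1
        by_cases h2 : b.1.1 = M
        · exact hab (h1'.trans h2.symm)
        · have h2' : b.1.1 = m := by
            rcases (em (b.1.1 = m)) with h | h
            · exact h
            · exact absurd (hB h) h2
          by_cases h3 : c.1.1 = M
          · exact hac (h1'.trans h3.symm)
          · have h3' : c.1.1 = m := by
              rcases (em (c.1.1 = m)) with h | h
              · exact h
              · exact absurd (hC h) h3
            exact hbc (h2'.trans h3'.symm)
  set lv : Fin n := ℓ.1.1 with hlv
  set bv : Fin n := b'.1.1 with hbv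
  have hlvs : lv ∈ s := ℓ.1.2
  have hbvs : bv ∈ s := b'.1.2
  -- unique neighbour of b'
  obtain ⟨k₀, hk₀, hk₀u⟩ := b'.2
  set k : Fin n := k₀.1 with hk
  have hks : k ∈ s := k₀.2
  have hb'eq : (⟨bv, hbvs⟩ : t) = b'.1 := Subtype.ext rfl
  have hadjbk : G.Adj bv k := by
    have := hk₀
    simpa using this
  have hbk : bv ≠ k := hadjbk.ne
  have uniqb : ∀ w ∈ s, G.Adj bv w → w = k := by
    intro w hw hadj
    have : (⟨w, hw⟩ : t) = k₀ := hk₀u ⟨w, hw⟩ (by simpa using hadj)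
    exact congrArg Subtype.val this
  -- leaf adapters
  obtain ⟨w₀, hw₀, hw₀u⟩ := ℓ.2
  have hℓeq : ∀ hv : lv ∈ t, (⟨lv, hv⟩ : t) = ℓ.1 := fun hv => Subtype.ext rfl
  have hleafℓ : ∀ hv : lv ∈ t, ∀ w₁ w₂ : t,
      (G.induce t).Adj ⟨lv, hv⟩ w₁ → (G.induce t).Adj ⟨lv, hv⟩ w₂ → w₁ = w₂ := by
    intro hv w₁ w₂ h1 h2
    rw [hℓeq hv] at h1 h2
    rw [hw₀u w₁ h1, hw₀u w₂ h2]
  have hleafb : ∀ hv : bv ∈ t, ∀ w₁ w₂ : t,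
      (G.induce t).Adj ⟨bv, hv⟩ w₁ → (G.induce t).Adj ⟨bv, hv⟩ w₂ → w₁ = w₂ := by
    intro hv w₁ w₂ h1 h2
    rw [show (⟨bv, hv⟩ : t) = b'.1 from Subtype.ext rfl] at h1 h2
    rw [hk₀u w₁ h1, hk₀u w₂ h2]
  -- lv ≠ k
  have hlk : lv ≠ k := by
    intro hlk
    have hadjbl : G.Adj bv lv := hlk ▸ hadjbk
    have h1 : (G.induce t).Adj ℓ.1 b'.1 := by
      simpa using hadjbl.symm
    have hw0 : b'.1 = w₀ := hw₀u b'.1 h1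
    have hk₀l : k₀ = ℓ.1 := Subtype.ext hlk.symm
    have hclosed : ∀ x ∈ ({ℓ.1, b'.1} : Set t), ∀ y, (G.induce t).Adj x y →
        y ∈ ({ℓ.1, b'.1} : Set t) := by
      rintro x (rfl | rfl) y hy
      · right; rw [hw₀u y hy, ← hw0]; exact rfl
      · left; rw [hk₀u y hy, hk₀l]
    have hcard3 : 1 ≤ ((s.erase lv).erase bv).card := by
      have h1 := Finset.pred_card_le_card_erase (a := bv) (s := s.erase lv)
      have h2 := Finset.pred_card_le_card_erase (a := lv) (s := s)
      omega
    obtain ⟨u, hu⟩ := Finset.card_pos.mp hcard3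
    have hu1 : u ≠ bv := (Finset.mem_erase.mp hu).1
    have hu2 : u ≠ lv := (Finset.mem_erase.mp (Finset.mem_erase.mp hu).2).1
    have hus : u ∈ s := (Finset.mem_erase.mp (Finset.mem_erase.mp hu).2).2
    obtain ⟨p⟩ := hconn.preconnected ℓ.1 ⟨u, hus⟩
    have := walk_closed hclosed p (by left; rfl)
    rcases this with h | h
    · exact hu2 (congrArg Subtype.val h)
    · exact hu1 (congrArg Subtype.val h)
  -- facets
  have cF : (s.erase lv).card = d + 1 := by
    rw [Finset.card_erase_of_mem hlvs, hcard]
    omega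
  have cH : (s.erase bv).card = d + 1 := by
    rw [Finset.card_erase_of_mem hbvs, hcard]
    omega
  have connF : (G.induce (↑(s.erase lv) : Set (Fin n))).Connected := by
    rw [Finset.coe_erase]
    exact induce_connected_erase_leaf G t lv hlvs hconn (hleafℓ hlvs)
      ⟨bv, hbvs, fun h => hne' (by simpa using h.symm)⟩
  have connH : (G.induce (↑(s.erase bv) : Set (Fin n))).Connected := by
    rw [Finset.coe_erase]
    exact induce_connected_erase_leaf G t bv hbvs hconn (hleafb hbvs)
      ⟨lv, hlvs, fun h => hne' (by simpa using h)⟩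
  have hres := hpc (s.erase lv) cF connF lv (Finset.notMem_erase _ _)
    ⟨m, Finset.mem_erase.mpr ⟨fun h => hℓm h.symm, s.min'_mem hsne⟩, s.min'_le lv hlvs⟩
    ⟨M, Finset.mem_erase.mpr ⟨fun h => hℓM h.symm, s.max'_mem hsne⟩, s.le_max' lv hlvs⟩
    k (Finset.mem_erase.mpr ⟨fun h => hlk h.symm, hks⟩)
    ⟨s.erase bv, cH, connH,
      Finset.mem_erase.mpr ⟨hne', hlvs⟩,
      Finset.mem_erase.mpr ⟨fun h => hbk h.symm, hks⟩⟩
  have hset : insert lv ((s.erase lv).erase k) = s.erase k := by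
    rw [Finset.erase_right_comm]
    exact Finset.insert_erase (Finset.mem_erase.mpr ⟨hlk, hlvs⟩)
  rw [hset] at hres
  -- contradiction : bv is isolated in s.erase k
  have hbv' : bv ∈ s.erase k := Finset.mem_erase.mpr ⟨hbk, hbvs⟩
  have hbv'c : bv ∈ (↑(s.erase k) : Set (Fin n)) := hbv'
  have hiso : ∀ x ∈ ({⟨bv, hbv'c⟩} : Set ↑(↑(s.erase k) : Set (Fin n))), ∀ y,
      (G.induce (↑(s.erase k) : Set (Fin n))).Adj x y →
      y ∈ ({⟨bv, hbv'c⟩} : Set ↑(↑(s.erase k) : Set (Fin n))) := by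
    rintro x rfl y hy
    exfalso
    have hadj : G.Adj bv y.1 := by simpa using hy
    have hy1 : y.1 ∈ s.erase k := y.2
    exact (Finset.mem_erase.mp hy1).1 (uniqb y.1 (Finset.mem_of_mem_erase hy1) hadj)
  have h2card : 1 < (s.erase k).card := by
    rw [Finset.card_erase_of_mem hks, hcard]; omega
  obtain ⟨u, hu, hub⟩ := Finset.exists_mem_ne h2card bv
  obtain ⟨p⟩ := hres.preconnected ⟨bv, hbv'c⟩ ⟨u, hu⟩
  have := walk_closed hiso p rfl
  exact hub (congrArg Subtype.val this)

/-- a `d`-proper interval graph has no induced `d`-paw: no `(d+2)`-set of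
vertices induces a connected subgraph having exactly three leaves (vertices with a
unique neighbour in the induced subgraph). -/
theorem stmt_13 (d n : ℕ) (G : SimpleGraph (Fin n))
    (h : ∃ σ : Equiv.Perm (Fin n), DeltaProperCond d (G.map σ.toEmbedding)) :
    ¬ ∃ s : Finset (Fin n), s.card = d + 2 ∧
      (G.induce (↑s : Set (Fin n))).Connected ∧
      Nat.card {v : (↑s : Set (Fin n)) //
        ∃! w : (↑s : Set (Fin n)), (G.induce (↑s : Set (Fin n))).Adj v w} = 3 := by
  classical
  obtain ⟨σ, hpc⟩ := h
  rintro ⟨s, hcard, hconn, hcount⟩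
  apply no_paw _ hpc
  let e0 : (↑s : Set (Fin n)) ≃ (↑(s.image σ) : Set (Fin n)) :=
    Equiv.subtypeEquiv σ (by
      intro a
      simp [Finset.mem_coe, Finset.mem_image, σ.injective.eq_iff])
  have iso : (G.induce (↑s : Set (Fin n))) ≃g
      ((G.map σ.toEmbedding).induce (↑(s.image σ) : Set (Fin n))) :=
    { e0 with
      map_rel_iff' := by
        intro x y
        simp only [Equiv.toFun_as_coe, Equiv.subtypeEquiv_apply, comap_adj,
          Function.Embedding.coe_subtype, e0]
        exact SimpleGraph.map_adj_apply }
  refine ⟨s.image σ, ?_, ?_, ?_⟩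
  · rw [Finset.card_image_of_injective _ σ.injective, hcard]
  · exact iso.connected_iff.mp hconn
  · rw [← hcount]
    refine (Nat.card_congr (Equiv.subtypeEquiv iso.toEquiv fun v => ?_)).symm
    exact (existsUnique_congr fun w => iso.map_rel_iff.symm).trans
      iso.toEquiv.existsUnique_congr_right
end

section
/- A finite simple graph $G$ is a $1$-global interval graph (i.e., the complex $\Delta_1(G)$ whose facets are the edges of $G$ is global interval) if and only if $G$ is an interval graph. -/
lemma stmt14_map_adj {α : Type*} (G : SimpleGraph α) (σ : Equiv.Perm α) (i j : α) :
    (G.map σ.toEmbedding).Adj i j ↔ G.Adj (σ.symm i) (σ.symm j) := by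
  constructor
  · rintro ⟨-, u, v, huv, rfl, rfl⟩
    simpa using huv
  · intro h
    exact ⟨fun e => h.ne (by rw [e]), σ.symm i, σ.symm j, h, by simp, by simp⟩

lemma stmt14_forward (n : ℕ) (H : SimpleGraph (Fin n))
    (hσ : ∀ i₁ i₂ : Fin n, H.Adj i₁ i₂ → i₁ < i₂ →
      ∀ j : Fin n, i₁ < j → j < i₂ → H.Adj i₁ j) :
    ∃ I : Fin n → Set ℝ,
      (∀ v : Fin n, ∃ a b : ℝ, a ≤ b ∧ I v = Set.Icc a b) ∧
      ∀ u v : Fin n, u ≠ v → (H.Adj u v ↔ (I u ∩ I v).Nonempty) := by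
  classical
  have key : ∀ i : Fin n, ∃ m : Fin n, i ≤ m ∧ ∀ j, i < j → (H.Adj i j ↔ j ≤ m) := by
    intro i
    set S := insert i (Finset.univ.filter fun j => i < j ∧ H.Adj i j) with hS
    have hne : S.Nonempty := ⟨i, Finset.mem_insert_self _ _⟩
    refine ⟨S.max' hne, Finset.le_max' _ _ (Finset.mem_insert_self _ _), ?_⟩
    intro j hij
    constructor
    · intro h
      exact Finset.le_max' _ _ (by simp [hS, hij, h])
    · intro hj
      have hm := S.max'_mem hne
      simp only [hS, Finset.mem_insert, Finset.mem_filter, Finset.mem_univ, true_and] at hm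
      rcases hm with hm | ⟨him, hadj⟩
      · exact absurd (hm ▸ hj) hij.not_ge
      · rcases eq_or_lt_of_le hj with hj' | hj'
        · exact hj' ▸ hadj
        · exact hσ i _ hadj him j hij hj'
  choose r hr1 hr2 using key
  refine ⟨fun v => Set.Icc ((v : ℕ) : ℝ) ((r v : ℕ) : ℝ), ?_, ?_⟩
  · intro v
    exact ⟨_, _, by exact_mod_cast hr1 v, rfl⟩
  · have main : ∀ u v : Fin n, u < v →
        (H.Adj u v ↔ (Set.Icc ((u : ℕ) : ℝ) ((r u : ℕ) : ℝ) ∩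
          Set.Icc ((v : ℕ) : ℝ) ((r v : ℕ) : ℝ)).Nonempty) := by
      intro u v huv
      rw [hr2 u v huv, Set.Icc_inter_Icc, Set.nonempty_Icc, max_le_iff, le_min_iff, le_min_iff]
      constructor
      · intro h
        have h1 : (v : ℕ) ≤ (r u : ℕ) := h
        have h2 : (u : ℕ) ≤ (r u : ℕ) := hr1 u
        have h3 : (v : ℕ) ≤ (r v : ℕ) := hr1 v
        have h4 : (u : ℕ) ≤ (r v : ℕ) := le_trans huv.le h3
        exact ⟨⟨by exact_mod_cast h2, by exact_mod_cast h4⟩,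
          ⟨by exact_mod_cast h1, by exact_mod_cast h3⟩⟩
      · rintro ⟨-, h1, -⟩
        exact_mod_cast h1
    intro u v huv
    rcases lt_or_gt_of_ne huv with h | h
    · exact main u v h
    · rw [H.adj_comm, Set.inter_comm]
      exact main v u h

/-- a finite simple graph `G` on `[n]` is `1`-global interval — there is a
labelling (a permutation of the vertices) such that for every edge `{i₁, i₂}` with
`i₁ < i₂` and every `j` with `i₁ < j < i₂`, the pair `{i₁, j}` is an edge — iff `G` is
an interval graph: the vertices can be assigned nonempty closed real intervals such that
two distinct vertices are adjacent iff their intervals intersect. -/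
theorem stmt_14 (n : ℕ) (G : SimpleGraph (Fin n)) :
    (∃ σ : Equiv.Perm (Fin n), ∀ i₁ i₂ : Fin n,
        (G.map σ.toEmbedding).Adj i₁ i₂ → i₁ < i₂ →
        ∀ j : Fin n, i₁ < j → j < i₂ → (G.map σ.toEmbedding).Adj i₁ j) ↔
      ∃ I : Fin n → Set ℝ,
        (∀ v : Fin n, ∃ a b : ℝ, a ≤ b ∧ I v = Set.Icc a b) ∧
        ∀ u v : Fin n, u ≠ v → (G.Adj u v ↔ (I u ∩ I v).Nonempty) := by
  constructor
  · rintro ⟨σ, hσ⟩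
    obtain ⟨I, hIcc, hadj⟩ := stmt14_forward n (G.map σ.toEmbedding) hσ
    refine ⟨fun v => I (σ v), fun v => hIcc (σ v), ?_⟩
    intro u v huv
    have h1 : G.Adj u v ↔ (G.map σ.toEmbedding).Adj (σ u) (σ v) := by
      rw [stmt14_map_adj]; simp
    rw [h1]
    exact hadj (σ u) (σ v) (fun h => huv (σ.injective h))
  · rintro ⟨I, hI, hadj⟩
    choose a b hab hIcc using hI
    refine ⟨(Tuple.sort a)⁻¹, ?_⟩
    intro i₁ i₂ h12 hlt j hj1 hj2
    set τ := Tuple.sort a with hτ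
    have hmono : Monotone (a ∘ τ) := Tuple.monotone_sort a
    have hsymm : (τ⁻¹ : Equiv.Perm (Fin n)).symm = τ := rfl
    rw [stmt14_map_adj, hsymm] at h12 ⊢
    have hne12 : τ i₁ ≠ τ i₂ := h12.ne
    have hne1j : τ i₁ ≠ τ j := fun h => hj1.ne (τ.injective h)
    obtain ⟨x, hxA, hxB⟩ : (I (τ i₁) ∩ I (τ i₂)).Nonempty := by
      rw [← hadj _ _ hne12]; exact h12
    rw [hIcc] at hxA hxB
    refine (hadj _ _ hne1j).mpr ⟨a (τ j), ?_, ?_⟩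
    · rw [hIcc]
      exact ⟨hmono hj1.le, le_trans (hmono hj2.le) (le_trans hxB.1 hxA.2)⟩
    · rw [hIcc]
      exact ⟨le_refl _, hab _⟩
end
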